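/- arXiv:2008.04140 — 10 statements merged into one kernel-verified Lean document; each statement's English description precedes it below -/
import Mathlib

section
/- Let γ_I and γ_L be the orthogonal projectors associated with the orthonormal families (u_i)_{i=1}^{J} and (v_i)_{i=1}^{J}, i.e. γ_I x := Σ_{i=1}^{J} ⟨x,u_i⟩ u_i and γ_L x := Σ_{i=1}^{J} ⟨x,v_i⟩ v_i. Then the squared Hilbert–Schmidt norm of their difference satisfies Σ_{k≥1} ‖(γ_L − γ_I) f_k‖² = 2 Σ_{i=1}^{J} ⟨v_i, v_i − γ_I v_i⟩ = 2 (J − Σ_{i,j=1}^{J} ⟨v_i, u_j⟩²), i.e. ‖γ_L − γ_I‖_{S2}² = 2 Tr(γ_L(1 − γ_I)). -/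
open scoped RealInnerProductSpace

/-- the squared Hilbert–Schmidt norm of the difference of two rank-J
orthogonal projectors `γ_L − γ_I` equals `2 Tr(γ_L(1 − γ_I)) = 2 (J − Σ_{i,j} ⟨v_i,u_j⟩²)`. -/
theorem stmt_0
    {H : Type*} [NormedAddCommGroup H] [InnerProductSpace ℝ H] [CompleteSpace H]
    (f : HilbertBasis ℕ ℝ H)
    (J : ℕ) (hJ : 1 ≤ J)
    (u v : Fin J → H) (hu : Orthonormal ℝ u) (hv : Orthonormal ℝ v)
    (gI gL : H → H)
    (hgI : ∀ x, gI x = ∑ i, ⟪x, u i⟫ • u i)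
    (hgL : ∀ x, gL x = ∑ i, ⟪x, v i⟫ • v i) :
    (∑' k : ℕ, ‖gL (f k) - gI (f k)‖ ^ 2)
        = 2 * (∑ i, ⟪v i, v i - gI (v i)⟫) ∧
    2 * (∑ i, ⟪v i, v i - gI (v i)⟫)
        = 2 * ((J : ℝ) - ∑ i, ∑ j, ⟪v i, u j⟫ ^ 2) := by
  have h2 : 2 * (∑ i, ⟪v i, v i - gI (v i)⟫)
      = 2 * ((J : ℝ) - ∑ i, ∑ j, ⟪v i, u j⟫ ^ 2) := by
    congr 1
    have : ∀ i, ⟪v i, v i - gI (v i)⟫ = 1 - ∑ j, ⟪v i, u j⟫ ^ 2 := by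
      intro i
      rw [hgI, inner_sub_right, real_inner_self_eq_norm_sq, hv.1 i]
      simp [inner_sum, real_inner_smul_right, sq]
    simp [this, Finset.sum_sub_distrib]
  refine ⟨?_, h2⟩
  rw [h2]
  -- pointwise expansion
  have hterm : ∀ k, ‖gL (f k) - gI (f k)‖ ^ 2 =
      ((∑ i, ⟪v i, f k⟫ * ⟪f k, v i⟫) + (∑ j, ⟪u j, f k⟫ * ⟪f k, u j⟫))
      - ∑ i, ∑ j, (2 * ⟪v i, u j⟫) * (⟪v i, f k⟫ * ⟪f k, u j⟫) := by
    intro k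
    rw [hgL, hgI, @norm_sub_sq_real, ← real_inner_self_eq_norm_sq,
      ← real_inner_self_eq_norm_sq]
    simp only [inner_sum, sum_inner, real_inner_smul_left, real_inner_smul_right,
      Finset.mul_sum, Finset.sum_mul]
    simp only [orthonormal_iff_ite.mp hv, orthonormal_iff_ite.mp hu, mul_ite, mul_one,
      mul_zero, Finset.sum_ite_eq, Finset.sum_ite_eq', Finset.mem_univ, if_true]
    simp only [real_inner_comm (f k)]
    rw [Finset.sum_comm]
    simp only [sq, mul_comm, mul_left_comm, mul_assoc]
    abel
  have hsummable : ∀ x y : H, Summable (fun k : ℕ => ⟪x, f k⟫ * ⟪f k, y⟫) :=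
    fun x y => f.summable_inner_mul_inner x y
  have htsum : ∀ x y : H, (∑' k : ℕ, ⟪x, f k⟫ * ⟪f k, y⟫) = ⟪x, y⟫ :=
    fun x y => f.tsum_inner_mul_inner x y
  have hA : Summable (fun k : ℕ => ∑ i, ⟪v i, f k⟫ * ⟪f k, v i⟫) :=
    summable_sum fun i _ => hsummable _ _
  have hB : Summable (fun k : ℕ => ∑ j, ⟪u j, f k⟫ * ⟪f k, u j⟫) :=
    summable_sum fun j _ => hsummable _ _
  have hC' : ∀ i : Fin J,
      Summable (fun k : ℕ => ∑ j, (2 * ⟪v i, u j⟫) * (⟪v i, f k⟫ * ⟪f k, u j⟫)) :=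
    fun i => summable_sum fun j _ => (hsummable _ _).mul_left _
  have hC : Summable (fun k : ℕ =>
      ∑ i, ∑ j, (2 * ⟪v i, u j⟫) * (⟪v i, f k⟫ * ⟪f k, u j⟫)) :=
    summable_sum fun i _ => hC' i
  rw [tsum_congr hterm, Summable.tsum_sub (hA.add hB) hC, Summable.tsum_add hA hB,
    Summable.tsum_finsetSum (fun i _ => hsummable (v i) (v i)),
    Summable.tsum_finsetSum (fun j _ => hsummable (u j) (u j)),
    Summable.tsum_finsetSum (fun i _ => hC' i)]
  have hCval : ∀ i : Fin J,
      (∑' k : ℕ, ∑ j, (2 * ⟪v i, u j⟫) * (⟪v i, f k⟫ * ⟪f k, u j⟫))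
        = ∑ j, 2 * ⟪v i, u j⟫ ^ 2 := by
    intro i
    rw [Summable.tsum_finsetSum (fun j _ => (hsummable _ _).mul_left _)]
    refine Finset.sum_congr rfl fun j _ => ?_
    rw [tsum_mul_left, htsum]
    ring
  have hvv : ∀ i, ⟪v i, v i⟫ = (1 : ℝ) := fun i => by
    rw [real_inner_self_eq_norm_sq, hv.1 i]; norm_num
  have huu : ∀ j, ⟪u j, u j⟫ = (1 : ℝ) := fun j => by
    rw [real_inner_self_eq_norm_sq, hu.1 j]; norm_num
  simp only [htsum, hvv, huu, hCval, Finset.sum_const, Finset.card_univ,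
    Fintype.card_fin, nsmul_eq_mul, mul_one, ← Finset.mul_sum, ← Finset.sum_mul]
  ring
end

section
/- The energy norm of the density matrix error satisfies the identity ‖A^{1/2}(γ⁰ − γ_h)‖_{S2}² = Σ_{i=m}^{M} (λ_{ih} − λ_i) + 2 Σ_{i=m}^{M} λ_i ‖e_i − γ_h e_i‖². -/
open scoped RealInnerProductSpace

/-- 0-based indexing:
`‖A^{1/2}(γ⁰ − γ_h)‖_{S2}² = Σ_{i=m}^M (λ_{ih} − λ_i) + 2 Σ_{i=m}^M λ_i ‖e_i − γ_h e_i‖²`. -/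
theorem stmt_3
    {H : Type*} [NormedAddCommGroup H] [InnerProductSpace ℝ H] [CompleteSpace H]
    (b : HilbertBasis ℕ ℝ H)
    (lam : ℕ → ℝ) (hlam_pos : ∀ k, 0 < lam k) (hlam_mono : Monotone lam)
    (hlam_tendsto : Filter.Tendsto lam Filter.atTop Filter.atTop)
    (m M : ℕ) (hmM : m ≤ M)
    (Vh : Submodule ℝ H) (hVh_fin : FiniteDimensional ℝ Vh)
    (hVh_dom : ∀ v ∈ Vh, Summable fun k => lam k * ⟪v, b k⟫ ^ 2)
    (uh : ℕ → H) (lamh : ℕ → ℝ)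
    (huh_mem : ∀ i ∈ Finset.Icc m M, uh i ∈ Vh)
    (huh_orth : ∀ i ∈ Finset.Icc m M, ∀ j ∈ Finset.Icc m M,
      ⟪uh i, uh j⟫ = if i = j then 1 else 0)
    (hlamh_mono : ∀ i ∈ Finset.Icc m M, ∀ j ∈ Finset.Icc m M, i ≤ j → lamh i ≤ lamh j)
    (heig_h : ∀ i ∈ Finset.Icc m M, ∀ v ∈ Vh,
      (∑' k, lam k * (⟪uh i, b k⟫ * ⟪v, b k⟫)) = lamh i * ⟪uh i, v⟫)
    (g0 gh : H → H)
    (hg0 : ∀ w, g0 w = ∑ i ∈ Finset.Icc m M, ⟪w, b i⟫ • b i)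
    (hgh : ∀ w, gh w = ∑ i ∈ Finset.Icc m M, ⟪w, uh i⟫ • uh i)
    :
    (∑' k, ∑' j, lam j * ⟪g0 (b k) - gh (b k), b j⟫ ^ 2)
      = (∑ i ∈ Finset.Icc m M, (lamh i - lam i))
        + 2 * ∑ i ∈ Finset.Icc m M, lam i * ‖b i - gh (b i)‖ ^ 2 := by
  classical
  set I := Finset.Icc m M with hI
  -- abbreviations
  have hb_ite : ∀ k i : ℕ, ⟪b k, b i⟫ = if k = i then 1 else 0 :=
    fun k i => orthonormal_iff_ite.mp b.orthonormal k i
  -- action of g0 on basis vectors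
  have hg0b : ∀ k, g0 (b k) = if k ∈ I then b k else 0 := by
    intro k
    rw [hg0]
    by_cases hk : k ∈ I
    · rw [if_pos hk, Finset.sum_eq_single k]
      · rw [hb_ite]; simp
      · intro i hi hik
        rw [hb_ite]
        simp [Ne.symm hik]
      · intro h; exact absurd hk h
    · rw [if_neg hk]
      refine Finset.sum_eq_zero fun i hi => ?_
      have hki : k ≠ i := fun h => hk (h ▸ hi)
      rw [hb_ite]; simp [hki]
  -- symmetry (self-adjointness) of g0 - gh
  have key : ∀ (v : ℕ → H) (x y : H),
      ⟪∑ i ∈ I, ⟪x, v i⟫ • v i, y⟫ = ⟪x, ∑ i ∈ I, ⟪y, v i⟫ • v i⟫ := by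
    intro v x y
    rw [sum_inner, inner_sum]
    refine Finset.sum_congr rfl fun i _ => ?_
    rw [real_inner_smul_left, real_inner_smul_right, real_inner_comm (v i) y]
    ring
  have hsymm : ∀ k j, ⟪g0 (b k) - gh (b k), b j⟫ = ⟪g0 (b j) - gh (b j), b k⟫ := by
    intro k j
    have h1 : ⟪g0 (b k) - gh (b k), b j⟫ = ⟪b k, g0 (b j) - gh (b j)⟫ := by
      rw [hg0 (b k), hgh (b k), hg0 (b j), hgh (b j), inner_sub_left, inner_sub_right,
        key (⇑b) (b k) (b j), key uh (b k) (b j)]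
    rw [h1, real_inner_comm]
  -- per-i summability and eigenvalue sums
  have hci_mem : ∀ i ∈ I, Summable (fun j => lam j * ⟪uh i, b j⟫ ^ 2) :=
    fun i hi => hVh_dom (uh i) (huh_mem i hi)
  have hci_sum : ∀ i ∈ I, ∑' j, lam j * ⟪uh i, b j⟫ ^ 2 = lamh i := by
    intro i hi
    have h := heig_h i hi (uh i) (huh_mem i hi)
    rw [huh_orth i hi i hi] at h
    simp only [if_true, mul_one] at h
    rw [← h]
    refine tsum_congr fun j => ?_
    rw [sq]
  -- gh on basis vectors
  have hghb : ∀ j, gh (b j) = ∑ i ∈ I, ⟪uh i, b j⟫ • uh i := by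
    intro j
    rw [hgh]
    refine Finset.sum_congr rfl fun i _ => ?_
    rw [real_inner_comm]
  have hP : ∀ j, ⟪b j, gh (b j)⟫ = ∑ i ∈ I, ⟪uh i, b j⟫ ^ 2 := by
    intro j
    rw [hghb, inner_sum]
    refine Finset.sum_congr rfl fun i _ => ?_
    rw [real_inner_smul_right, real_inner_comm, sq]
  have hPP : ∀ j, ‖gh (b j)‖ ^ 2 = ∑ i ∈ I, ⟪uh i, b j⟫ ^ 2 := by
    intro j
    rw [← real_inner_self_eq_norm_sq, hghb j, sum_inner]
    refine Finset.sum_congr rfl fun i hi => ?_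
    rw [real_inner_smul_left, inner_sum]
    have h2 : ∑ i' ∈ I, ⟪uh i, ⟪uh i', b j⟫ • uh i'⟫ = ⟪uh i, b j⟫ := by
      rw [Finset.sum_eq_single i]
      · rw [real_inner_smul_right, huh_orth i hi i hi]; simp
      · intro i' hi' hne
        rw [real_inner_smul_right, huh_orth i hi i' hi', if_neg (fun h => hne h.symm)]
        ring
      · intro h; exact absurd hi h
    rw [h2, sq]
  -- norms
  have hN : ∀ j, ‖b j - gh (b j)‖ ^ 2 = 1 - ∑ i ∈ I, ⟪uh i, b j⟫ ^ 2 := by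
    intro j
    rw [norm_sub_sq_real, hP, hPP, b.orthonormal.1 j]
    ring
  have hwnot : ∀ j ∉ I, ‖g0 (b j) - gh (b j)‖ ^ 2 = ∑ i ∈ I, ⟪uh i, b j⟫ ^ 2 := by
    intro j hj
    rw [hg0b, if_neg hj, zero_sub, norm_neg, hPP]
  have hwmem : ∀ j ∈ I, g0 (b j) - gh (b j) = b j - gh (b j) := by
    intro j hj
    rw [hg0b, if_pos hj]
  -- Parseval
  have hpars_sum : ∀ x : H, Summable fun k => ⟪x, b k⟫ ^ 2 := by
    intro x
    refine (b.summable_inner_mul_inner x x).congr fun k => ?_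
    rw [real_inner_comm (b k) x]; ring
  have hpars : ∀ x : H, ∑' k, ⟪x, b k⟫ ^ 2 = ‖x‖ ^ 2 := by
    intro x
    rw [← real_inner_self_eq_norm_sq, ← b.tsum_inner_mul_inner x x]
    refine tsum_congr fun k => ?_
    rw [real_inner_comm (b k) x]; ring
  -- summability facts
  have hPsum : Summable fun j => lam j * ∑ i ∈ I, ⟪uh i, b j⟫ ^ 2 := by
    refine (summable_sum hci_mem).congr fun j => ?_
    rw [Finset.mul_sum]
  have hdiffsupp : ∀ j ∉ I,
      lam j * ‖g0 (b j) - gh (b j)‖ ^ 2 - lam j * ∑ i ∈ I, ⟪uh i, b j⟫ ^ 2 = 0 := by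
    intro j hj
    rw [hwnot j hj]; ring
  have hdiff : Summable fun j =>
      lam j * ‖g0 (b j) - gh (b j)‖ ^ 2 - lam j * ∑ i ∈ I, ⟪uh i, b j⟫ ^ 2 :=
    summable_of_ne_finset_zero hdiffsupp
  have hwsum : Summable fun j => lam j * ‖g0 (b j) - gh (b j)‖ ^ 2 := by
    refine (hdiff.add hPsum).congr fun j => ?_
    ring
  have hG : Summable fun p : ℕ × ℕ => lam p.1 * ⟪g0 (b p.1) - gh (b p.1), b p.2⟫ ^ 2 := by
    refine (summable_prod_of_nonneg ?_).mpr ⟨?_, ?_⟩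
    · intro p
      exact mul_nonneg (hlam_pos p.1).le (sq_nonneg _)
    · intro j
      exact (hpars_sum (g0 (b j) - gh (b j))).mul_left (lam j)
    · refine hwsum.congr fun j => ?_
      show lam j * ‖g0 (b j) - gh (b j)‖ ^ 2
        = ∑' k, lam j * ⟪g0 (b j) - gh (b j), b k⟫ ^ 2
      rw [tsum_mul_left, hpars]
  have huf : Summable (Function.uncurry fun j k =>
      lam j * ⟪g0 (b k) - gh (b k), b j⟫ ^ 2) := by
    refine hG.congr fun p => ?_
    simp only [Function.uncurry]
    rw [hsymm p.2 p.1]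
  -- main computation
  calc (∑' k, ∑' j, lam j * ⟪g0 (b k) - gh (b k), b j⟫ ^ 2)
      = ∑' j, ∑' k, lam j * ⟪g0 (b k) - gh (b k), b j⟫ ^ 2 := (Summable.tsum_comm huf)
    _ = ∑' j, lam j * ‖g0 (b j) - gh (b j)‖ ^ 2 := by
        refine tsum_congr fun j => ?_
        have h1 : ∀ k, lam j * ⟪g0 (b k) - gh (b k), b j⟫ ^ 2
            = lam j * ⟪g0 (b j) - gh (b j), b k⟫ ^ 2 := fun k => by rw [hsymm k j]
        rw [tsum_congr h1, tsum_mul_left, hpars]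
    _ = (∑' j, (lam j * ‖g0 (b j) - gh (b j)‖ ^ 2 - lam j * ∑ i ∈ I, ⟪uh i, b j⟫ ^ 2))
          + ∑' j, lam j * ∑ i ∈ I, ⟪uh i, b j⟫ ^ 2 := by
        rw [← Summable.tsum_add hdiff hPsum]
        exact tsum_congr fun j => by ring
    _ = (∑ j ∈ I, (lam j * ‖g0 (b j) - gh (b j)‖ ^ 2 - lam j * ∑ i ∈ I, ⟪uh i, b j⟫ ^ 2))
          + ∑ i ∈ I, lamh i := by
        congr 1
        · exact tsum_eq_sum hdiffsupp
        · have h3 : ∑' j, lam j * ∑ i ∈ I, ⟪uh i, b j⟫ ^ 2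
              = ∑' j, ∑ i ∈ I, lam j * ⟪uh i, b j⟫ ^ 2 :=
            tsum_congr fun j => Finset.mul_sum _ _ _
          rw [h3, Summable.tsum_finsetSum hci_mem]
          exact Finset.sum_congr rfl fun i hi => hci_sum i hi
    _ = (∑ i ∈ I, (lamh i - lam i)) + 2 * ∑ i ∈ I, lam i * ‖b i - gh (b i)‖ ^ 2 := by
        have hterm : ∀ j ∈ I,
            lam j * ‖g0 (b j) - gh (b j)‖ ^ 2 - lam j * ∑ i ∈ I, ⟪uh i, b j⟫ ^ 2
              = 2 * (lam j * ‖b j - gh (b j)‖ ^ 2) - lam j := by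
          intro j hj
          rw [hwmem j hj, hN j]
          ring
        rw [Finset.sum_congr rfl hterm, Finset.sum_sub_distrib, Finset.sum_sub_distrib,
          ← Finset.mul_sum]
        ring
end

section
/- Let (w_i)_{i=m}^{M} be any orthonormal family in H with span{w_m,…,w_M} = span{u_{mh},…,u_{Mh}}. Then the energy norm of the eigenvector errors satisfies the identity Σ_{i=m}^{M} ‖A^{1/2}(e_i − w_i)‖² = Σ_{i=m}^{M} (λ_{ih} − λ_i) + Σ_{i=m}^{M} λ_i ‖e_i − w_i‖². -/
open scoped RealInnerProductSpace

lemma exists_coeffs_stmt4 {R M : Type*} [Semiring R] [AddCommMonoid M] [Module R M]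
    (f : ℕ → M) (s : Finset ℕ) (v : M) (hv : v ∈ Submodule.span R (f '' ↑s)) :
    ∃ c : ℕ → R, v = ∑ j ∈ s, c j • f j := by
  obtain ⟨l, hls, hlv⟩ := (Finsupp.mem_span_image_iff_linearCombination R).1 hv
  refine ⟨fun j => l j, ?_⟩
  rw [← hlv, Finsupp.linearCombination_apply, Finsupp.sum]
  refine Finset.sum_subset ?_ ?_
  · intro j hj
    exact Finset.mem_coe.1 ((Finsupp.mem_supported R l).1 hls hj)
  · intro j _ hj
    simp [Finsupp.notMem_support_iff.1 hj]

/-- 0-based indexing: for any orthonormal family `(w_i)` spanning the same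
space as the approximate eigenvectors,
`Σ_i ‖A^{1/2}(e_i − w_i)‖² = Σ_i (λ_{ih} − λ_i) + Σ_i λ_i ‖e_i − w_i‖²`. -/
theorem stmt_4
    {H : Type*} [NormedAddCommGroup H] [InnerProductSpace ℝ H] [CompleteSpace H]
    (b : HilbertBasis ℕ ℝ H)
    (lam : ℕ → ℝ) (hlam_pos : ∀ k, 0 < lam k) (hlam_mono : Monotone lam)
    (hlam_tendsto : Filter.Tendsto lam Filter.atTop Filter.atTop)
    (m M : ℕ) (hmM : m ≤ M)
    (Vh : Submodule ℝ H) (hVh_fin : FiniteDimensional ℝ Vh)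
    (hVh_dom : ∀ v ∈ Vh, Summable fun k => lam k * ⟪v, b k⟫ ^ 2)
    (uh : ℕ → H) (lamh : ℕ → ℝ)
    (huh_mem : ∀ i ∈ Finset.Icc m M, uh i ∈ Vh)
    (huh_orth : ∀ i ∈ Finset.Icc m M, ∀ j ∈ Finset.Icc m M,
      ⟪uh i, uh j⟫ = if i = j then 1 else 0)
    (hlamh_mono : ∀ i ∈ Finset.Icc m M, ∀ j ∈ Finset.Icc m M, i ≤ j → lamh i ≤ lamh j)
    (heig_h : ∀ i ∈ Finset.Icc m M, ∀ v ∈ Vh,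
      (∑' k, lam k * (⟪uh i, b k⟫ * ⟪v, b k⟫)) = lamh i * ⟪uh i, v⟫)
    (w : ℕ → H)
    (hw_orth : ∀ i ∈ Finset.Icc m M, ∀ j ∈ Finset.Icc m M,
      ⟪w i, w j⟫ = if i = j then 1 else 0)
    (hw_span : Submodule.span ℝ (w '' Set.Icc m M)
      = Submodule.span ℝ (uh '' Set.Icc m M))
    :
    (∑ i ∈ Finset.Icc m M, ∑' k, lam k * ⟪b i - w i, b k⟫ ^ 2)
      = (∑ i ∈ Finset.Icc m M, (lamh i - lam i))
        + ∑ i ∈ Finset.Icc m M, lam i * ‖b i - w i‖ ^ 2 := by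
  classical
  set s := Finset.Icc m M with hs
  -- spans and membership
  have hcoe : (↑s : Set ℕ) = Set.Icc m M := by rw [hs, Finset.coe_Icc]
  have hspan_le : Submodule.span ℝ (uh '' Set.Icc m M) ≤ Vh := by
    rw [Submodule.span_le]
    rintro _ ⟨i, hi, rfl⟩
    exact huh_mem i (by simpa [hs, Finset.mem_Icc] using hi)
  have hw_memspan : ∀ i ∈ s, w i ∈ Submodule.span ℝ (w '' Set.Icc m M) := by
    intro i hi
    exact Submodule.subset_span ⟨i, by simpa [hs, Finset.mem_Icc] using hi, rfl⟩
  have huh_memspan : ∀ j ∈ s, uh j ∈ Submodule.span ℝ (uh '' Set.Icc m M) := by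
    intro j hj
    exact Submodule.subset_span ⟨j, by simpa [hs, Finset.mem_Icc] using hj, rfl⟩
  have hw_mem : ∀ i ∈ s, w i ∈ Vh := fun i hi => hspan_le (hw_span ▸ hw_memspan i hi)
  -- bilinear summability
  have habs : ∀ a c : ℝ, |a * c| ≤ (a ^ 2 + c ^ 2) / 2 := by
    intro a c
    rcases abs_cases (a * c) with ⟨h, _⟩ | ⟨h, _⟩ <;>
      nlinarith [sq_nonneg (a - c), sq_nonneg (a + c)]
  have hsumuv : ∀ u ∈ Vh, ∀ v ∈ Vh,
      Summable fun k => lam k * (⟪u, b k⟫ * ⟪v, b k⟫) := by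
    intro u hu v hv
    have hg : Summable fun k => (lam k * ⟪u, b k⟫ ^ 2 + lam k * ⟪v, b k⟫ ^ 2) / 2 :=
      ((hVh_dom u hu).add (hVh_dom v hv)).div_const 2
    refine Summable.of_abs (Summable.of_nonneg_of_le (fun k => abs_nonneg _) (fun k => ?_) hg)
    rw [abs_mul, abs_of_pos (hlam_pos k)]
    calc lam k * |⟪u, b k⟫ * ⟪v, b k⟫|
        ≤ lam k * ((⟪u, b k⟫ ^ 2 + ⟪v, b k⟫ ^ 2) / 2) :=
          mul_le_mul_of_nonneg_left (habs _ _) (hlam_pos k).le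
      _ = (lam k * ⟪u, b k⟫ ^ 2 + lam k * ⟪v, b k⟫ ^ 2) / 2 := by ring
  -- representation in an orthonormal family
  have hrep : ∀ f : ℕ → H, (∀ i ∈ s, ∀ j ∈ s, ⟪f i, f j⟫ = if i = j then 1 else 0) →
      ∀ v ∈ Submodule.span ℝ (f '' Set.Icc m M), v = ∑ j ∈ s, ⟪v, f j⟫ • f j := by
    intro f horth v hv
    have hv' : v ∈ Submodule.span ℝ (f '' ↑s) := by rwa [hcoe]
    obtain ⟨c, hc⟩ := exists_coeffs_stmt4 f s v hv'
    have hcj : ∀ j ∈ s, ⟪v, f j⟫ = c j := by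
      intro j hj
      rw [hc, sum_inner]
      rw [Finset.sum_congr rfl fun l hl => by
        rw [real_inner_smul_left, horth l hl j hj]]
      simp [hj]
    rw [Finset.sum_congr rfl fun j hj => by rw [hcj j hj]]
    exact hc
  -- Parseval within the family
  have hpars : ∀ f : ℕ → H, (∀ i ∈ s, ∀ j ∈ s, ⟪f i, f j⟫ = if i = j then 1 else 0) →
      ∀ v ∈ Submodule.span ℝ (f '' Set.Icc m M), ⟪v, v⟫ = ∑ j ∈ s, ⟪v, f j⟫ ^ 2 := by
    intro f horth v hv
    have hv2 := hrep f horth v hv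
    nth_rewrite 2 [hv2]
    rw [inner_sum]
    refine Finset.sum_congr rfl fun j hj => ?_
    rw [real_inner_smul_right]
    ring
  -- the energy of w i
  set Bw : ℕ → ℝ := fun i => ∑' k, lam k * ⟪w i, b k⟫ ^ 2 with hBw
  have hBw_eq : ∀ i ∈ s, Bw i = ∑ j ∈ s, lamh j * ⟪w i, uh j⟫ ^ 2 := by
    intro i hi
    have hwiV : w i ∈ Vh := hw_mem i hi
    have hwi_rep : w i = ∑ j ∈ s, ⟪w i, uh j⟫ • uh j :=
      hrep uh huh_orth (w i) (hw_span ▸ hw_memspan i hi)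
    have hwk : ∀ k, ⟪w i, b k⟫ = ∑ j ∈ s, ⟪w i, uh j⟫ * ⟪uh j, b k⟫ := by
      intro k
      nth_rewrite 1 [hwi_rep]
      rw [sum_inner]
      exact Finset.sum_congr rfl fun j hj => by rw [real_inner_smul_left]
    calc Bw i = ∑' k, ∑ j ∈ s, ⟪w i, uh j⟫ * (lam k * (⟪uh j, b k⟫ * ⟪w i, b k⟫)) := by
          refine tsum_congr fun k => ?_
          rw [sq]
          nth_rewrite 1 [hwk k]
          rw [Finset.sum_mul, Finset.mul_sum]
          exact Finset.sum_congr rfl fun j hj => by ring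
      _ = ∑ j ∈ s, ∑' k, ⟪w i, uh j⟫ * (lam k * (⟪uh j, b k⟫ * ⟪w i, b k⟫)) := by
          refine Summable.tsum_finsetSum fun j hj => ?_
          exact (hsumuv (uh j) (huh_mem j hj) (w i) hwiV).mul_left _
      _ = ∑ j ∈ s, lamh j * ⟪w i, uh j⟫ ^ 2 := by
          refine Finset.sum_congr rfl fun j hj => ?_
          rw [tsum_mul_left, heig_h j hj (w i) hwiV, real_inner_comm (uh j) (w i)]
          ring
  -- trace identity
  have hkey : ∑ i ∈ s, Bw i = ∑ j ∈ s, lamh j := by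
    rw [Finset.sum_congr rfl hBw_eq, Finset.sum_comm]
    refine Finset.sum_congr rfl fun j hj => ?_
    have huhj : uh j ∈ Submodule.span ℝ (w '' Set.Icc m M) := by
      rw [hw_span]; exact huh_memspan j hj
    have hp := hpars w hw_orth (uh j) huhj
    have h1 : ⟪uh j, uh j⟫ = (1 : ℝ) := by simpa using huh_orth j hj j hj
    have h2 : ∑ i ∈ s, ⟪uh j, w i⟫ ^ 2 = 1 := by rw [← hp, h1]
    calc ∑ i ∈ s, lamh j * ⟪w i, uh j⟫ ^ 2
        = lamh j * ∑ i ∈ s, ⟪uh j, w i⟫ ^ 2 := by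
          rw [Finset.mul_sum]
          exact Finset.sum_congr rfl fun i hi => by rw [real_inner_comm (w i) (uh j)]
      _ = lamh j := by rw [h2, mul_one]
  -- per-index computation of the left-hand side
  have hLHS : ∀ i ∈ s, (∑' k, lam k * ⟪b i - w i, b k⟫ ^ 2)
      = lam i * (1 - 2 * ⟪w i, b i⟫) + Bw i := by
    intro i hi
    have hbk : ∀ k, ⟪b i - w i, b k⟫ = (if i = k then 1 else 0) - ⟪w i, b k⟫ := by
      intro k
      rw [inner_sub_left]
      congr 1
      exact orthonormal_iff_ite.1 b.orthonormal i k
    set g1 : ℕ → ℝ := fun k => if i = k then lam i * (1 - 2 * ⟪w i, b i⟫) else 0 with hg1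
    have hg1sum : Summable g1 := by
      refine summable_of_ne_finset_zero (s := {i}) fun k hk => ?_
      have : i ≠ k := fun h => hk (by simp [h])
      simp [hg1, this]
    have hdecomp : ∀ k, lam k * ⟪b i - w i, b k⟫ ^ 2 = g1 k + lam k * ⟪w i, b k⟫ ^ 2 := by
      intro k
      rw [hbk k]
      by_cases h : i = k
      · subst h
        simp only [hg1, eq_self_iff_true, if_true, ite_true]
        ring
      · simp only [hg1, if_neg h]; ring
    rw [tsum_congr hdecomp, Summable.tsum_add hg1sum (hVh_dom (w i) (hw_mem i hi)),
      tsum_eq_single i (fun k hk => by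
        simp only [hg1]
        exact if_neg fun h => hk h.symm)]
    simp only [hg1, hBw, if_pos rfl]
  -- per-index computation of the right-hand side
  have hRHS : ∀ i ∈ s, lam i * ‖b i - w i‖ ^ 2 = lam i * (2 - 2 * ⟪b i, w i⟫) := by
    intro i hi
    have hb1 : ‖b i‖ = 1 := b.orthonormal.1 i
    have hw1 : ‖w i‖ ^ 2 = 1 := by
      rw [← real_inner_self_eq_norm_sq]
      simpa using hw_orth i hi i hi
    rw [norm_sub_sq_real, hb1, hw1]
    ring
  -- assembly
  calc (∑ i ∈ s, ∑' k, lam k * ⟪b i - w i, b k⟫ ^ 2)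
      = ∑ i ∈ s, (lam i * (1 - 2 * ⟪w i, b i⟫) + Bw i) := Finset.sum_congr rfl hLHS
    _ = (∑ i ∈ s, lam i * (1 - 2 * ⟪w i, b i⟫)) + ∑ i ∈ s, Bw i :=
        Finset.sum_add_distrib
    _ = (∑ i ∈ s, lam i * (1 - 2 * ⟪w i, b i⟫)) + ∑ i ∈ s, lamh i := by rw [hkey]
    _ = (∑ i ∈ s, (lamh i - lam i)) + ∑ i ∈ s, lam i * (2 - 2 * ⟪b i, w i⟫) := by
        rw [← Finset.sum_add_distrib, ← Finset.sum_add_distrib]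
        refine Finset.sum_congr rfl fun i hi => ?_
        rw [real_inner_comm (b i) (w i)]
        ring
    _ = (∑ i ∈ s, (lamh i - lam i)) + ∑ i ∈ s, lam i * ‖b i - w i‖ ^ 2 := by
        rw [Finset.sum_congr rfl fun i hi => (hRHS i hi).symm]
end

section
/- Let (w_i)_{i=m}^{M} be an orthonormal family with span{w_m,…,w_M} = span{u_{mh},…,u_{Mh}} whose overlap matrix with (e_i) is symmetric and positive semidefinite, i.e. ⟨w_i,e_j⟩ = ⟨w_j,e_i⟩ for all i,j ∈ {m,…,M} and Σ_{i,j=m}^{M} c_i c_j ⟨w_i,e_j⟩ ≥ 0 for all reals (c_i) (these properties hold for the minimizer over orthogonal transformations of Σ_i ‖w_i − e_i‖²). Then (1/√2) ‖γ⁰ − γ_h‖_{S2} ≤ (Σ_{i=m}^{M} ‖e_i − w_i‖²)^{1/2} ≤ ‖γ⁰ − γ_h‖_{S2}. -/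
open scoped RealInnerProductSpace
open scoped Matrix
open scoped MatrixOrder

private lemma trace_nonneg_of_posSemidef {n : Type*} [Fintype n] [DecidableEq n]
    {A : Matrix n n ℝ} (hA : A.PosSemidef) : 0 ≤ A.trace := by
  rw [Matrix.trace]
  refine Finset.sum_nonneg fun i _ => ?_
  have h := hA.dotProduct_mulVec_nonneg (Pi.single i (1:ℝ))
  have he : dotProduct (star (Pi.single i (1:ℝ)))
      (A.mulVec (Pi.single i (1:ℝ))) = A.diag i := by
    simp [dotProduct, Matrix.mulVec, Pi.single_apply, Finset.sum_ite_eq,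
      Matrix.diag, mul_comm]
  rwa [he] at h

private lemma trace_mul_nonneg_of_posSemidef {n : Type*} [Fintype n] [DecidableEq n]
    {A B : Matrix n n ℝ} (hA : A.PosSemidef) (hB : B.PosSemidef) :
    0 ≤ (A * B).trace := by
  set T := CFC.sqrt A with hT
  have h1 : A = T * T := (CFC.sqrt_mul_sqrt_self A hA.nonneg).symm
  have h2 : (A * B).trace = (T * B * T).trace := by
    rw [Matrix.trace_mul_cycle T B T, h1, mul_assoc]
  have h3 : (T * B * T).PosSemidef := by
    have := hB.conjTranspose_mul_mul_same T
    rwa [(Matrix.nonneg_iff_posSemidef.mp (CFC.sqrt_nonneg A)).1] at this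
  rw [h2]
  exact trace_nonneg_of_posSemidef h3

private lemma inner_sum_sum_ortho {H : Type*} [NormedAddCommGroup H] [InnerProductSpace ℝ H]
    (s : Finset ℕ) (u : ℕ → H)
    (horth : ∀ i ∈ s, ∀ j ∈ s, ⟪u i, u j⟫ = if i = j then 1 else 0)
    (f g : ℕ → ℝ) :
    ⟪∑ i ∈ s, f i • u i, ∑ j ∈ s, g j • u j⟫ = ∑ i ∈ s, f i * g i := by
  rw [sum_inner]
  refine Finset.sum_congr rfl fun i hi => ?_
  rw [real_inner_smul_left, inner_sum]
  rw [Finset.sum_congr rfl (fun j hj => by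
    rw [real_inner_smul_right, horth i hi j hj])]
  simp [mul_ite, Finset.sum_ite_eq, hi]

private lemma mem_span_repr {H : Type*} [NormedAddCommGroup H] [InnerProductSpace ℝ H]
    (u : ℕ → H) (m M : ℕ)
    (horth : ∀ i ∈ Finset.Icc m M, ∀ j ∈ Finset.Icc m M,
      ⟪u i, u j⟫ = if i = j then 1 else 0)
    {v : H} (hv : v ∈ Submodule.span ℝ (u '' Set.Icc m M)) :
    v = ∑ j ∈ Finset.Icc m M, ⟪v, u j⟫ • u j := by
  induction hv using Submodule.span_induction with
  | mem x hx =>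
      obtain ⟨i, hi, rfl⟩ := hx
      have hi' : i ∈ Finset.Icc m M := by
        rw [Finset.mem_Icc]; exact Set.mem_Icc.mp hi
      rw [Finset.sum_congr rfl (fun j hj => by
        rw [horth i hi' j hj, ite_smul, one_smul, zero_smul])]
      rw [Finset.sum_ite_eq, if_pos hi']
  | zero => simp
  | add x y hx hy ihx ihy =>
      conv_lhs => rw [ihx, ihy]
      simp only [inner_add_left, add_smul, Finset.sum_add_distrib]
  | smul a x hx ih =>
      conv_lhs => rw [ih]
      rw [Finset.smul_sum]
      refine Finset.sum_congr rfl fun j hj => ?_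
      rw [real_inner_smul_left, mul_smul]

/-- 0-based indexing: for the well-aligned orthonormal family `(w_i)`
(symmetric positive semidefinite overlap with `(e_i)`),
`(1/√2)‖γ⁰ − γ_h‖_{S2} ≤ (Σ_i ‖e_i − w_i‖²)^{1/2} ≤ ‖γ⁰ − γ_h‖_{S2}`. -/
theorem stmt_6
    {H : Type*} [NormedAddCommGroup H] [InnerProductSpace ℝ H] [CompleteSpace H]
    (b : HilbertBasis ℕ ℝ H)
    (lam : ℕ → ℝ) (hlam_pos : ∀ k, 0 < lam k) (hlam_mono : Monotone lam)
    (hlam_tendsto : Filter.Tendsto lam Filter.atTop Filter.atTop)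
    (m M : ℕ) (hmM : m ≤ M)
    (Vh : Submodule ℝ H) (hVh_fin : FiniteDimensional ℝ Vh)
    (hVh_dom : ∀ v ∈ Vh, Summable fun k => lam k * ⟪v, b k⟫ ^ 2)
    (uh : ℕ → H) (lamh : ℕ → ℝ)
    (huh_mem : ∀ i ∈ Finset.Icc m M, uh i ∈ Vh)
    (huh_orth : ∀ i ∈ Finset.Icc m M, ∀ j ∈ Finset.Icc m M,
      ⟪uh i, uh j⟫ = if i = j then 1 else 0)
    (hlamh_mono : ∀ i ∈ Finset.Icc m M, ∀ j ∈ Finset.Icc m M, i ≤ j → lamh i ≤ lamh j)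
    (heig_h : ∀ i ∈ Finset.Icc m M, ∀ v ∈ Vh,
      (∑' k, lam k * (⟪uh i, b k⟫ * ⟪v, b k⟫)) = lamh i * ⟪uh i, v⟫)
    (g0 gh : H → H)
    (hg0 : ∀ w, g0 w = ∑ i ∈ Finset.Icc m M, ⟪w, b i⟫ • b i)
    (hgh : ∀ w, gh w = ∑ i ∈ Finset.Icc m M, ⟪w, uh i⟫ • uh i)
    (w : ℕ → H)
    (hw_orth : ∀ i ∈ Finset.Icc m M, ∀ j ∈ Finset.Icc m M,
      ⟪w i, w j⟫ = if i = j then 1 else 0)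
    (hw_span : Submodule.span ℝ (w '' Set.Icc m M)
      = Submodule.span ℝ (uh '' Set.Icc m M))
    (hw_sym : ∀ i ∈ Finset.Icc m M, ∀ j ∈ Finset.Icc m M, ⟪w i, b j⟫ = ⟪w j, b i⟫)
    (hw_psd : ∀ c : ℕ → ℝ,
      0 ≤ ∑ i ∈ Finset.Icc m M, ∑ j ∈ Finset.Icc m M, c i * c j * ⟪w i, b j⟫)
    :
    (1 / Real.sqrt 2) * Real.sqrt (∑' k, ‖g0 (b k) - gh (b k)‖ ^ 2)
        ≤ Real.sqrt (∑ i ∈ Finset.Icc m M, ‖b i - w i‖ ^ 2) ∧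
    Real.sqrt (∑ i ∈ Finset.Icc m M, ‖b i - w i‖ ^ 2)
        ≤ Real.sqrt (∑' k, ‖g0 (b k) - gh (b k)‖ ^ 2) := by
  classical
  set s : Finset ℕ := Finset.Icc m M with hs
  set J : ℝ := (s.card : ℝ) with hJ
  set tS : ℝ := ∑ i ∈ s, ⟪w i, b i⟫ with htS
  set T : ℝ := ∑ i ∈ s, ∑ j ∈ s, ⟪w i, b j⟫ ^ 2 with hT
  have hbb : ∀ k i : ℕ, ⟪b k, b i⟫ = if k = i then (1:ℝ) else 0 :=
    fun k i => orthonormal_iff_ite.mp b.orthonormal k i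
  have hb_orth : ∀ i ∈ s, ∀ j ∈ s, ⟪b i, b j⟫ = if i = j then (1:ℝ) else 0 :=
    fun i _ j _ => hbb i j
  -- ### Claim D : ∑ ‖b i - w i‖² = 2J - 2 tS
  have hDeq : (∑ i ∈ s, ‖b i - w i‖ ^ 2) = 2 * J - 2 * tS := by
    have hper : ∀ i ∈ s, ‖b i - w i‖ ^ 2 = 2 - 2 * ⟪w i, b i⟫ := by
      intro i hi
      have h1 : ‖b i‖ ^ 2 = 1 := by
        rw [← real_inner_self_eq_norm_sq, hbb i i, if_pos rfl]
      have h2 : ‖w i‖ ^ 2 = 1 := by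
        rw [← real_inner_self_eq_norm_sq, hw_orth i hi i hi, if_pos rfl]
      rw [norm_sub_sq_real, h1, h2, real_inner_comm]
      ring
    rw [Finset.sum_congr rfl hper, Finset.sum_sub_distrib, ← Finset.mul_sum]
    simp only [Finset.sum_const, nsmul_eq_mul, ← htS, ← hJ]
    ring
  -- ### representation of g0 on basis vectors
  have hg0k : ∀ k, g0 (b k) = if k ∈ s then b k else 0 := by
    intro k
    rw [hg0]
    rw [Finset.sum_congr rfl (fun i _ => by
      rw [hbb k i, ite_smul, one_smul, zero_smul])]
    rw [Finset.sum_ite_eq]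
  -- inner products with gh
  have hbgh : ∀ k, ⟪b k, gh (b k)⟫ = ∑ i ∈ s, ⟪b k, uh i⟫ ^ 2 := by
    intro k
    rw [hgh, inner_sum]
    exact Finset.sum_congr rfl fun i _ => by rw [real_inner_smul_right, sq]
  have hghgh : ∀ k, ‖gh (b k)‖ ^ 2 = ∑ i ∈ s, ⟪b k, uh i⟫ ^ 2 := by
    intro k
    rw [← real_inner_self_eq_norm_sq, hgh,
      inner_sum_sum_ortho s uh huh_orth _ _]
    exact Finset.sum_congr rfl fun i _ => (sq _).symm
  -- pointwise formula for the HS summand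
  have hfk : ∀ k, ‖g0 (b k) - gh (b k)‖ ^ 2 =
      (if k ∈ s then (1:ℝ) else 0) + (∑ i ∈ s, ⟪b k, uh i⟫ ^ 2)
        - 2 * ((if k ∈ s then (1:ℝ) else 0) * ∑ i ∈ s, ⟪b k, uh i⟫ ^ 2) := by
    intro k
    rw [norm_sub_sq_real]
    have h1 : ‖g0 (b k)‖ ^ 2 = if k ∈ s then (1:ℝ) else 0 := by
      rw [hg0k k]
      split
      · rw [← real_inner_self_eq_norm_sq, hbb k k, if_pos rfl]
      · simp
    have h2 : ⟪g0 (b k), gh (b k)⟫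
        = (if k ∈ s then (1:ℝ) else 0) * ∑ i ∈ s, ⟪b k, uh i⟫ ^ 2 := by
      rw [hg0k k]
      split
      · rw [one_mul, hbgh k]
      · simp
    rw [h1, h2, hghgh k]
    ring
  -- ### the HS tsum
  have hqsum : ∀ i ∈ s, HasSum (fun k => ⟪b k, uh i⟫ ^ 2) 1 := by
    intro i hi
    have h := b.hasSum_inner_mul_inner (uh i) (uh i)
    have h1 : ⟪uh i, uh i⟫ = (1:ℝ) := by rw [huh_orth i hi i hi, if_pos rfl]
    rw [h1] at h
    refine h.congr_fun fun k => ?_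
    rw [sq, real_inner_comm]
  have hQ : HasSum (fun k => ∑ i ∈ s, ⟪b k, uh i⟫ ^ 2) J := by
    have h := hasSum_sum (f := fun i k => ⟪b k, uh i⟫ ^ 2)
      (a := fun _ => (1:ℝ)) (s := s) hqsum
    simpa [hJ] using h
  have hF1 : HasSum (fun k => if k ∈ s then (1:ℝ) else 0) J := by
    have h := hasSum_sum_of_ne_finset_zero (L := SummationFilter.unconditional ℕ) (s := s)
      (f := fun k => if k ∈ s then (1:ℝ) else 0) (fun k hk => if_neg hk)
    have e : (∑ k ∈ s, if k ∈ s then (1:ℝ) else 0) = J := by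
      rw [Finset.sum_congr rfl fun k hk => if_pos hk, Finset.sum_const,
        nsmul_eq_mul, mul_one, hJ]
    rwa [e] at h
  have hF2 : HasSum (fun k => (if k ∈ s then (1:ℝ) else 0) * ∑ i ∈ s, ⟪b k, uh i⟫ ^ 2)
      (∑ k ∈ s, ∑ i ∈ s, ⟪b k, uh i⟫ ^ 2) := by
    have h := hasSum_sum_of_ne_finset_zero (L := SummationFilter.unconditional ℕ) (s := s)
      (f := fun k => (if k ∈ s then (1:ℝ) else 0) * ∑ i ∈ s, ⟪b k, uh i⟫ ^ 2)
      (fun k hk => by simp only [if_neg hk, zero_mul])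
    have e : (∑ k ∈ s, (if k ∈ s then (1:ℝ) else 0) * ∑ i ∈ s, ⟪b k, uh i⟫ ^ 2)
        = ∑ k ∈ s, ∑ i ∈ s, ⟪b k, uh i⟫ ^ 2 :=
      Finset.sum_congr rfl fun k hk => by rw [if_pos hk, one_mul]
    rwa [e] at h
  have htot : HasSum (fun k => ‖g0 (b k) - gh (b k)‖ ^ 2)
      (J + J - 2 * (∑ k ∈ s, ∑ i ∈ s, ⟪b k, uh i⟫ ^ 2)) := by
    have h := (hF1.add hQ).sub (hF2.mul_left 2)
    exact h.congr_fun fun k => hfk k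
  -- ### representation of w in terms of uh
  have hrep : ∀ i ∈ s, w i = ∑ j ∈ s, ⟪w i, uh j⟫ • uh j := by
    intro i hi
    refine mem_span_repr uh m M huh_orth ?_
    rw [← hw_span]
    refine Submodule.subset_span ⟨i, ?_, rfl⟩
    rw [Set.mem_Icc]
    exact Finset.mem_Icc.mp hi
  have hgram : ∀ i ∈ s, ∀ i' ∈ s,
      ∑ j ∈ s, ⟪w i, uh j⟫ * ⟪w i', uh j⟫ = if i = i' then (1:ℝ) else 0 := by
    intro i hi i' hi'
    have h := hw_orth i hi i' hi'
    rw [hrep i hi, hrep i' hi', inner_sum_sum_ortho s uh huh_orth _ _] at h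
    exact h
  -- orthogonality of the columns via C * Cᵀ = 1 → Cᵀ * C = 1
  have hcols : ∀ j ∈ s, ∀ j' ∈ s,
      ∑ i ∈ s, ⟪w i, uh j⟫ * ⟪w i, uh j'⟫ = if j = j' then (1:ℝ) else 0 := by
    set C : Matrix {x // x ∈ s} {x // x ∈ s} ℝ := fun i j => ⟪w i.1, uh j.1⟫ with hC
    have hCC : C * Cᵀ = 1 := by
      ext i i'
      rw [Matrix.mul_apply]
      simp only [Matrix.transpose_apply, Matrix.one_apply]
      simp only [hC]
      have h := hgram i.1 i.2 i'.1 i'.2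
      rw [← Finset.sum_coe_sort s (fun j => ⟪w i.1, uh j⟫ * ⟪w i'.1, uh j⟫)] at h
      rw [h]
      by_cases hii : i = i'
      · rw [if_pos hii, if_pos (by rw [hii])]
      · rw [if_neg hii, if_neg (fun hc => hii (Subtype.ext hc))]
    have hCt : Cᵀ * C = 1 := mul_eq_one_comm.mp hCC
    intro j hj j' hj'
    have h := congrFun (congrFun hCt ⟨j, hj⟩) ⟨j', hj'⟩
    rw [Matrix.mul_apply] at h
    simp only [Matrix.transpose_apply, Matrix.one_apply] at h
    simp only [hC] at h
    rw [← Finset.sum_coe_sort s (fun i => ⟪w i, uh j⟫ * ⟪w i, uh j'⟫)]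
    rw [h]
    by_cases hjj : j = j'
    · rw [if_pos (Subtype.ext hjj), if_pos hjj]
    · rw [if_neg (fun hc => hjj (congrArg Subtype.val hc)), if_neg hjj]
  -- ### core identity : projections agree
  have hBcore : ∀ v : H, ∑ i ∈ s, ⟪v, w i⟫ ^ 2 = ∑ i ∈ s, ⟪v, uh i⟫ ^ 2 := by
    intro v
    have hexp : ∀ i ∈ s, ⟪v, w i⟫ = ∑ j ∈ s, ⟪w i, uh j⟫ * ⟪v, uh j⟫ := by
      intro i hi
      conv_lhs => rw [hrep i hi]
      rw [inner_sum]
      exact Finset.sum_congr rfl fun j _ => by rw [real_inner_smul_right]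
    calc ∑ i ∈ s, ⟪v, w i⟫ ^ 2
        = ∑ i ∈ s, ∑ j ∈ s, ∑ j' ∈ s,
            (⟪w i, uh j⟫ * ⟪w i, uh j'⟫) * (⟪v, uh j⟫ * ⟪v, uh j'⟫) := by
          refine Finset.sum_congr rfl fun i hi => ?_
          rw [hexp i hi, sq, Finset.sum_mul_sum]
          exact Finset.sum_congr rfl fun j _ =>
            Finset.sum_congr rfl fun j' _ => by ring
      _ = ∑ j ∈ s, ∑ j' ∈ s,
            (∑ i ∈ s, ⟪w i, uh j⟫ * ⟪w i, uh j'⟫) * (⟪v, uh j⟫ * ⟪v, uh j'⟫) := by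
          rw [Finset.sum_comm]
          refine Finset.sum_congr rfl fun j _ => ?_
          rw [Finset.sum_comm]
          refine Finset.sum_congr rfl fun j' _ => ?_
          rw [Finset.sum_mul]
      _ = ∑ j ∈ s, ⟪v, uh j⟫ ^ 2 := by
          refine Finset.sum_congr rfl fun j hj => ?_
          rw [Finset.sum_congr rfl (fun j' hj' => by
            rw [hcols j hj j' hj', ite_mul, one_mul, zero_mul])]
          rw [Finset.sum_ite_eq, if_pos hj, sq]
  -- the two HS traces agree
  have hTuT : (∑ k ∈ s, ∑ i ∈ s, ⟪b k, uh i⟫ ^ 2) = T := by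
    rw [Finset.sum_congr rfl (fun k _ => (hBcore (b k)).symm), hT, Finset.sum_comm]
    refine Finset.sum_congr rfl fun i _ => Finset.sum_congr rfl fun k _ => ?_
    rw [real_inner_comm]
  have hHS : (∑' k, ‖g0 (b k) - gh (b k)‖ ^ 2) = 2 * J - 2 * T := by
    rw [htot.tsum_eq, hTuT]
    ring
  -- ### the overlap matrix
  set Sm : Matrix {x // x ∈ s} {x // x ∈ s} ℝ := fun i j => ⟪w i.1, b j.1⟫ with hSm
  have hSherm : Sm.IsHermitian := by
    ext i j
    simp only [Matrix.conjTranspose_apply, star_trivial, hSm]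
    exact (hw_sym i.1 i.2 j.1 j.2).symm
  have e2 : ∀ x : {x // x ∈ s} → ℝ,
      star x ⬝ᵥ Sm *ᵥ x = ∑ i : {x // x ∈ s}, ∑ j : {x // x ∈ s}, x i * x j * Sm i j := by
    intro x
    simp only [dotProduct, Matrix.mulVec, star_trivial, Pi.star_apply]
    refine Finset.sum_congr rfl fun i _ => ?_
    rw [Finset.mul_sum]
    exact Finset.sum_congr rfl fun j _ => by ring
  have hSpsd : Sm.PosSemidef := by
    refine Matrix.PosSemidef.of_dotProduct_mulVec_nonneg hSherm fun x => ?_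
    have hx := hw_psd (fun n => if h : n ∈ s then x ⟨n, h⟩ else 0)
    rw [e2 x]
    rw [← Finset.sum_coe_sort s] at hx
    rw [Finset.sum_congr rfl (fun i _ => by
      rw [← Finset.sum_coe_sort s
        (fun j => (if h : (i:ℕ) ∈ s then x ⟨i, h⟩ else 0) *
          (if h : j ∈ s then x ⟨j, h⟩ else 0) * ⟪w i, b j⟫)])] at hx
    refine le_of_le_of_eq hx (Finset.sum_congr rfl fun i _ => ?_)
    refine Finset.sum_congr rfl fun j _ => ?_
    rw [dif_pos i.2, dif_pos j.2]
  have key : ∀ x : {x // x ∈ s} → ℝ,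
      ∑ i : {x // x ∈ s}, ∑ j : {x // x ∈ s}, x i * x j * Sm i j ≤ ∑ i : {x // x ∈ s}, x i ^ 2 := by
    intro x
    set c : ℕ → ℝ := fun n => if h : n ∈ s then x ⟨n, h⟩ else 0 with hc
    set Wv : H := ∑ i ∈ s, c i • w i with hWv
    set Bv : H := ∑ i ∈ s, c i • b i with hBv
    have hcc : ∀ i : {x // x ∈ s}, c i.1 = x i := fun i => by rw [hc]; exact dif_pos i.2
    have hWB : ⟪Wv, Bv⟫ = ∑ i : {x // x ∈ s}, ∑ j : {x // x ∈ s}, x i * x j * Sm i j := by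
      rw [hWv, hBv, sum_inner, ← Finset.sum_coe_sort s
        (fun i => ⟪c i • w i, ∑ j ∈ s, c j • b j⟫)]
      refine Finset.sum_congr rfl fun i _ => ?_
      rw [real_inner_smul_left, inner_sum, ← Finset.sum_coe_sort s
        (fun j => ⟪w i.1, c j • b j⟫), Finset.mul_sum]
      refine Finset.sum_congr rfl fun j _ => ?_
      rw [real_inner_smul_right, hcc i, hcc j, hSm]
      ring
    have hWW : ‖Wv‖ ^ 2 = ∑ i : {x // x ∈ s}, x i ^ 2 := by
      rw [← real_inner_self_eq_norm_sq, hWv,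
        inner_sum_sum_ortho s w hw_orth c c,
        ← Finset.sum_coe_sort s (fun i => c i * c i)]
      exact Finset.sum_congr rfl fun i _ => by rw [hcc i, sq]
    have hBB : ‖Bv‖ ^ 2 = ∑ i : {x // x ∈ s}, x i ^ 2 := by
      rw [← real_inner_self_eq_norm_sq, hBv,
        inner_sum_sum_ortho s b hb_orth c c,
        ← Finset.sum_coe_sort s (fun i => c i * c i)]
      exact Finset.sum_congr rfl fun i _ => by rw [hcc i, sq]
    have hCS : ⟪Wv, Bv⟫ ≤ ‖Wv‖ * ‖Bv‖ := real_inner_le_norm _ _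
    have hAM : ‖Wv‖ * ‖Bv‖ ≤ (‖Wv‖ ^ 2 + ‖Bv‖ ^ 2) / 2 := by
      nlinarith [sq_nonneg (‖Wv‖ - ‖Bv‖)]
    rw [← hWB]
    calc ⟪Wv, Bv⟫ ≤ (‖Wv‖ ^ 2 + ‖Bv‖ ^ 2) / 2 := le_trans hCS hAM
      _ = ∑ i : {x // x ∈ s}, x i ^ 2 := by rw [hWW, hBB]; ring
  have hISpsd : (1 - Sm).PosSemidef := by
    refine Matrix.PosSemidef.of_dotProduct_mulVec_nonneg (Matrix.IsHermitian.sub Matrix.isHermitian_one hSherm) fun x => ?_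
    rw [Matrix.sub_mulVec, dotProduct_sub, Matrix.one_mulVec]
    have h1 : star x ⬝ᵥ x = ∑ i : {x // x ∈ s}, x i ^ 2 := by
      simp [dotProduct, sq]
    rw [h1, e2 x, sub_nonneg]
    exact key x
  -- ### trace inequality : T ≤ tS
  have htr : T ≤ tS := by
    have h0 : 0 ≤ (Sm * (1 - Sm)).trace :=
      trace_mul_nonneg_of_posSemidef hSpsd hISpsd
    have h1 : (Sm * (1 - Sm)).trace = Sm.trace - (Sm * Sm).trace := by
      rw [Matrix.mul_sub, Matrix.mul_one, Matrix.trace_sub]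
    have h2 : Sm.trace = tS := by
      rw [Matrix.trace, htS, ← Finset.sum_coe_sort s (fun i => ⟪w i, b i⟫)]
      rfl
    have h3 : (Sm * Sm).trace = T := by
      rw [Matrix.trace, hT,
        ← Finset.sum_coe_sort s (fun i => ∑ j ∈ s, ⟪w i, b j⟫ ^ 2)]
      refine Finset.sum_congr rfl fun i _ => ?_
      rw [Matrix.diag_apply, Matrix.mul_apply,
        ← Finset.sum_coe_sort s (fun j => ⟪w i.1, b j⟫ ^ 2)]
      refine Finset.sum_congr rfl fun j _ => ?_
      rw [hSm, sq]
      simp only []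
      rw [hw_sym j.1 j.2 i.1 i.2]
    rw [h1, h2, h3] at h0
    linarith
  -- ### Frobenius bound : T - 2 tS + J ≥ 0
  have hfro : 0 ≤ T - 2 * tS + J := by
    have hnn : 0 ≤ ∑ i ∈ s, ∑ j ∈ s,
        (⟪w i, b j⟫ - if i = j then (1:ℝ) else 0) ^ 2 :=
      Finset.sum_nonneg fun i _ => Finset.sum_nonneg fun j _ => sq_nonneg _
    have hper : ∀ i ∈ s, ∑ j ∈ s, (⟪w i, b j⟫ - if i = j then (1:ℝ) else 0) ^ 2
        = (∑ j ∈ s, ⟪w i, b j⟫ ^ 2) - 2 * ⟪w i, b i⟫ + 1 := by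
      intro i hi
      rw [Finset.sum_congr rfl (fun j _ => by
        show (⟪w i, b j⟫ - if i = j then (1:ℝ) else 0) ^ 2
          = ⟪w i, b j⟫ ^ 2 - 2 * (if i = j then ⟪w i, b j⟫ else 0)
            + (if i = j then (1:ℝ) else 0)
        split <;> ring)]
      rw [Finset.sum_add_distrib, Finset.sum_sub_distrib, ← Finset.mul_sum,
        Finset.sum_ite_eq, Finset.sum_ite_eq, if_pos hi, if_pos hi]
    rw [Finset.sum_congr rfl hper, Finset.sum_add_distrib,
      Finset.sum_sub_distrib, ← Finset.mul_sum] at hnn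
    simp only [Finset.sum_const, nsmul_eq_mul, mul_one] at hnn
    rw [hT, htS, hJ]
    linarith
  -- ### conclusion
  have hDnn : 0 ≤ 2 * J - 2 * tS := by
    rw [← hDeq]
    exact Finset.sum_nonneg fun i _ => sq_nonneg _
  have hHSnn : (0:ℝ) ≤ 2 * J - 2 * T := by linarith
  constructor
  · rw [hHS, hDeq]
    have heq : (1 / Real.sqrt 2) * Real.sqrt (2 * J - 2 * T)
        = Real.sqrt ((2 * J - 2 * T) / 2) := by
      rw [Real.sqrt_div hHSnn 2]
      ring
    rw [heq]
    apply Real.sqrt_le_sqrt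
    linarith
  · rw [hHS, hDeq]
    apply Real.sqrt_le_sqrt
    linarith
end

section
/- Assume λ_i ≤ λ_{ih} for i = m,…,M, and let (w_i)_{i=m}^{M} be an orthonormal family with span{w_m,…,w_M} = span{u_{mh},…,u_{Mh}} whose overlap matrix with (e_i) is symmetric and positive semidefinite, i.e. ⟨w_i,e_j⟩ = ⟨w_j,e_i⟩ for all i,j ∈ {m,…,M} and Σ_{i,j=m}^{M} c_i c_j ⟨w_i,e_j⟩ ≥ 0 for all reals (c_i) (these properties hold for the minimizer over orthogonal transformations of Σ_i ‖w_i − e_i‖²). Then (1/√2) ‖A^{1/2}(γ⁰ − γ_h)‖_{S2} ≤ (Σ_{i=m}^{M} ‖A^{1/2}(e_i − w_i)‖²)^{1/2} ≤ (1 + (λ_M/(4λ_m)) ‖γ⁰ − γ_h‖_{S2}²)^{1/2} ‖A^{1/2}(γ⁰ − γ_h)‖_{S2}; in particular (Σ_{i=m}^{M} ‖A^{1/2}(e_i − w_i)‖²)^{1/2} ≤ (1 + J λ_M/λ_m)^{1/2} ‖A^{1/2}(γ⁰ − γ_h)‖_{S2}. -/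
open scoped RealInnerProductSpace

set_option maxHeartbeats 1000000

section helpers
variable {H : Type*} [NormedAddCommGroup H] [InnerProductSpace ℝ H]

lemma abs_mul_le_half (x y : ℝ) : |x * y| ≤ (x ^ 2 + y ^ 2) / 2 := by
  rw [abs_mul]
  nlinarith [sq_nonneg (|x| - |y|), sq_abs x, sq_abs y, abs_nonneg x, abs_nonneg y]

lemma sum_cross (b : HilbertBasis ℕ ℝ H) (lam : ℕ → ℝ) (hlam : ∀ k, 0 ≤ lam k) {u v : H}
    (hu : Summable fun k => lam k * ⟪u, b k⟫ ^ 2) (hv : Summable fun k => lam k * ⟪v, b k⟫ ^ 2) :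
    Summable fun k => lam k * (⟪u, b k⟫ * ⟪v, b k⟫) := by
  have hb : Summable (fun k => (lam k * ⟪u, b k⟫ ^ 2 + lam k * ⟪v, b k⟫ ^ 2) / 2) :=
    (hu.add hv).div_const 2
  have hle : ∀ k, |lam k * (⟪u, b k⟫ * ⟪v, b k⟫)| ≤
      (lam k * ⟪u, b k⟫ ^ 2 + lam k * ⟪v, b k⟫ ^ 2) / 2 := by
    intro k
    rw [abs_mul, abs_of_nonneg (hlam k), ← mul_add, mul_div_assoc]
    exact mul_le_mul_of_nonneg_left (abs_mul_le_half _ _) (hlam k)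
  exact Summable.of_abs (Summable.of_nonneg_of_le (fun k => abs_nonneg _) hle hb)

lemma proj_fix (w : ℕ → H) (I : Finset ℕ)
    (horth : ∀ i ∈ I, ∀ j ∈ I, ⟪w i, w j⟫ = if i = j then 1 else 0)
    (x : H) (hx : x ∈ Submodule.span ℝ (w '' ↑I)) :
    ∑ j ∈ I, ⟪x, w j⟫ • w j = x := by
  induction hx using Submodule.span_induction with
  | mem y hy =>
    obtain ⟨i, hi, rfl⟩ := hy
    rw [Finset.mem_coe] at hi
    have : ∀ j ∈ I, ⟪w i, w j⟫ • w j = if j = i then w i else 0 := by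
      intro j hj
      rw [horth i hi j hj]
      by_cases h : i = j <;> simp [h, eq_comm]
    rw [Finset.sum_congr rfl this, Finset.sum_ite_eq' I i (fun _ => w i), if_pos hi]
  | zero => simp
  | add u v hu hv ihu ihv =>
    simp only [inner_add_left, add_smul, Finset.sum_add_distrib, ihu, ihv]
  | smul c u hu ihu =>
    simp only [real_inner_smul_left, mul_smul, ← Finset.smul_sum, ihu]

lemma inner_combo (w : ℕ → H) (I : Finset ℕ)
    (horth : ∀ i ∈ I, ∀ j ∈ I, ⟪w i, w j⟫ = if i = j then 1 else 0) (c : ℕ → ℝ) :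
    ⟪∑ i ∈ I, c i • w i, ∑ j ∈ I, c j • w j⟫ = ∑ i ∈ I, c i ^ 2 := by
  rw [sum_inner]
  apply Finset.sum_congr rfl
  intro i hi
  rw [real_inner_smul_left, inner_sum]
  have h1 : ∀ j ∈ I, ⟪w i, c j • w j⟫ = if j = i then c i else 0 := by
    intro j hj
    rw [real_inner_smul_right, horth i hi j hj]
    by_cases h : i = j <;> simp [h, eq_comm]
  rw [Finset.sum_congr rfl h1, Finset.sum_ite_eq' I i (fun _ => c i), if_pos hi]
  ring

lemma cs_psd (S : ℕ → ℕ → ℝ) (I : Finset ℕ)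
    (hsym : ∀ i ∈ I, ∀ j ∈ I, S i j = S j i)
    (hpsd : ∀ c : ℕ → ℝ, 0 ≤ ∑ i ∈ I, ∑ j ∈ I, c i * c j * S i j) (x y : ℕ → ℝ) :
    (∑ i ∈ I, ∑ j ∈ I, x i * y j * S i j) ^ 2 ≤
      (∑ i ∈ I, ∑ j ∈ I, x i * x j * S i j) * (∑ i ∈ I, ∑ j ∈ I, y i * y j * S i j) := by
  have hyx : ∑ i ∈ I, ∑ j ∈ I, y i * x j * S i j = ∑ i ∈ I, ∑ j ∈ I, x i * y j * S i j := by
    rw [Finset.sum_comm]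
    apply Finset.sum_congr rfl; intro i hi
    apply Finset.sum_congr rfl; intro j hj
    rw [hsym j hj i hi]; ring
  have key : ∀ t : ℝ, 0 ≤ (∑ i ∈ I, ∑ j ∈ I, y i * y j * S i j) * (t * t) +
      (2 * ∑ i ∈ I, ∑ j ∈ I, x i * y j * S i j) * t + ∑ i ∈ I, ∑ j ∈ I, x i * x j * S i j := by
    intro t
    have h := hpsd (fun i => x i + t * y i)
    have e1 : ∀ i ∈ I, ∑ j ∈ I, (x i + t * y i) * (x j + t * y j) * S i j
        = ∑ j ∈ I, (x i * x j * S i j + t * (x i * y j * S i j) + t * (y i * x j * S i j)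
            + (t * t) * (y i * y j * S i j)) := by
      intro i _
      apply Finset.sum_congr rfl; intro j _; ring
    rw [Finset.sum_congr rfl e1] at h
    simp only [Finset.sum_add_distrib, ← Finset.mul_sum] at h
    rw [hyx] at h
    nlinarith [h]
  have hd := discrim_le_zero key
  rw [discrim] at hd
  nlinarith [hd]

end helpers


/-- 0-based indexing; `J = M − m + 1`: equivalence between the energy norm of
the density matrix error and the energy norm of the eigenvector errors for the well-aligned
orthonormal family `(w_i)`. -/
theorem stmt_7
    {H : Type*} [NormedAddCommGroup H] [InnerProductSpace ℝ H] [CompleteSpace H]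
    (b : HilbertBasis ℕ ℝ H)
    (lam : ℕ → ℝ) (hlam_pos : ∀ k, 0 < lam k) (hlam_mono : Monotone lam)
    (hlam_tendsto : Filter.Tendsto lam Filter.atTop Filter.atTop)
    (m M : ℕ) (hmM : m ≤ M)
    (Vh : Submodule ℝ H) (hVh_fin : FiniteDimensional ℝ Vh)
    (hVh_dom : ∀ v ∈ Vh, Summable fun k => lam k * ⟪v, b k⟫ ^ 2)
    (uh : ℕ → H) (lamh : ℕ → ℝ)
    (huh_mem : ∀ i ∈ Finset.Icc m M, uh i ∈ Vh)
    (huh_orth : ∀ i ∈ Finset.Icc m M, ∀ j ∈ Finset.Icc m M,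
      ⟪uh i, uh j⟫ = if i = j then 1 else 0)
    (hlamh_mono : ∀ i ∈ Finset.Icc m M, ∀ j ∈ Finset.Icc m M, i ≤ j → lamh i ≤ lamh j)
    (heig_h : ∀ i ∈ Finset.Icc m M, ∀ v ∈ Vh,
      (∑' k, lam k * (⟪uh i, b k⟫ * ⟪v, b k⟫)) = lamh i * ⟪uh i, v⟫)
    (g0 gh : H → H)
    (hg0 : ∀ w, g0 w = ∑ i ∈ Finset.Icc m M, ⟪w, b i⟫ • b i)
    (hgh : ∀ w, gh w = ∑ i ∈ Finset.Icc m M, ⟪w, uh i⟫ • uh i)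
    (hconf : ∀ i ∈ Finset.Icc m M, lam i ≤ lamh i)
    (w : ℕ → H)
    (hw_orth : ∀ i ∈ Finset.Icc m M, ∀ j ∈ Finset.Icc m M,
      ⟪w i, w j⟫ = if i = j then 1 else 0)
    (hw_span : Submodule.span ℝ (w '' Set.Icc m M)
      = Submodule.span ℝ (uh '' Set.Icc m M))
    (hw_sym : ∀ i ∈ Finset.Icc m M, ∀ j ∈ Finset.Icc m M, ⟪w i, b j⟫ = ⟪w j, b i⟫)
    (hw_psd : ∀ c : ℕ → ℝ,
      0 ≤ ∑ i ∈ Finset.Icc m M, ∑ j ∈ Finset.Icc m M, c i * c j * ⟪w i, b j⟫)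
    (ESq : ℝ)
    (hESq : ESq = ∑' k, ∑' j, lam j * ⟪g0 (b k) - gh (b k), b j⟫ ^ 2)
    (L2sq : ℝ) (hL2sq : L2sq = ∑' k, ‖g0 (b k) - gh (b k)‖ ^ 2)
    (Wsq : ℝ)
    (hWsq : Wsq = ∑ i ∈ Finset.Icc m M, ∑' k, lam k * ⟪b i - w i, b k⟫ ^ 2) :
    (1 / Real.sqrt 2) * Real.sqrt ESq ≤ Real.sqrt Wsq ∧
    Real.sqrt Wsq ≤ Real.sqrt (1 + lam M / (4 * lam m) * L2sq) * Real.sqrt ESq ∧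
    Real.sqrt Wsq ≤ Real.sqrt (1 + ((M - m + 1 : ℕ) : ℝ) * lam M / lam m) * Real.sqrt ESq := by
  classical
  set I := Finset.Icc m M with hI
  have hlam0 : ∀ k, 0 ≤ lam k := fun k => (hlam_pos k).le
  have hbij : ∀ i j : ℕ, ⟪b i, b j⟫ = (if i = j then (1:ℝ) else 0) := by
    have h := b.orthonormal
    rw [orthonormal_iff_ite] at h
    exact h
  have hspan' : Submodule.span ℝ (w '' ↑I) = Submodule.span ℝ (uh '' ↑I) := by
    rw [hI, Finset.coe_Icc]; exact hw_span
  have hwspan : ∀ j ∈ I, w j ∈ Submodule.span ℝ (w '' ↑I) := fun j hj =>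
    Submodule.subset_span ⟨j, Finset.mem_coe.mpr hj, rfl⟩
  have huspan : ∀ i ∈ I, uh i ∈ Submodule.span ℝ (uh '' ↑I) := fun i hi =>
    Submodule.subset_span ⟨i, Finset.mem_coe.mpr hi, rfl⟩
  have hVh_span : Submodule.span ℝ (uh '' ↑I) ≤ Vh := by
    rw [Submodule.span_le]
    rintro _ ⟨i, hi, rfl⟩
    exact huh_mem i (Finset.mem_coe.mp hi)
  have hwVh : ∀ j ∈ I, w j ∈ Vh := fun j hj => hVh_span (hspan' ▸ hwspan j hj)
  have hw_exp : ∀ j ∈ I, ∑ i ∈ I, ⟪w j, uh i⟫ • uh i = w j := fun j hj =>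
    proj_fix uh I huh_orth _ (hspan' ▸ hwspan j hj)
  have hu_exp : ∀ l ∈ I, ∑ j ∈ I, ⟪uh l, w j⟫ • w j = uh l := fun l hl =>
    proj_fix w I hw_orth _ (hspan'.symm ▸ huspan l hl)
  have Sww : ∀ j ∈ I, Summable (fun k => lam k * ⟪w j, b k⟫ ^ 2) := fun j hj =>
    hVh_dom _ (hwVh j hj)
  have Sbb : ∀ i : ℕ, Summable (fun k => lam k * ⟪b i, b k⟫ ^ 2) := by
    intro i
    apply summable_of_ne_finset_zero (s := {i})
    intro k hk
    rw [Finset.mem_singleton] at hk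
    rw [hbij i k, if_neg (fun h => hk h.symm)]
    simp
  -- gh expressed via w family
  have ghw : ∀ v : H, gh v = ∑ j ∈ I, ⟪v, w j⟫ • w j := by
    intro v
    rw [hgh v]
    have e1 : ∀ i ∈ I, ⟪v, uh i⟫ • uh i = ∑ j ∈ I, (⟪v, uh i⟫ * ⟪uh i, w j⟫) • w j := by
      intro i hi
      calc ⟪v, uh i⟫ • uh i = ⟪v, uh i⟫ • (∑ j ∈ I, ⟪uh i, w j⟫ • w j) := by
            rw [hu_exp i hi]
        _ = ∑ j ∈ I, (⟪v, uh i⟫ * ⟪uh i, w j⟫) • w j := by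
            rw [Finset.smul_sum]; simp only [smul_smul]
    rw [Finset.sum_congr rfl e1, Finset.sum_comm]
    apply Finset.sum_congr rfl
    intro j hj
    rw [← Finset.sum_smul]
    congr 1
    conv_rhs => rw [← hw_exp j hj]
    rw [inner_sum]
    apply Finset.sum_congr rfl
    intro i hi
    rw [real_inner_smul_right, real_inner_comm (uh i) (w j)]
    ring
  -- Wsq identity
  have Wid : Wsq = (∑ i ∈ I, lam i) - 2 * (∑ i ∈ I, lam i * ⟪w i, b i⟫)
      + ∑ i ∈ I, (∑' k, lam k * ⟪w i, b k⟫ ^ 2) := by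
    have e : ∀ i ∈ I, (∑' k, lam k * ⟪b i - w i, b k⟫ ^ 2)
        = (lam i - 2 * (lam i * ⟪w i, b i⟫)) + ∑' k, lam k * ⟪w i, b k⟫ ^ 2 := by
      intro i hi
      have h1 : Summable (fun k => lam k * ⟪b i, b k⟫ ^ 2) := Sbb i
      have h2 : Summable (fun k => lam k * (⟪b i, b k⟫ * ⟪w i, b k⟫)) :=
        sum_cross b lam hlam0 (Sbb i) (Sww i hi)
      have h3 : Summable (fun k => lam k * ⟪w i, b k⟫ ^ 2) := Sww i hi
      have hpt : ∀ k, lam k * ⟪b i - w i, b k⟫ ^ 2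
          = (lam k * ⟪b i, b k⟫ ^ 2 - 2 * (lam k * (⟪b i, b k⟫ * ⟪w i, b k⟫)))
            + lam k * ⟪w i, b k⟫ ^ 2 := by
        intro k
        rw [inner_sub_left]
        ring
      rw [tsum_congr hpt, Summable.tsum_add (h1.sub (h2.mul_left 2)) h3,
        Summable.tsum_sub h1 (h2.mul_left 2), tsum_mul_left]
      have t1 : (∑' k, lam k * ⟪b i, b k⟫ ^ 2) = lam i := by
        rw [tsum_eq_single i (by
          intro k hk
          rw [hbij i k, if_neg (fun h => hk h.symm)]
          simp)]
        rw [hbij i i, if_pos rfl]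
        norm_num
      have t2 : (∑' k, lam k * (⟪b i, b k⟫ * ⟪w i, b k⟫)) = lam i * ⟪w i, b i⟫ := by
        rw [tsum_eq_single i (by
          intro k hk
          rw [hbij i k, if_neg (fun h => hk h.symm)]
          simp)]
        rw [hbij i i, if_pos rfl, one_mul]
      rw [t1, t2]
    rw [hWsq, Finset.sum_congr rfl e, Finset.sum_add_distrib, Finset.sum_sub_distrib,
      ← Finset.mul_sum]
  have ghbVh : ∀ k, gh (b k) ∈ Vh := by
    intro k
    rw [ghw]
    exact Submodule.sum_mem _ (fun j hj => Submodule.smul_mem _ _ (hwVh j hj))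
  have ghb_inner : ∀ k l : ℕ, ⟪gh (b k), b l⟫ = ∑ j ∈ I, ⟪w j, b k⟫ * ⟪w j, b l⟫ := by
    intro k l
    rw [ghw, sum_inner]
    apply Finset.sum_congr rfl
    intro j hj
    rw [real_inner_smul_left, real_inner_comm (b k) (w j)]
  have g0b_inner : ∀ k l : ℕ, ⟪g0 (b k), b l⟫ = if k ∈ I ∧ l = k then 1 else 0 := by
    intro k l
    rw [hg0, sum_inner]
    have e : ∀ i ∈ I, ⟪(⟪b k, b i⟫ : ℝ) • b i, b l⟫
        = if i = k then (if l = k then (1:ℝ) else 0) else 0 := by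
      intro i hi
      rw [real_inner_smul_left, hbij k i, hbij i l]
      by_cases h1 : i = k
      · by_cases h2 : l = k
        · rw [if_pos h1, if_pos h2, if_pos (h1.symm), if_pos (by rw [h1, h2]), one_mul]
        · rw [if_pos h1, if_neg h2, if_pos (h1.symm), if_neg (by rw [h1]; exact fun h => h2 h.symm), one_mul]
      · rw [if_neg (fun h : k = i => h1 h.symm), if_neg h1, zero_mul]
    rw [Finset.sum_congr rfl e, Finset.sum_ite_eq' I k (fun _ => if l = k then (1:ℝ) else 0)]
    by_cases hk : k ∈ I <;> by_cases hl : l = k <;> simp [hk, hl]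
  have SummG : ∀ k, Summable (fun l => lam l * ⟪gh (b k), b l⟫ ^ 2) := fun k =>
    hVh_dom _ (ghbVh k)
  have Fid : ∀ k, (∑' l, lam l * ⟪g0 (b k) - gh (b k), b l⟫ ^ 2)
      = (((if k ∈ I then lam k else 0) - 2 * (if k ∈ I then lam k * ⟪gh (b k), b k⟫ else 0))
        + ∑' l, lam l * ⟪gh (b k), b l⟫ ^ 2) := by
    intro k
    have h1 : Summable (fun l => lam l * (if k ∈ I ∧ l = k then (1:ℝ) else 0) ^ 2) := by
      apply summable_of_ne_finset_zero (s := {k})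
      intro l hl
      rw [Finset.mem_singleton] at hl
      simp [hl]
    have h2 : Summable (fun l => lam l * ((if k ∈ I ∧ l = k then (1:ℝ) else 0) * ⟪gh (b k), b l⟫)) := by
      apply summable_of_ne_finset_zero (s := {k})
      intro l hl
      rw [Finset.mem_singleton] at hl
      simp [hl]
    have h3 := SummG k
    have hpt : ∀ l, lam l * ⟪g0 (b k) - gh (b k), b l⟫ ^ 2
        = (lam l * (if k ∈ I ∧ l = k then (1:ℝ) else 0) ^ 2
            - 2 * (lam l * ((if k ∈ I ∧ l = k then (1:ℝ) else 0) * ⟪gh (b k), b l⟫)))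
          + lam l * ⟪gh (b k), b l⟫ ^ 2 := by
      intro l
      rw [inner_sub_left, g0b_inner]
      ring
    rw [tsum_congr hpt, Summable.tsum_add (h1.sub (h2.mul_left 2)) h3, Summable.tsum_sub h1 (h2.mul_left 2),
      tsum_mul_left]
    have t1 : (∑' l, lam l * (if k ∈ I ∧ l = k then (1:ℝ) else 0) ^ 2)
        = if k ∈ I then lam k else 0 := by
      rw [tsum_eq_single k (by intro l hl; simp [hl])]
      by_cases hk : k ∈ I <;> simp [hk]
    have t2 : (∑' l, lam l * ((if k ∈ I ∧ l = k then (1:ℝ) else 0) * ⟪gh (b k), b l⟫))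
        = if k ∈ I then lam k * ⟪gh (b k), b k⟫ else 0 := by
      rw [tsum_eq_single k (by intro l hl; simp [hl])]
      by_cases hk : k ∈ I <;> simp [hk]
    rw [t1, t2]
  have aaB : ∀ j ∈ I, ∀ j' ∈ I, Summable (fun l => lam l * (⟪w j, b l⟫ * ⟪w j', b l⟫)) :=
    fun j hj j' hj' => sum_cross b lam hlam0 (Sww j hj) (Sww j' hj')
  have Gexp : ∀ k, (∑' l, lam l * ⟪gh (b k), b l⟫ ^ 2)
      = ∑ j ∈ I, ∑ j' ∈ I, (⟪w j, b k⟫ * ⟪w j', b k⟫)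
          * (∑' l, lam l * (⟪w j, b l⟫ * ⟪w j', b l⟫)) := by
    intro k
    have hpt : ∀ l, lam l * ⟪gh (b k), b l⟫ ^ 2
        = ∑ j ∈ I, ∑ j' ∈ I, (⟪w j, b k⟫ * ⟪w j', b k⟫)
            * (lam l * (⟪w j, b l⟫ * ⟪w j', b l⟫)) := by
      intro l
      rw [ghb_inner k l, sq, Finset.sum_mul_sum, Finset.mul_sum]
      apply Finset.sum_congr rfl
      intro j _
      rw [Finset.mul_sum]
      apply Finset.sum_congr rfl
      intro j' _
      ring
    rw [tsum_congr hpt,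
      Summable.tsum_finsetSum (fun j hj => summable_sum (fun j' hj' => ((aaB j hj j' hj').mul_left _)))]
    apply Finset.sum_congr rfl
    intro j hj
    rw [Summable.tsum_finsetSum (fun j' hj' => ((aaB j hj j' hj').mul_left _))]
    apply Finset.sum_congr rfl
    intro j' hj'
    exact tsum_mul_left
  have Sinner : ∀ j j' : ℕ, Summable (fun k => ⟪w j, b k⟫ * ⟪w j', b k⟫) := by
    intro j j'
    have h := b.summable_inner_mul_inner (w j) (w j')
    exact h.congr (fun k => by rw [real_inner_comm (b k) (w j')])
  have tinner : ∀ j j' : ℕ, (∑' k, ⟪w j, b k⟫ * ⟪w j', b k⟫) = ⟪w j, w j'⟫ := by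
    intro j j'
    rw [← b.tsum_inner_mul_inner (w j) (w j')]
    exact tsum_congr (fun k => by rw [real_inner_comm (b k) (w j')])
  have SummGk : Summable (fun k => ∑' l, lam l * ⟪gh (b k), b l⟫ ^ 2) := by
    apply Summable.congr _ (fun k => (Gexp k).symm)
    apply summable_sum
    intro j hj
    apply summable_sum
    intro j' hj'
    exact (Sinner j j').mul_right _
  have sumGk : (∑' k, ∑' l, lam l * ⟪gh (b k), b l⟫ ^ 2)
      = ∑ j ∈ I, (∑' l, lam l * ⟪w j, b l⟫ ^ 2) := by
    rw [tsum_congr Gexp,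
      Summable.tsum_finsetSum (fun j hj => summable_sum (fun j' hj' => ((Sinner j j').mul_right _)))]
    have e1 : ∀ j ∈ I, (∑' k, ∑ j' ∈ I, (⟪w j, b k⟫ * ⟪w j', b k⟫)
        * (∑' l, lam l * (⟪w j, b l⟫ * ⟪w j', b l⟫)))
        = ∑ j' ∈ I, (if j = j' then (1:ℝ) else 0) * (∑' l, lam l * (⟪w j, b l⟫ * ⟪w j', b l⟫)) := by
      intro j hj
      rw [Summable.tsum_finsetSum (fun j' hj' => ((Sinner j j').mul_right _))]
      apply Finset.sum_congr rfl
      intro j' hj'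
      rw [tsum_mul_right, tinner, hw_orth j hj j' hj']
    rw [Finset.sum_congr rfl e1]
    apply Finset.sum_congr rfl
    intro j hj
    have e2 : ∀ j' ∈ I, (if j = j' then (1:ℝ) else 0) * (∑' l, lam l * (⟪w j, b l⟫ * ⟪w j', b l⟫))
        = if j' = j then (∑' l, lam l * (⟪w j, b l⟫ * ⟪w j', b l⟫)) else 0 := by
      intro j' hj'
      by_cases h : j = j' <;> simp [h, eq_comm]
    rw [Finset.sum_congr rfl e2, Finset.sum_ite_eq' I j, if_pos hj]
    exact tsum_congr (fun l => by rw [sq])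
  have Eid : ESq = (∑ k ∈ I, lam k) - 2 * (∑ k ∈ I, lam k * ∑ j ∈ I, ⟪w j, b k⟫ ^ 2)
      + ∑ j ∈ I, (∑' l, lam l * ⟪w j, b l⟫ ^ 2) := by
    have h1 : Summable (fun k => if k ∈ I then lam k else 0) :=
      summable_of_ne_finset_zero (s := I) (fun k hk => by simp [hk])
    have h2 : Summable (fun k => if k ∈ I then lam k * ⟪gh (b k), b k⟫ else 0) :=
      summable_of_ne_finset_zero (s := I) (fun k hk => by simp [hk])
    rw [hESq, tsum_congr Fid, Summable.tsum_add (h1.sub (h2.mul_left 2)) SummGk,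
      Summable.tsum_sub h1 (h2.mul_left 2), tsum_mul_left, sumGk]
    have t1 : (∑' k, if k ∈ I then lam k else 0) = ∑ k ∈ I, lam k := by
      rw [tsum_eq_sum (s := I) (fun k hk => by simp [hk])]
      exact Finset.sum_congr rfl (fun k hk => by simp [hk])
    have t2 : (∑' k, if k ∈ I then lam k * ⟪gh (b k), b k⟫ else 0)
        = ∑ k ∈ I, lam k * ∑ j ∈ I, ⟪w j, b k⟫ ^ 2 := by
      rw [tsum_eq_sum (s := I) (fun k hk => by simp [hk])]
      apply Finset.sum_congr rfl
      intro k hk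
      rw [if_pos hk, ghb_inner k k]
      congr 1
      exact Finset.sum_congr rfl (fun j hj => by rw [sq])
    rw [t1, t2]
  -- a(w j, w j) via discrete eigenpairs
  have aaUU : ∀ l ∈ I, ∀ l' ∈ I, (∑' k, lam k * (⟪uh l, b k⟫ * ⟪uh l', b k⟫))
      = if l = l' then lamh l else 0 := by
    intro l hl l' hl'
    rw [heig_h l hl (uh l') (huh_mem l' hl'), huh_orth l hl l' hl']
    by_cases h : l = l' <;> simp [h]
  have SummU : ∀ l ∈ I, ∀ l' ∈ I, Summable (fun k => lam k * (⟪uh l, b k⟫ * ⟪uh l', b k⟫)) :=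
    fun l hl l' hl' =>
      sum_cross b lam hlam0 (hVh_dom _ (huh_mem l hl)) (hVh_dom _ (huh_mem l' hl'))
  have aaW : ∀ j ∈ I, (∑' k, lam k * ⟪w j, b k⟫ ^ 2) = ∑ l ∈ I, lamh l * ⟪w j, uh l⟫ ^ 2 := by
    intro j hj
    have hwj : ∀ k, ⟪w j, b k⟫ = ∑ l ∈ I, ⟪w j, uh l⟫ * ⟪uh l, b k⟫ := by
      intro k
      conv_lhs => rw [← hw_exp j hj]
      rw [sum_inner]
      exact Finset.sum_congr rfl (fun l hl => by rw [real_inner_smul_left])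
    have hpt : ∀ k, lam k * ⟪w j, b k⟫ ^ 2
        = ∑ l ∈ I, ∑ l' ∈ I, (⟪w j, uh l⟫ * ⟪w j, uh l'⟫)
            * (lam k * (⟪uh l, b k⟫ * ⟪uh l', b k⟫)) := by
      intro k
      rw [hwj k, sq, Finset.sum_mul_sum, Finset.mul_sum]
      apply Finset.sum_congr rfl
      intro l _
      rw [Finset.mul_sum]
      apply Finset.sum_congr rfl
      intro l' _
      ring
    rw [tsum_congr hpt,
      Summable.tsum_finsetSum (fun l hl => summable_sum (fun l' hl' => ((SummU l hl l' hl').mul_left _)))]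
    apply Finset.sum_congr rfl
    intro l hl
    rw [Summable.tsum_finsetSum (fun l' hl' => ((SummU l hl l' hl').mul_left _))]
    have e2 : ∀ l' ∈ I, (∑' k, (⟪w j, uh l⟫ * ⟪w j, uh l'⟫) * (lam k * (⟪uh l, b k⟫ * ⟪uh l', b k⟫)))
        = if l' = l then (⟪w j, uh l⟫ * ⟪w j, uh l'⟫) * lamh l else 0 := by
      intro l' hl'
      rw [tsum_mul_left, aaUU l hl l' hl']
      by_cases h : l = l' <;> simp [h, eq_comm]
    rw [Finset.sum_congr rfl e2, Finset.sum_ite_eq' I l, if_pos hl]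
    ring
  have colsum : ∀ l ∈ I, ∑ j ∈ I, ⟪w j, uh l⟫ ^ 2 = 1 := by
    intro l hl
    have h := inner_combo w I hw_orth (fun j => ⟪uh l, w j⟫)
    rw [hu_exp l hl, huh_orth l hl l hl, if_pos rfl] at h
    rw [← h.symm]
    exact Finset.sum_congr rfl (fun j hj => by rw [real_inner_comm (w j) (uh l)])
  have Tge : (∑ k ∈ I, lam k) ≤ ∑ j ∈ I, (∑' l, lam l * ⟪w j, b l⟫ ^ 2) := by
    have e : ∑ j ∈ I, (∑' l, lam l * ⟪w j, b l⟫ ^ 2) = ∑ l ∈ I, lamh l := by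
      rw [Finset.sum_congr rfl aaW, Finset.sum_comm]
      apply Finset.sum_congr rfl
      intro l hl
      rw [← Finset.mul_sum, colsum l hl, mul_one]
    rw [e]
    exact Finset.sum_le_sum (fun l hl => hconf l hl)
  -- contraction property of the overlap matrix
  have hbij' : ∀ i ∈ I, ∀ j ∈ I, ⟪b i, b j⟫ = if i = j then (1:ℝ) else 0 :=
    fun i _ j _ => hbij i j
  have hcontr : ∀ c : ℕ → ℝ,
      (∑ i ∈ I, ∑ j ∈ I, c i * c j * ⟪w i, b j⟫) ≤ ∑ i ∈ I, (c i) ^ 2 := by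
    intro c
    have e : ∑ i ∈ I, ∑ j ∈ I, c i * c j * ⟪w i, b j⟫
        = ⟪∑ i ∈ I, c i • w i, ∑ j ∈ I, c j • b j⟫ := by
      rw [sum_inner]
      apply Finset.sum_congr rfl
      intro i hi
      rw [real_inner_smul_left, inner_sum, Finset.mul_sum]
      apply Finset.sum_congr rfl
      intro j hj
      rw [real_inner_smul_right]
      ring
    have h1 : ⟪∑ i ∈ I, c i • w i, ∑ j ∈ I, c j • w j⟫ = ∑ i ∈ I, (c i) ^ 2 :=
      inner_combo w I hw_orth c
    have h2 : ⟪∑ i ∈ I, c i • (b i : H), ∑ j ∈ I, c j • (b j : H)⟫ = ∑ i ∈ I, (c i) ^ 2 :=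
      inner_combo (fun i => b i) I hbij' c
    have hn1 : ‖∑ i ∈ I, c i • w i‖ ^ 2 = ∑ i ∈ I, (c i) ^ 2 := by
      rw [← real_inner_self_eq_norm_sq]; exact h1
    have hn2 : ‖∑ i ∈ I, c i • (b i : H)‖ ^ 2 = ∑ i ∈ I, (c i) ^ 2 := by
      rw [← real_inner_self_eq_norm_sq]; exact h2
    have hb' := real_inner_le_norm (∑ i ∈ I, c i • w i) (∑ j ∈ I, c j • (b j : H))
    rw [e]
    nlinarith [norm_nonneg (∑ i ∈ I, c i • w i), norm_nonneg (∑ j ∈ I, c j • (b j : H)),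
      hn1, hn2, hb']
  -- diagonal inequality : column sums of squares dominated by diagonal entry
  have diag_le : ∀ k ∈ I, ∑ j ∈ I, ⟪w j, b k⟫ ^ 2 ≤ ⟪w k, b k⟫ := by
    intro k hk
    have hcs := cs_psd (fun i j => ⟪w i, b j⟫) I hw_sym hw_psd
      (fun i => if i = k then 1 else 0) (fun j => ⟪w j, b k⟫)
    have exy : ∑ i ∈ I, ∑ j ∈ I, (if i = k then (1:ℝ) else 0) * ⟪w j, b k⟫ * ⟪w i, b j⟫
        = ∑ j ∈ I, ⟪w j, b k⟫ ^ 2 := by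
      have e1 : ∀ i ∈ I, ∑ j ∈ I, (if i = k then (1:ℝ) else 0) * ⟪w j, b k⟫ * ⟪w i, b j⟫
          = if i = k then ∑ j ∈ I, ⟪w j, b k⟫ * ⟪w i, b j⟫ else 0 := by
        intro i hi
        by_cases h : i = k
        · rw [if_pos h, if_pos h]
          exact Finset.sum_congr rfl (fun j hj => by rw [one_mul])
        · rw [if_neg h, if_neg h, Finset.sum_eq_zero (fun j hj => by rw [zero_mul, zero_mul])]
      rw [Finset.sum_congr rfl e1, Finset.sum_ite_eq' I k, if_pos hk]
      apply Finset.sum_congr rfl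
      intro j hj
      rw [hw_sym k hk j hj, sq]
    have exx : ∑ i ∈ I, ∑ j ∈ I, (if i = k then (1:ℝ) else 0) * (if j = k then (1:ℝ) else 0)
        * ⟪w i, b j⟫ = ⟪w k, b k⟫ := by
      have e1 : ∀ i ∈ I, ∑ j ∈ I, (if i = k then (1:ℝ) else 0) * (if j = k then (1:ℝ) else 0)
          * ⟪w i, b j⟫ = if i = k then ⟪w i, b k⟫ else 0 := by
        intro i hi
        by_cases h : i = k
        · rw [if_pos h, if_pos h]
          have : ∀ j ∈ I, (1:ℝ) * (if j = k then (1:ℝ) else 0) * ⟪w i, b j⟫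
              = if j = k then ⟪w i, b j⟫ else 0 := by
            intro j hj
            by_cases h2 : j = k <;> simp [h2]
          rw [Finset.sum_congr rfl this, Finset.sum_ite_eq' I k, if_pos hk]
        · rw [if_neg h, if_neg h, Finset.sum_eq_zero (fun j hj => by rw [zero_mul, zero_mul])]
      rw [Finset.sum_congr rfl e1, Finset.sum_ite_eq' I k, if_pos hk]
    have hyy_le : ∑ i ∈ I, ∑ j ∈ I, ⟪w i, b k⟫ * ⟪w j, b k⟫ * ⟪w i, b j⟫
        ≤ ∑ j ∈ I, ⟪w j, b k⟫ ^ 2 := by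
      have := hcontr (fun j => ⟪w j, b k⟫)
      calc ∑ i ∈ I, ∑ j ∈ I, ⟪w i, b k⟫ * ⟪w j, b k⟫ * ⟪w i, b j⟫
          ≤ ∑ i ∈ I, (⟪w i, b k⟫) ^ 2 := this
        _ = ∑ j ∈ I, ⟪w j, b k⟫ ^ 2 := rfl
    have ht2nn : (0:ℝ) ≤ ∑ j ∈ I, ⟪w j, b k⟫ ^ 2 :=
      Finset.sum_nonneg (fun j _ => sq_nonneg _)
    have ht1nn : (0:ℝ) ≤ ⟪w k, b k⟫ := by
      have := hw_psd (fun i => if i = k then 1 else 0)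
      rw [exx] at this
      exact this
    rw [exy, exx] at hcs
    rcases eq_or_lt_of_le ht2nn with h0 | h0
    · rw [← h0]; exact ht1nn
    · have h3 : (∑ j ∈ I, ⟪w j, b k⟫ ^ 2) ^ 2 ≤ ⟪w k, b k⟫ * (∑ j ∈ I, ⟪w j, b k⟫ ^ 2) := by
        calc (∑ j ∈ I, ⟪w j, b k⟫ ^ 2) ^ 2
            ≤ ⟪w k, b k⟫ * (∑ i ∈ I, ∑ j ∈ I, ⟪w i, b k⟫ * ⟪w j, b k⟫ * ⟪w i, b j⟫) := hcs
          _ ≤ ⟪w k, b k⟫ * (∑ j ∈ I, ⟪w j, b k⟫ ^ 2) :=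
              mul_le_mul_of_nonneg_left hyy_le ht1nn
      nlinarith [h3, h0]
  -- W ≤ E
  have hWE : Wsq ≤ ESq := by
    rw [Wid, Eid]
    have h : ∑ k ∈ I, lam k * ∑ j ∈ I, ⟪w j, b k⟫ ^ 2 ≤ ∑ k ∈ I, lam k * ⟪w k, b k⟫ :=
      Finset.sum_le_sum (fun k hk => mul_le_mul_of_nonneg_left (diag_le k hk) (hlam0 k))
    linarith
  -- E ≤ 2 W
  have hEW : ESq ≤ 2 * Wsq := by
    rw [Wid, Eid]
    have key : ∀ k ∈ I, (0:ℝ) ≤ lam k * (1 - 2 * ⟪w k, b k⟫ + ∑ j ∈ I, ⟪w j, b k⟫ ^ 2) := by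
      intro k hk
      apply mul_nonneg (hlam0 k)
      have e : ∑ j ∈ I, ((if j = k then (1:ℝ) else 0) - ⟪w j, b k⟫) ^ 2
          = 1 - 2 * ⟪w k, b k⟫ + ∑ j ∈ I, ⟪w j, b k⟫ ^ 2 := by
        have e1 : ∀ j ∈ I, ((if j = k then (1:ℝ) else 0) - ⟪w j, b k⟫) ^ 2
            = ((if j = k then (1:ℝ) else 0) - 2 * (if j = k then ⟪w j, b k⟫ else 0))
              + ⟪w j, b k⟫ ^ 2 := by
          intro j _
          by_cases h : j = k
          · rw [if_pos h, if_pos h]; ring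
          · rw [if_neg h, if_neg h]; ring
        rw [Finset.sum_congr rfl e1, Finset.sum_add_distrib, Finset.sum_sub_distrib,
          Finset.sum_ite_eq' I k (fun _ => (1:ℝ)), if_pos hk, ← Finset.mul_sum,
          Finset.sum_ite_eq' I k (fun j => ⟪w j, b k⟫), if_pos hk]
      rw [← e]
      exact Finset.sum_nonneg (fun j _ => sq_nonneg _)
    have pos : (0:ℝ) ≤ ∑ k ∈ I, lam k * (1 - 2 * ⟪w k, b k⟫ + ∑ j ∈ I, ⟪w j, b k⟫ ^ 2) :=
      Finset.sum_nonneg key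
    have expand : ∑ k ∈ I, lam k * (1 - 2 * ⟪w k, b k⟫ + ∑ j ∈ I, ⟪w j, b k⟫ ^ 2)
        = (∑ k ∈ I, lam k) - 2 * (∑ k ∈ I, lam k * ⟪w k, b k⟫)
          + ∑ k ∈ I, lam k * ∑ j ∈ I, ⟪w j, b k⟫ ^ 2 := by
      have e2 : ∀ k ∈ I, lam k * (1 - 2 * ⟪w k, b k⟫ + ∑ j ∈ I, ⟪w j, b k⟫ ^ 2)
          = (lam k - 2 * (lam k * ⟪w k, b k⟫)) + lam k * ∑ j ∈ I, ⟪w j, b k⟫ ^ 2 := by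
        intro k _; ring
      rw [Finset.sum_congr rfl e2, Finset.sum_add_distrib, Finset.sum_sub_distrib,
        ← Finset.mul_sum]
    rw [expand] at pos
    linarith [Tge, pos]
  -- nonnegativity
  have hE0 : (0:ℝ) ≤ ESq := by
    rw [hESq]
    exact tsum_nonneg (fun k => tsum_nonneg (fun l => mul_nonneg (hlam0 l) (sq_nonneg _)))
  have hW0 : (0:ℝ) ≤ Wsq := by
    rw [hWsq]
    exact Finset.sum_nonneg (fun i _ =>
      tsum_nonneg (fun k => mul_nonneg (hlam0 k) (sq_nonneg _)))
  have hL0 : (0:ℝ) ≤ L2sq := by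
    rw [hL2sq]
    exact tsum_nonneg (fun k => sq_nonneg _)
  have gen1 : ∀ z : ℝ, 1 ≤ z → 1 ≤ Real.sqrt z := by
    intro z hz
    nlinarith [Real.sq_sqrt (by linarith : (0:ℝ) ≤ z), Real.sqrt_nonneg z]
  have hWEs : Real.sqrt Wsq ≤ Real.sqrt ESq := Real.sqrt_le_sqrt hWE
  refine ⟨?_, ?_, ?_⟩
  · have h2 : Real.sqrt ESq ≤ Real.sqrt 2 * Real.sqrt Wsq := by
      rw [← Real.sqrt_mul (by norm_num : (0:ℝ) ≤ 2)]
      exact Real.sqrt_le_sqrt hEW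
    have hs2 : (0:ℝ) < Real.sqrt 2 := Real.sqrt_pos.mpr (by norm_num)
    rw [div_mul_eq_mul_div, one_mul, div_le_iff₀ hs2, mul_comm]
    exact h2
  · have hc : (0:ℝ) ≤ lam M / (4 * lam m) * L2sq :=
      mul_nonneg (div_nonneg (hlam0 M) (by linarith [hlam_pos m])) hL0
    calc Real.sqrt Wsq ≤ Real.sqrt ESq := hWEs
      _ = 1 * Real.sqrt ESq := (one_mul _).symm
      _ ≤ Real.sqrt (1 + lam M / (4 * lam m) * L2sq) * Real.sqrt ESq :=
          mul_le_mul_of_nonneg_right (gen1 _ (by linarith)) (Real.sqrt_nonneg _)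
  · have hc : (0:ℝ) ≤ ((M - m + 1 : ℕ) : ℝ) * lam M / lam m :=
      div_nonneg (mul_nonneg (Nat.cast_nonneg _) (hlam0 M)) (hlam0 m)
    calc Real.sqrt Wsq ≤ Real.sqrt ESq := hWEs
      _ = 1 * Real.sqrt ESq := (one_mul _).symm
      _ ≤ Real.sqrt (1 + ((M - m + 1 : ℕ) : ℝ) * lam M / lam m) * Real.sqrt ESq :=
          mul_le_mul_of_nonneg_right (gen1 _ (by linarith)) (Real.sqrt_nonneg _)
end

section
/- Assume λ_i ≤ λ_{ih} for i = m,…,M. Then the energy norm of the density matrix error dominates λ_m times its Hilbert–Schmidt norm: ‖A^{1/2}(γ⁰ − γ_h)‖_{S2}² ≥ λ_m ‖γ⁰ − γ_h‖_{S2}². -/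
open scoped RealInnerProductSpace

/-- 0-based indexing: `‖A^{1/2}(γ⁰ − γ_h)‖_{S2}² ≥ λ_m ‖γ⁰ − γ_h‖_{S2}²`. -/
theorem stmt_8
    {H : Type*} [NormedAddCommGroup H] [InnerProductSpace ℝ H] [CompleteSpace H]
    (b : HilbertBasis ℕ ℝ H)
    (lam : ℕ → ℝ) (hlam_pos : ∀ k, 0 < lam k) (hlam_mono : Monotone lam)
    (hlam_tendsto : Filter.Tendsto lam Filter.atTop Filter.atTop)
    (m M : ℕ) (hmM : m ≤ M)
    (Vh : Submodule ℝ H) (hVh_fin : FiniteDimensional ℝ Vh)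
    (hVh_dom : ∀ v ∈ Vh, Summable fun k => lam k * ⟪v, b k⟫ ^ 2)
    (uh : ℕ → H) (lamh : ℕ → ℝ)
    (huh_mem : ∀ i ∈ Finset.Icc m M, uh i ∈ Vh)
    (huh_orth : ∀ i ∈ Finset.Icc m M, ∀ j ∈ Finset.Icc m M,
      ⟪uh i, uh j⟫ = if i = j then 1 else 0)
    (hlamh_mono : ∀ i ∈ Finset.Icc m M, ∀ j ∈ Finset.Icc m M, i ≤ j → lamh i ≤ lamh j)
    (heig_h : ∀ i ∈ Finset.Icc m M, ∀ v ∈ Vh,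
      (∑' k, lam k * (⟪uh i, b k⟫ * ⟪v, b k⟫)) = lamh i * ⟪uh i, v⟫)
    (g0 gh : H → H)
    (hg0 : ∀ w, g0 w = ∑ i ∈ Finset.Icc m M, ⟪w, b i⟫ • b i)
    (hgh : ∀ w, gh w = ∑ i ∈ Finset.Icc m M, ⟪w, uh i⟫ • uh i)
    (hconf : ∀ i ∈ Finset.Icc m M, lam i ≤ lamh i)
    :
    lam m * (∑' k, ‖g0 (b k) - gh (b k)‖ ^ 2)
      ≤ ∑' k, ∑' j, lam j * ⟪g0 (b k) - gh (b k), b j⟫ ^ 2 := by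
  classical
  set N : Finset ℕ := Finset.Icc m M with hNdef
  have hb : ∀ i j : ℕ, ⟪b i, b j⟫ = if i = j then (1:ℝ) else 0 :=
    orthonormal_iff_ite.mp b.orthonormal
  -- g0 on basis vectors
  have hg0b : ∀ k, g0 (b k) = if k ∈ N then b k else 0 := by
    intro k
    rw [hg0]
    rw [Finset.sum_congr rfl (fun i _ => ?_), Finset.sum_ite_eq' N k (fun _ => b k)]
    rcases eq_or_ne i k with h | h
    · subst h; rw [hb]; simp
    · rw [hb]; simp [h, Ne.symm h]
  -- gh on basis vectors
  have hghb : ∀ k, gh (b k) = ∑ i ∈ N, ⟪uh i, b k⟫ • uh i := by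
    intro k
    rw [hgh]
    exact Finset.sum_congr rfl fun i _ => by rw [real_inner_comm]
  -- inner products
  have hgh_inner : ∀ k j, ⟪gh (b k), b j⟫ = ∑ i ∈ N, ⟪uh i, b k⟫ * ⟪uh i, b j⟫ := by
    intro k j
    rw [hghb, sum_inner]
    exact Finset.sum_congr rfl fun i _ => by rw [real_inner_smul_left]
  have huh_gh : ∀ i ∈ N, ∀ k, ⟪uh i, gh (b k)⟫ = ⟪uh i, b k⟫ := by
    intro i hi k
    rw [hghb, inner_sum]
    rw [Finset.sum_congr rfl (fun j hj => ?_), Finset.sum_ite_eq N i (fun j => ⟪uh j, b k⟫),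
      if_pos hi]
    rw [real_inner_smul_right, huh_orth i hi j hj]
    rcases eq_or_ne i j with h | h
    · subst h; simp
    · simp [h]
  have hghgh : ∀ k, ⟪gh (b k), gh (b k)⟫ = ∑ i ∈ N, ⟪uh i, b k⟫ ^ 2 := by
    intro k
    conv_lhs => rw [hghb k, sum_inner]
    refine Finset.sum_congr rfl fun i hi => ?_
    rw [real_inner_smul_left, ← hghb k, huh_gh i hi k, sq]
  have hg0gh : ∀ k, ⟪g0 (b k), gh (b k)⟫
      = if k ∈ N then ∑ i ∈ N, ⟪uh i, b k⟫ ^ 2 else 0 := by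
    intro k
    rw [hg0b]
    split_ifs with hk
    · rw [real_inner_comm, hgh_inner]
      exact Finset.sum_congr rfl fun i _ => by rw [sq]
    · exact inner_zero_left _
  -- norm of error on basis vectors
  have hnorm : ∀ k, ‖g0 (b k) - gh (b k)‖ ^ 2
      = (if k ∈ N then 1 - 2 * ∑ i ∈ N, ⟪uh i, b k⟫ ^ 2 else 0)
        + ∑ i ∈ N, ⟪uh i, b k⟫ ^ 2 := by
    intro k
    have hghn : ‖gh (b k)‖ ^ 2 = ∑ i ∈ N, ⟪uh i, b k⟫ ^ 2 := by
      rw [← real_inner_self_eq_norm_sq, hghgh]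
    have hg0n : ‖g0 (b k)‖ ^ 2 = if k ∈ N then 1 else 0 := by
      rw [hg0b]
      split_ifs with hk
      · rw [b.orthonormal.1 k]; norm_num
      · simp
    rw [norm_sub_sq_real, hg0gh, hg0n, hghn]
    split_ifs with hk <;> ring
  -- Parseval for uh i
  have hc2sum : ∀ i, Summable (fun k => ⟪uh i, b k⟫ ^ 2) := by
    intro i
    have := b.summable_inner_mul_inner (uh i) (uh i)
    refine this.congr fun k => ?_
    rw [real_inner_comm (b k) (uh i), sq]
  have hc2tsum : ∀ i ∈ N, (∑' k, ⟪uh i, b k⟫ ^ 2) = 1 := by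
    intro i hi
    have h1 := b.tsum_inner_mul_inner (uh i) (uh i)
    have h2 : (∑' k, ⟪uh i, b k⟫ ^ 2) = ∑' k, ⟪uh i, b k⟫ * ⟪b k, uh i⟫ :=
      tsum_congr fun k => by rw [real_inner_comm (b k) (uh i), sq]
    rw [h2, h1, huh_orth i hi i hi, if_pos rfl]
  have hS_sum : Summable (fun k => ∑ i ∈ N, ⟪uh i, b k⟫ ^ 2) :=
    summable_sum fun i _ => hc2sum i
  have hS_tsum : (∑' k, ∑ i ∈ N, ⟪uh i, b k⟫ ^ 2) = (N.card : ℝ) := by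
    rw [Summable.tsum_finsetSum fun i _ => hc2sum i, Finset.sum_congr rfl hc2tsum]
    simp
  -- LHS closed form
  have hLHS : (∑' k, ‖g0 (b k) - gh (b k)‖ ^ 2)
      = (∑ k ∈ N, (1 - 2 * ∑ i ∈ N, ⟪uh i, b k⟫ ^ 2)) + (N.card : ℝ) := by
    rw [tsum_congr hnorm,
      Summable.tsum_add (summable_of_ne_finset_zero (s := N) fun k hk => if_neg hk) hS_sum,
      tsum_eq_sum (s := N) (fun k hk => if_neg hk), hS_tsum]
    congr 1
    exact Finset.sum_congr rfl fun k hk => if_pos hk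
  -- membership
  have hgh_mem : ∀ k, gh (b k) ∈ Vh := by
    intro k
    rw [hghb]
    exact Submodule.sum_mem _ fun i hi => Submodule.smul_mem _ _ (huh_mem i hi)
  -- cross summability
  have hcross : ∀ u ∈ Vh, ∀ v ∈ Vh,
      Summable (fun j => lam j * (⟪u, b j⟫ * ⟪v, b j⟫)) := by
    intro u hu v hv
    rw [← summable_abs_iff]
    refine Summable.of_nonneg_of_le (fun j => abs_nonneg _) (fun j => ?_)
      (((hVh_dom u hu).add (hVh_dom v hv)))
    have h1 : |⟪u, b j⟫ * ⟪v, b j⟫| ≤ ⟪u, b j⟫ ^ 2 + ⟪v, b j⟫ ^ 2 := by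
      rw [abs_mul]
      nlinarith [sq_abs (⟪u, b j⟫ : ℝ), sq_abs (⟪v, b j⟫ : ℝ),
        sq_nonneg (|⟪u, b j⟫| - |⟪v, b j⟫|), abs_nonneg (⟪u, b j⟫ : ℝ),
        abs_nonneg (⟪v, b j⟫ : ℝ)]
    have h2 : |lam j * (⟪u, b j⟫ * ⟪v, b j⟫)| = lam j * |⟪u, b j⟫ * ⟪v, b j⟫| := by
      rw [abs_mul, abs_of_pos (hlam_pos j)]
    rw [h2]
    calc lam j * |⟪u, b j⟫ * ⟪v, b j⟫| ≤ lam j * (⟪u, b j⟫ ^ 2 + ⟪v, b j⟫ ^ 2) :=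
          mul_le_mul_of_nonneg_left h1 (hlam_pos j).le
      _ = lam j * ⟪u, b j⟫ ^ 2 + lam j * ⟪v, b j⟫ ^ 2 := by ring
  -- the key identity: energy of gh (b k)
  have hq : ∀ k, (∑' j, lam j * ⟪gh (b k), b j⟫ ^ 2)
      = ∑ i ∈ N, lamh i * ⟪uh i, b k⟫ ^ 2 := by
    intro k
    have hexp : ∀ j, lam j * ⟪gh (b k), b j⟫ ^ 2
        = ∑ i ∈ N, ⟪uh i, b k⟫ * (lam j * (⟪uh i, b j⟫ * ⟪gh (b k), b j⟫)) := by
      intro j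
      calc lam j * ⟪gh (b k), b j⟫ ^ 2
          = (∑ i ∈ N, ⟪uh i, b k⟫ * ⟪uh i, b j⟫) * (lam j * ⟪gh (b k), b j⟫) := by
            rw [← hgh_inner]; ring
        _ = ∑ i ∈ N, (⟪uh i, b k⟫ * ⟪uh i, b j⟫) * (lam j * ⟪gh (b k), b j⟫) :=
            Finset.sum_mul _ _ _
        _ = ∑ i ∈ N, ⟪uh i, b k⟫ * (lam j * (⟪uh i, b j⟫ * ⟪gh (b k), b j⟫)) :=
            Finset.sum_congr rfl fun i _ => by ring
    rw [tsum_congr hexp,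
      Summable.tsum_finsetSum (f := fun i j => ⟪uh i, b k⟫ * (lam j * (⟪uh i, b j⟫ * ⟪gh (b k), b j⟫)))
        (fun i hi => (hcross (uh i) (huh_mem i hi) (gh (b k)) (hgh_mem k)).mul_left _)]
    refine Finset.sum_congr rfl fun i hi => ?_
    rw [tsum_mul_left, heig_h i hi (gh (b k)) (hgh_mem k), huh_gh i hi k]
    ring
  -- diagonal
  have hdiag : ∀ k, ⟪gh (b k), b k⟫ = ∑ i ∈ N, ⟪uh i, b k⟫ ^ 2 := by
    intro k
    rw [hgh_inner]
    exact Finset.sum_congr rfl fun i _ => by rw [sq]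
  -- inner product of error with basis
  have hw_inner : ∀ k j, ⟪g0 (b k) - gh (b k), b j⟫
      = (if k ∈ N ∧ j = k then 1 else 0) - ⟪gh (b k), b j⟫ := by
    intro k j
    rw [inner_sub_left, hg0b]
    by_cases hk : k ∈ N
    · rw [if_pos hk, hb]
      rcases eq_or_ne j k with h | h
      · subst h; simp [hk]
      · simp [hk, h, Ne.symm h]
    · rw [if_neg hk, if_neg (fun h => hk h.1)]
      simp
  have hsummand : ∀ k j, lam j * ⟪g0 (b k) - gh (b k), b j⟫ ^ 2
      = (if k ∈ N ∧ j = k then lam k * (1 - 2 * ⟪gh (b k), b k⟫) else 0)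
        + lam j * ⟪gh (b k), b j⟫ ^ 2 := by
    intro k j
    rw [hw_inner]
    by_cases h : k ∈ N ∧ j = k
    · rw [if_pos h, if_pos h]
      obtain ⟨hk, hj⟩ := h
      subst hj
      ring
    · rw [if_neg h, if_neg h]
      ring
  have hinner_tsum : ∀ k, (∑' j, lam j * ⟪g0 (b k) - gh (b k), b j⟫ ^ 2)
      = (if k ∈ N then lam k * (1 - 2 * ⟪gh (b k), b k⟫) else 0)
        + ∑ i ∈ N, lamh i * ⟪uh i, b k⟫ ^ 2 := by
    intro k
    have hfin : ∀ j ∉ ({k} : Finset ℕ),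
        (if k ∈ N ∧ j = k then lam k * (1 - 2 * ⟪gh (b k), b k⟫) else 0) = 0 := by
      intro j hj
      rw [if_neg]
      rintro ⟨-, hjk⟩
      exact hj (by simp [hjk])
    rw [tsum_congr (hsummand k),
      Summable.tsum_add (summable_of_ne_finset_zero hfin) (hVh_dom (gh (b k)) (hgh_mem k)),
      hq k, tsum_eq_sum hfin, Finset.sum_singleton]
    simp
  have hq_summable : Summable (fun k => ∑ i ∈ N, lamh i * ⟪uh i, b k⟫ ^ 2) :=
    summable_sum fun i _ => (hc2sum i).mul_left _
  have hq_tsum : (∑' k, ∑ i ∈ N, lamh i * ⟪uh i, b k⟫ ^ 2) = ∑ i ∈ N, lamh i := by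
    rw [Summable.tsum_finsetSum fun i _ => (hc2sum i).mul_left _]
    refine Finset.sum_congr rfl fun i hi => ?_
    rw [tsum_mul_left, hc2tsum i hi, mul_one]
  have hRHS : (∑' k, ∑' j, lam j * ⟪g0 (b k) - gh (b k), b j⟫ ^ 2)
      = (∑ k ∈ N, lam k * (1 - 2 * ∑ i ∈ N, ⟪uh i, b k⟫ ^ 2)) + ∑ i ∈ N, lamh i := by
    rw [tsum_congr hinner_tsum,
      Summable.tsum_add (summable_of_ne_finset_zero (s := N) fun k hk => if_neg hk) hq_summable,
      tsum_eq_sum (s := N) (fun k hk => if_neg hk), hq_tsum]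
    congr 1
    exact Finset.sum_congr rfl fun k hk => by rw [if_pos hk, hdiag k]
  -- Bessel : S k ≤ 1 for k ∈ N
  have hS1 : ∀ k ∈ N, (∑ i ∈ N, ⟪uh i, b k⟫ ^ 2) ≤ 1 := by
    intro k hk
    have h0 : (0:ℝ) ≤ ‖g0 (b k) - gh (b k)‖ ^ 2 := sq_nonneg _
    rw [hnorm k, if_pos hk] at h0
    linarith
  -- conclude
  rw [hLHS, hRHS]
  have hcard : (N.card : ℝ) = ∑ _k ∈ N, (1:ℝ) := by simp
  rw [hcard, mul_add, Finset.mul_sum, Finset.mul_sum, ← Finset.sum_add_distrib,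
    ← Finset.sum_add_distrib]
  refine Finset.sum_le_sum fun k hk => ?_
  have hmk : m ≤ k := (Finset.mem_Icc.mp hk).1
  have h1 : lam m ≤ lam k := hlam_mono hmk
  have h2 : lam k ≤ lamh k := hconf k hk
  have h3 : (∑ i ∈ N, ⟪uh i, b k⟫ ^ 2) ≤ 1 := hS1 k hk
  nlinarith [mul_nonneg (sub_nonneg.mpr h1) (sub_nonneg.mpr h3)]
end

section
/- For every real s ≤ 0, the weighted Hilbert–Schmidt norm of the cluster residual has the expansion Σ_{k≥1} ‖A^s(Res(γ_h) e_k)‖² = Σ_{k≥1} Σ_{i=m}^{M} λ_k^{2s−1} (λ_k − λ_{ih})² ⟨u_{ih}, e_k⟩². -/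
open scoped RealInnerProductSpace
set_option maxHeartbeats 1000000
open scoped RealInnerProductSpace
set_option maxHeartbeats 1000000

lemma aux_inner_tsum_smul {H : Type*} [NormedAddCommGroup H] [InnerProductSpace ℝ H]
    [CompleteSpace H] (b : HilbertBasis ℕ ℝ H) (c : ℕ → ℝ)
    (hc : Summable fun j => c j ^ 2) (n : ℕ) :
    ⟪∑' j, c j • b j, b n⟫ = c n := by
  have hmem : Memℓp c 2 := by
    apply memℓp_gen
    have he : (fun i => ‖c i‖ ^ (2:ENNReal).toReal) = fun i => c i ^ 2 := by
      funext i
      rw [show ((2:ENNReal).toReal) = (2:ℝ) by norm_num, Real.rpow_two, Real.norm_eq_abs, sq_abs]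
    rw [he]; exact hc
  set f : lp (fun _ : ℕ => ℝ) 2 := ⟨c, hmem⟩ with hf
  have h := b.hasSum_repr_symm f
  have hfc : ∀ i, f i = c i := fun i => rfl
  have ht : (∑' j, c j • b j) = b.repr.symm f := by
    exact (h : HasSum (fun j => c j • b j) (b.repr.symm f)).tsum_eq
  rw [ht, real_inner_comm, ← b.repr_apply_apply, LinearIsometryEquiv.apply_symm_apply]

lemma aux_parseval_sq {H : Type*} [NormedAddCommGroup H] [InnerProductSpace ℝ H]
    [CompleteSpace H] (b : HilbertBasis ℕ ℝ H) (x : H) :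
    HasSum (fun k => ⟪x, b k⟫ ^ 2) ⟪x, x⟫ := by
  have h := b.hasSum_inner_mul_inner x x
  convert h using 2 with k
  · rfl
  · rw [real_inner_comm (b k) x, sq]

lemma aux_summable_weight (lam : ℕ → ℝ) (hpos : ∀ k, 0 < lam k) (hmono : Monotone lam)
    (s : ℝ) (hs : s ≤ 0) (μ : ℝ) (a : ℕ → ℝ) (ha0 : ∀ k, 0 ≤ a k)
    (h1 : Summable fun k => lam k * a k) (h2 : Summable a) :
    Summable fun k => lam k ^ (2 * s - 1) * ((lam k - μ) ^ 2 * a k) := by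
  set C : ℝ := lam 0 ^ (2 * s) with hC
  have hC0 : 0 < C := Real.rpow_pos_of_pos (hpos 0) _
  have hCk : ∀ k, lam k ^ (2 * s) ≤ C :=
    fun k => Real.rpow_le_rpow_of_nonpos (hpos 0) (hmono (Nat.zero_le k)) (by linarith)
  have hsum : Summable fun k => 2 * C * (lam k * a k) + 2 * μ ^ 2 * (C / lam 0) * a k :=
    (h1.mul_left _).add (h2.mul_left _)
  refine hsum.of_nonneg_of_le (fun k => ?_) (fun k => ?_)
  · exact mul_nonneg (Real.rpow_pos_of_pos (hpos k) _).le
      (mul_nonneg (sq_nonneg _) (ha0 k))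
  · have hk0 : 0 < lam k := hpos k
    have h00 : 0 < lam 0 := hpos 0
    have h3 : 0 < lam k ^ (2 * s - 1) := Real.rpow_pos_of_pos hk0 _
    have e1 : lam k ^ (2 * s - 1) * lam k = lam k ^ (2 * s) := by
      rw [← Real.rpow_add_one hk0.ne' (2 * s - 1)]
      norm_num
    have h6 : lam k ^ (2 * s - 1) ≤ C / lam 0 := by
      rw [le_div_iff₀ h00]
      calc lam k ^ (2 * s - 1) * lam 0 ≤ lam k ^ (2 * s - 1) * lam k := by
            exact mul_le_mul_of_nonneg_left (hmono (Nat.zero_le k)) h3.le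
        _ = lam k ^ (2 * s) := e1
        _ ≤ C := hCk k
    have step : (lam k - μ) ^ 2 ≤ 2 * lam k ^ 2 + 2 * μ ^ 2 := by
      nlinarith [sq_nonneg (lam k + μ)]
    calc lam k ^ (2 * s - 1) * ((lam k - μ) ^ 2 * a k)
        ≤ lam k ^ (2 * s - 1) * ((2 * lam k ^ 2 + 2 * μ ^ 2) * a k) := by
          exact mul_le_mul_of_nonneg_left
            (mul_le_mul_of_nonneg_right step (ha0 k)) h3.le
      _ = 2 * (lam k ^ (2 * s - 1) * lam k) * (lam k * a k)
            + 2 * μ ^ 2 * (lam k ^ (2 * s - 1)) * a k := by ring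
      _ = 2 * (lam k ^ (2 * s)) * (lam k * a k)
            + 2 * μ ^ 2 * (lam k ^ (2 * s - 1)) * a k := by rw [e1]
      _ ≤ 2 * C * (lam k * a k) + 2 * μ ^ 2 * (C / lam 0) * a k := by
          have hla : 0 ≤ lam k * a k := mul_nonneg hk0.le (ha0 k)
          have := ha0 k
          gcongr
          all_goals exact hCk k

/-- 0-based indexing: expansion of the weighted Hilbert–Schmidt norm of the
cluster residual: for every s ≤ 0,
`Σ_k ‖A^s(Res(γ_h)e_k)‖² = Σ_k Σ_{i=m}^M λ_k^{2s−1}(λ_k − λ_{ih})² ⟨u_{ih},e_k⟩²`,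
where `‖A^s w‖² = Σ_j λ_j^{2s} ⟨w,e_j⟩²`. -/
theorem stmt_9
    {H : Type*} [NormedAddCommGroup H] [InnerProductSpace ℝ H] [CompleteSpace H]
    (b : HilbertBasis ℕ ℝ H)
    (lam : ℕ → ℝ) (hlam_pos : ∀ k, 0 < lam k) (hlam_mono : Monotone lam)
    (hlam_tendsto : Filter.Tendsto lam Filter.atTop Filter.atTop)
    (m M : ℕ) (hmM : m ≤ M)
    (Vh : Submodule ℝ H) (hVh_fin : FiniteDimensional ℝ Vh)
    (hVh_dom : ∀ v ∈ Vh, Summable fun k => lam k * ⟪v, b k⟫ ^ 2)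
    (uh : ℕ → H) (lamh : ℕ → ℝ)
    (huh_mem : ∀ i ∈ Finset.Icc m M, uh i ∈ Vh)
    (huh_orth : ∀ i ∈ Finset.Icc m M, ∀ j ∈ Finset.Icc m M,
      ⟪uh i, uh j⟫ = if i = j then 1 else 0)
    (hlamh_mono : ∀ i ∈ Finset.Icc m M, ∀ j ∈ Finset.Icc m M, i ≤ j → lamh i ≤ lamh j)
    (heig_h : ∀ i ∈ Finset.Icc m M, ∀ v ∈ Vh,
      (∑' k, lam k * (⟪uh i, b k⟫ * ⟪v, b k⟫)) = lamh i * ⟪uh i, v⟫)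
    (gh : H → H)
    (hgh : ∀ w, gh w = ∑ i ∈ Finset.Icc m M, ⟪w, uh i⟫ • uh i)
    (Res : H → H)
    (hRes : ∀ v, Res v =
      (∑' k, (Real.sqrt (lam k) * ⟪gh v, b k⟫) • b k)
        - ∑' k, ((Real.sqrt (lam k))⁻¹ *
            ⟪∑ j ∈ Finset.Icc m M,
                (∑' k', lam k' * (⟪uh j, b k'⟫ * ⟪gh v, b k'⟫)) • uh j,
              b k⟫) • b k)
    :
    ∀ s : ℝ, s ≤ 0 →
      (∑' k, ∑' j, lam j ^ (2 * s) * ⟪Res (b k), b j⟫ ^ 2)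
        = ∑' k, ∑ i ∈ Finset.Icc m M,
            lam k ^ (2 * s - 1) * ((lam k - lamh i) ^ 2 * ⟪uh i, b k⟫ ^ 2) := by
  intro s hs
  classical
  set I := Finset.Icc m M with hI
  -- the "cluster vector" whose coefficients give the residual
  set β : ℕ → ℕ → ℝ := fun i j => (lam j - lamh i) / Real.sqrt (lam j) * ⟪uh i, b j⟫ with hβ
  set v : ℕ → H := fun j => ∑ i ∈ I, β i j • uh i with hv
  have hsqrt_pos : ∀ j, 0 < Real.sqrt (lam j) := fun j => Real.sqrt_pos.2 (hlam_pos j)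
  -- Step 1 : coefficients of the residual
  have step1 : ∀ k j, ⟪Res (b k), b j⟫ = ⟪v j, b k⟫ := by
    intro k j
    have hmemP : gh (b k) ∈ Vh := by
      rw [hgh]
      exact Submodule.sum_mem _ fun i hi => Submodule.smul_mem _ _ (huh_mem i hi)
    have hgi : ∀ i ∈ I, ⟪uh i, gh (b k)⟫ = ⟪b k, uh i⟫ := by
      intro i hi
      rw [hgh, inner_sum]
      have : ∀ i' ∈ I, ⟪uh i, ⟪b k, uh i'⟫ • uh i'⟫
          = if i = i' then ⟪b k, uh i'⟫ else 0 := by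
        intro i' hi'
        rw [real_inner_smul_right, huh_orth i hi i' hi', mul_ite, mul_one, mul_zero]
      rw [Finset.sum_congr rfl this, Finset.sum_ite_eq]
      simp [hi]
    have htse : ∀ i ∈ I, (∑' k', lam k' * (⟪uh i, b k'⟫ * ⟪gh (b k), b k'⟫))
        = lamh i * ⟪b k, uh i⟫ := by
      intro i hi
      rw [heig_h i hi _ hmemP, hgi i hi]
    set w : H := ∑ i ∈ I, (lamh i * ⟪b k, uh i⟫) • uh i with hw
    have hwsum : (∑ i ∈ I, (∑' k', lam k' * (⟪uh i, b k'⟫ * ⟪gh (b k), b k'⟫)) • uh i) = w :=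
      Finset.sum_congr rfl fun i hi => by rw [htse i hi]
    set c1 : ℕ → ℝ := fun n => Real.sqrt (lam n) * ⟪gh (b k), b n⟫ with hc1def
    set c2 : ℕ → ℝ := fun n => (Real.sqrt (lam n))⁻¹ * ⟪w, b n⟫ with hc2def
    have hres : Res (b k) = (∑' n, c1 n • b n) - ∑' n, c2 n • b n := by
      rw [hRes, hwsum]
    have hc1 : Summable fun n => c1 n ^ 2 := by
      have := hVh_dom _ hmemP
      convert this using 2 with n
      rw [hc1def, mul_pow, Real.sq_sqrt (hlam_pos n).le]
    have hc2 : Summable fun n => c2 n ^ 2 := by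
      have hpar : Summable fun n => ⟪w, b n⟫ ^ 2 := (aux_parseval_sq b w).summable
      refine (hpar.mul_left (lam 0)⁻¹).of_nonneg_of_le (fun n => sq_nonneg _) (fun n => ?_)
      rw [hc2def, mul_pow, ← Real.sqrt_inv, Real.sq_sqrt (inv_nonneg.2 (hlam_pos n).le)]
      have : (lam n)⁻¹ ≤ (lam 0)⁻¹ :=
        inv_anti₀ (hlam_pos 0) (hlam_mono (Nat.zero_le n))
      exact mul_le_mul_of_nonneg_right this (sq_nonneg _)
    have hcoeff : ⟪Res (b k), b j⟫ = c1 j - c2 j := by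
      rw [hres, inner_sub_left, aux_inner_tsum_smul b c1 hc1 j, aux_inner_tsum_smul b c2 hc2 j]
    rw [hcoeff]
    -- expand both sides as sums over I
    have hg_expand : ⟪gh (b k), b j⟫ = ∑ i ∈ I, ⟪b k, uh i⟫ * ⟪uh i, b j⟫ := by
      rw [hgh, sum_inner]
      exact Finset.sum_congr rfl fun i _ => real_inner_smul_left _ _ _
    have hw_expand : ⟪w, b j⟫ = ∑ i ∈ I, lamh i * ⟪b k, uh i⟫ * ⟪uh i, b j⟫ := by
      rw [hw, sum_inner]
      exact Finset.sum_congr rfl fun i _ => by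
        rw [real_inner_smul_left]
    have hv_expand : ⟪v j, b k⟫ = ∑ i ∈ I, β i j * ⟪uh i, b k⟫ := by
      rw [hv, sum_inner]
      exact Finset.sum_congr rfl fun i _ => real_inner_smul_left _ _ _
    simp only [hc1def, hc2def]
    rw [hg_expand, hw_expand, hv_expand, Finset.mul_sum, Finset.mul_sum,
      ← Finset.sum_sub_distrib]
    refine Finset.sum_congr rfl fun i _ => ?_
    have hne : Real.sqrt (lam j) ≠ 0 := (hsqrt_pos j).ne'
    have hsq : Real.sqrt (lam j) * Real.sqrt (lam j) = lam j :=
      Real.mul_self_sqrt (hlam_pos j).le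
    rw [hβ, real_inner_comm (uh i) (b k)]
    field_simp
    ring_nf
    rw [Real.sq_sqrt (hlam_pos j).le]
    ring
  -- Step 2 : norm of v j
  have hinner_uv : ∀ j, ∀ i ∈ I, ⟪uh i, v j⟫ = β i j := by
    intro j i hi
    simp only [hv]
    rw [inner_sum]
    have h2 : ∀ i' ∈ I, ⟪uh i, β i' j • uh i'⟫ = if i = i' then β i' j else 0 := by
      intro i' hi'
      rw [real_inner_smul_right, huh_orth i hi i' hi', mul_ite, mul_one, mul_zero]
    rw [Finset.sum_congr rfl h2, Finset.sum_ite_eq, if_pos hi]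
  have step2 : ∀ j, ⟪v j, v j⟫ = ∑ i ∈ I, β i j ^ 2 := by
    intro j
    have : ⟪v j, v j⟫ = ∑ i ∈ I, β i j * ⟪uh i, v j⟫ := by
      conv_lhs => rw [show v j = ∑ i ∈ I, β i j • uh i from rfl]
      rw [sum_inner]
      exact Finset.sum_congr rfl fun i _ => real_inner_smul_left _ _ _
    rw [this]
    exact Finset.sum_congr rfl fun i hi => by rw [hinner_uv j i hi, sq]
  -- Step 3 : Parseval for each v j
  have step3 : ∀ j, HasSum (fun k => lam j ^ (2 * s) * ⟪v j, b k⟫ ^ 2)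
      (lam j ^ (2 * s) * ⟪v j, v j⟫) := fun j => (aux_parseval_sq b (v j)).mul_left _
  -- Step 4 : pointwise identity
  have step4 : ∀ j, lam j ^ (2 * s) * ⟪v j, v j⟫
      = ∑ i ∈ I, lam j ^ (2 * s - 1) * ((lam j - lamh i) ^ 2 * ⟪uh i, b j⟫ ^ 2) := by
    intro j
    rw [step2, Finset.mul_sum]
    refine Finset.sum_congr rfl fun i _ => ?_
    have hβsq : β i j ^ 2 = (lam j - lamh i) ^ 2 / lam j * ⟪uh i, b j⟫ ^ 2 := by
      simp only [hβ]
      rw [mul_pow, div_pow, Real.sq_sqrt (hlam_pos j).le]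
    have e1 : lam j ^ (2 * s - 1) = lam j ^ (2 * s) / lam j := by
      rw [Real.rpow_sub (hlam_pos j), Real.rpow_one]
    rw [hβsq, e1]
    ring
  -- Step 5 : summability in j
  have hai : ∀ i ∈ I, Summable
      (fun j => lam j ^ (2 * s - 1) * ((lam j - lamh i) ^ 2 * ⟪uh i, b j⟫ ^ 2)) := by
    intro i hi
    exact aux_summable_weight lam hlam_pos hlam_mono s hs (lamh i) _
      (fun k => sq_nonneg _) (hVh_dom _ (huh_mem i hi)) (aux_parseval_sq b (uh i)).summable
  have step5 : Summable (fun j => lam j ^ (2 * s) * ⟪v j, v j⟫) := by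
    have h := summable_sum hai
    exact h.congr fun j => (step4 j).symm
  -- the double family
  set G : ℕ → ℕ → ℝ := fun j k => lam j ^ (2 * s) * ⟪v j, b k⟫ ^ 2 with hG
  have hGnn : ∀ p : ℕ × ℕ, 0 ≤ Function.uncurry G p := fun p =>
    mul_nonneg (Real.rpow_pos_of_pos (hlam_pos p.1) _).le (sq_nonneg _)
  have hGsum : Summable (Function.uncurry G) := by
    rw [summable_prod_of_nonneg hGnn]
    constructor
    · intro j; exact (step3 j).summable
    · have he : ∀ j, (∑' k, Function.uncurry G (j, k)) = lam j ^ (2 * s) * ⟪v j, v j⟫ :=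
        fun j => (step3 j).tsum_eq
      exact step5.congr fun j => (he j).symm
  have hGswap : Summable (fun p : ℕ × ℕ => G p.2 p.1) := hGsum.prod_symm
  have hGrow : ∀ k, Summable (fun j => G j k) := by
    have hnn : ∀ p : ℕ × ℕ, 0 ≤ G p.2 p.1 := fun p => hGnn p.swap
    exact fun k => ((summable_prod_of_nonneg hnn).1 hGswap).1 k
  have hcomm : (∑' k, ∑' j, G j k) = ∑' j, ∑' k, G j k :=
    Summable.tsum_comm' hGsum (fun j => (step3 j).summable) hGrow
  calc (∑' k, ∑' j, lam j ^ (2 * s) * ⟪Res (b k), b j⟫ ^ 2)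
      = ∑' k, ∑' j, G j k := by
        exact tsum_congr fun k => tsum_congr fun j => by rw [hG, step1 k j]
    _ = ∑' j, ∑' k, G j k := hcomm
    _ = ∑' j, lam j ^ (2 * s) * ⟪v j, v j⟫ := tsum_congr fun j => (step3 j).tsum_eq
    _ = ∑' j, ∑ i ∈ I, lam j ^ (2 * s - 1) * ((lam j - lamh i) ^ 2 * ⟪uh i, b j⟫ ^ 2) :=
        tsum_congr fun j => step4 j
end

section
/- The squared Hilbert–Schmidt norm of the cluster residual equals the sum of the squared dual norms of the single eigenpair residuals: Σ_{k≥1} ‖Res(γ_h) e_k‖² = Σ_{i=m}^{M} (sup{ λ_{ih}⟨u_{ih},v⟩ − a(u_{ih},v) : v ∈ D(A^{1/2}), ‖A^{1/2}v‖ = 1 })². -/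
open scoped RealInnerProductSpace

private lemma summable_mul_of_sq {f g : ℕ → ℝ} (hf : Summable fun k => f k ^ 2)
    (hg : Summable fun k => g k ^ 2) : Summable fun k => f k * g k := by
  apply Summable.of_abs
  apply Summable.of_nonneg_of_le (fun k => abs_nonneg _) (fun k => ?_)
    (((hf.add hg).div_const 2))
  rw [abs_mul]
  nlinarith [sq_nonneg (|f k| - |g k|), sq_abs (f k), sq_abs (g k),
    abs_nonneg (f k), abs_nonneg (g k)]

private lemma summable_sq_sub {f g : ℕ → ℝ} (hf : Summable fun k => f k ^ 2)
    (hg : Summable fun k => g k ^ 2) : Summable fun k => (f k - g k) ^ 2 := by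
  apply Summable.of_nonneg_of_le (fun k => sq_nonneg _) (fun k => ?_)
    ((hf.mul_left 2).add (hg.mul_left 2))
  nlinarith [sq_nonneg (f k + g k)]

private lemma exists_vec {H : Type*} [NormedAddCommGroup H] [InnerProductSpace ℝ H]
    [CompleteSpace H] (b : HilbertBasis ℕ ℝ H) {f : ℕ → ℝ}
    (hf : Summable fun k => f k ^ 2) :
    ∃ x : H, HasSum (fun k => f k • b k) x ∧ (∀ j, ⟪x, b j⟫ = f j) := by
  have hmem : Memℓp f 2 := memℓp_gen (by
    simpa [Real.norm_eq_abs, sq_abs] using hf)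
  refine ⟨b.repr.symm ⟨f, hmem⟩, by simpa using b.hasSum_repr_symm ⟨f, hmem⟩, fun j => ?_⟩
  have h := b.repr_apply_apply (b.repr.symm ⟨f, hmem⟩) j
  rw [LinearIsometryEquiv.apply_symm_apply] at h
  rw [real_inner_comm]
  exact h.symm

private lemma alg_mul {s L x y : ℝ} (hs : s * s = L) : (s * x) * (s * y) = L * (x * y) := by
  rw [← hs]; ring

private lemma alg_sq {s L y : ℝ} (hs : s * s = L) : (s * y) * (s * y) = L * y ^ 2 := by
  rw [← hs]; ring

private lemma alg_id {s L t x y : ℝ} (hs : s * s = L) (hne : s ≠ 0) :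
    L * (x * y) - t * (x * y) = (s * x - t / s * x) * (s * y) := by
  rw [← hs]; field_simp

private lemma alg_e1 {s n x : ℝ} (hs : s ≠ 0) (hn : n ≠ 0) :
    x ^ 2 * (-n⁻¹) = x * (s * (-x / (s * n))) := by
  field_simp

/-- 0-based indexing: the squared Hilbert–Schmidt norm of the cluster
residual equals the sum of the squared dual norms of the single eigenpair residuals. -/
theorem stmt_11
    {H : Type*} [NormedAddCommGroup H] [InnerProductSpace ℝ H] [CompleteSpace H]
    (b : HilbertBasis ℕ ℝ H)
    (lam : ℕ → ℝ) (hlam_pos : ∀ k, 0 < lam k) (hlam_mono : Monotone lam)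
    (hlam_tendsto : Filter.Tendsto lam Filter.atTop Filter.atTop)
    (m M : ℕ) (hmM : m ≤ M)
    (Vh : Submodule ℝ H) (hVh_fin : FiniteDimensional ℝ Vh)
    (hVh_dom : ∀ v ∈ Vh, Summable fun k => lam k * ⟪v, b k⟫ ^ 2)
    (uh : ℕ → H) (lamh : ℕ → ℝ)
    (huh_mem : ∀ i ∈ Finset.Icc m M, uh i ∈ Vh)
    (huh_orth : ∀ i ∈ Finset.Icc m M, ∀ j ∈ Finset.Icc m M,
      ⟪uh i, uh j⟫ = if i = j then 1 else 0)
    (hlamh_mono : ∀ i ∈ Finset.Icc m M, ∀ j ∈ Finset.Icc m M, i ≤ j → lamh i ≤ lamh j)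
    (heig_h : ∀ i ∈ Finset.Icc m M, ∀ v ∈ Vh,
      (∑' k, lam k * (⟪uh i, b k⟫ * ⟪v, b k⟫)) = lamh i * ⟪uh i, v⟫)
    (gh : H → H)
    (hgh : ∀ w, gh w = ∑ i ∈ Finset.Icc m M, ⟪w, uh i⟫ • uh i)
    (Res : H → H)
    (hRes : ∀ v, Res v =
      (∑' k, (Real.sqrt (lam k) * ⟪gh v, b k⟫) • b k)
        - ∑' k, ((Real.sqrt (lam k))⁻¹ *
            ⟪∑ j ∈ Finset.Icc m M,
                (∑' k', lam k' * (⟪uh j, b k'⟫ * ⟪gh v, b k'⟫)) • uh j,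
              b k⟫) • b k)
    :
    (∑' k, ‖Res (b k)‖ ^ 2)
      = ∑ i ∈ Finset.Icc m M,
          (sSup {r : ℝ | ∃ v : H, (Summable fun k => lam k * ⟪v, b k⟫ ^ 2) ∧
              Real.sqrt (∑' k, lam k * ⟪v, b k⟫ ^ 2) = 1 ∧
              r = lamh i * ⟪uh i, v⟫
                    - ∑' k, lam k * (⟪uh i, b k⟫ * ⟪v, b k⟫)}) ^ 2 := by
  classical
  set I := Finset.Icc m M with hI
  have hlam0 : ∀ k, lam 0 ≤ lam k := fun k => hlam_mono (Nat.zero_le k)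
  have hsqrt_pos : ∀ k, 0 < Real.sqrt (lam k) := fun k => Real.sqrt_pos.mpr (hlam_pos k)
  have hsqrt_ne : ∀ k, Real.sqrt (lam k) ≠ 0 := fun k => (hsqrt_pos k).ne'
  have hsq_sqrt : ∀ k, Real.sqrt (lam k) ^ 2 = lam k := fun k => Real.sq_sqrt (hlam_pos k).le
  have hsum_lam : ∀ i ∈ I, Summable fun k => lam k * ⟪uh i, b k⟫ ^ 2 :=
    fun i hi => hVh_dom _ (huh_mem i hi)
  have hParseval : ∀ x y : H, HasSum (fun k => ⟪x, b k⟫ * ⟪y, b k⟫) ⟪x, y⟫ := by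
    intro x y
    have e : (fun k => ⟪x, b k⟫ * ⟪y, b k⟫) = fun k => ⟪x, b k⟫ * ⟪b k, y⟫ :=
      funext fun k => by rw [real_inner_comm (b k) y]
    rw [e]; exact b.hasSum_inner_mul_inner x y
  have hsum_sq : ∀ x : H, Summable fun k => ⟪x, b k⟫ ^ 2 := by
    intro x
    exact (hParseval x x).summable.congr fun k => (sq _).symm
  -- coefficient sequences
  set f : ℕ → ℕ → ℝ := fun i k => Real.sqrt (lam k) * ⟪uh i, b k⟫ with hf_def
  set g : ℕ → ℕ → ℝ := fun i k => lamh i / Real.sqrt (lam k) * ⟪uh i, b k⟫ with hg_def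
  set c : ℕ → ℕ → ℝ := fun i k => f i k - g i k with hc_def
  have hf2 : ∀ i ∈ I, Summable fun k => f i k ^ 2 := by
    intro i hi
    exact (hsum_lam i hi).congr fun k => by
      simp only [hf_def, mul_pow, hsq_sqrt k]
  have hg2 : ∀ i ∈ I, Summable fun k => g i k ^ 2 := by
    intro i hi
    apply Summable.of_nonneg_of_le (fun k => sq_nonneg _) (fun k => ?_)
      ((hsum_sq (uh i)).mul_left ((lamh i) ^ 2 / lam 0))
    simp only [hg_def, mul_pow, div_pow, hsq_sqrt k]
    have h1 : lamh i ^ 2 / lam k ≤ lamh i ^ 2 / lam 0 :=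
      div_le_div_of_nonneg_left (sq_nonneg _) (hlam_pos 0) (hlam0 k)
    exact mul_le_mul_of_nonneg_right h1 (sq_nonneg _)
  have hc2 : ∀ i ∈ I, Summable fun k => c i k ^ 2 :=
    fun i hi => summable_sq_sub (hf2 i hi) (hg2 i hi)
  -- the per-eigenpair residual vectors
  have hwex : ∀ i : ℕ, ∃ x : H, i ∈ I →
      HasSum (fun k => c i k • b k) x ∧ ∀ j, ⟪x, b j⟫ = c i j := by
    intro i
    by_cases hi : i ∈ I
    · obtain ⟨x, h1, h2⟩ := exists_vec b (hc2 i hi)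
      exact ⟨x, fun _ => ⟨h1, h2⟩⟩
    · exact ⟨0, fun h => absurd h hi⟩
  choose w hw using hwex
  have hwnorm : ∀ i ∈ I, ∑' k, c i k ^ 2 = ‖w i‖ ^ 2 := by
    intro i hi
    have h := (hParseval (w i) (w i)).tsum_eq
    rw [real_inner_self_eq_norm_sq] at h
    rw [← h]
    exact tsum_congr fun k => by rw [(hw i hi).2 k, sq]
  -- the central tsum identity
  have hident : ∀ i ∈ I, ∀ v : H, (Summable fun k => lam k * ⟪v, b k⟫ ^ 2) →
      HasSum (fun k => c i k * (Real.sqrt (lam k) * ⟪v, b k⟫))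
        ((∑' k, lam k * (⟪uh i, b k⟫ * ⟪v, b k⟫)) - lamh i * ⟪uh i, v⟫) := by
    intro i hi v hv
    have hd2 : Summable fun k => (Real.sqrt (lam k) * ⟪v, b k⟫) ^ 2 :=
      hv.congr fun k => by rw [mul_pow, hsq_sqrt k]
    have hA : Summable fun k => lam k * (⟪uh i, b k⟫ * ⟪v, b k⟫) := by
      refine (summable_mul_of_sq (hf2 i hi) hd2).congr fun k => ?_
      simp only [hf_def]
      exact alg_mul (Real.mul_self_sqrt (hlam_pos k).le)
    have key := hA.hasSum.sub ((hParseval (uh i) v).mul_left (lamh i))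
    have e : (fun k => lam k * (⟪uh i, b k⟫ * ⟪v, b k⟫)
        - lamh i * (⟪uh i, b k⟫ * ⟪v, b k⟫))
        = fun k => c i k * (Real.sqrt (lam k) * ⟪v, b k⟫) := by
      funext k
      simp only [hc_def, hf_def, hg_def]
      exact alg_id (Real.mul_self_sqrt (hlam_pos k).le) (hsqrt_ne k)
    rw [e] at key
    exact key
  -- rewriting the residual applied to basis vectors
  have hgv_mem : ∀ k, gh (b k) ∈ Vh := by
    intro k; rw [hgh]
    exact Submodule.sum_mem _ fun i hi => Submodule.smul_mem _ _ (huh_mem i hi)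
  have hgv_inner : ∀ k, ∀ j ∈ I, ⟪uh j, gh (b k)⟫ = ⟪b k, uh j⟫ := by
    intro k j hj
    rw [hgh, inner_sum]
    rw [Finset.sum_eq_single j]
    · rw [real_inner_smul_right, huh_orth j hj j hj, if_pos rfl, mul_one]
    · intro i hi hne
      rw [real_inner_smul_right, huh_orth j hj i hi, if_neg (fun h => hne h.symm), mul_zero]
    · intro h; exact absurd hj h
  have hY : ∀ k, (∑ j ∈ I, (∑' k', lam k' * (⟪uh j, b k'⟫ * ⟪gh (b k), b k'⟫)) • uh j)
      = ∑ j ∈ I, (lamh j * ⟪b k, uh j⟫) • uh j :=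
    fun k => Finset.sum_congr rfl fun j hj => by
      rw [heig_h j hj _ (hgv_mem k), hgv_inner k j hj]
  have hpex : ∀ i : ℕ, ∃ x : H, i ∈ I → HasSum (fun k => f i k • b k) x := by
    intro i
    by_cases hi : i ∈ I
    · obtain ⟨x, h1, _⟩ := exists_vec b (hf2 i hi); exact ⟨x, fun _ => h1⟩
    · exact ⟨0, fun h => absurd h hi⟩
  choose p hp using hpex
  have hqex : ∀ i : ℕ, ∃ x : H, i ∈ I → HasSum (fun k => g i k • b k) x := by
    intro i
    by_cases hi : i ∈ I
    · obtain ⟨x, h1, _⟩ := exists_vec b (hg2 i hi); exact ⟨x, fun _ => h1⟩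
    · exact ⟨0, fun h => absurd h hi⟩
  choose q hq using hqex
  have hpq : ∀ i ∈ I, p i - q i = w i := by
    intro i hi
    have h := (hp i hi).sub (hq i hi)
    have e : (fun k => f i k • b k - g i k • b k) = fun k => c i k • b k :=
      funext fun k => by rw [hc_def]; simp only [sub_smul]
    rw [e] at h
    exact h.unique (hw i hi).1
  have hResEq : ∀ k, Res (b k) = ∑ i ∈ I, ⟪b k, uh i⟫ • w i := by
    intro k
    rw [hRes]
    have h1 : HasSum (fun k' => (Real.sqrt (lam k') * ⟪gh (b k), b k'⟫) • b k')
        (∑ i ∈ I, ⟪b k, uh i⟫ • p i) := by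
      have hs := hasSum_sum (fun i hi => ((hp i hi).const_smul (⟪b k, uh i⟫)))
      have e : (fun k' => ∑ i ∈ I, ⟪b k, uh i⟫ • (f i k' • b k'))
          = fun k' => (Real.sqrt (lam k') * ⟪gh (b k), b k'⟫) • b k' := by
        funext k'
        simp only [smul_smul, ← Finset.sum_smul]
        congr 1
        rw [hgh, sum_inner, Finset.mul_sum]
        refine Finset.sum_congr rfl fun i hi => ?_
        rw [real_inner_smul_left]
        simp only [hf_def]; ring
      rw [e] at hs
      exact hs
    have h2 : HasSum (fun k' => ((Real.sqrt (lam k'))⁻¹ *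
        ⟪∑ j ∈ I, (∑' k'', lam k'' * (⟪uh j, b k''⟫ * ⟪gh (b k), b k''⟫)) • uh j, b k'⟫) • b k')
        (∑ i ∈ I, ⟪b k, uh i⟫ • q i) := by
      have hs := hasSum_sum (fun i hi => ((hq i hi).const_smul (⟪b k, uh i⟫)))
      have e : (fun k' => ∑ i ∈ I, ⟪b k, uh i⟫ • (g i k' • b k'))
          = fun k' => ((Real.sqrt (lam k'))⁻¹ *
            ⟪∑ j ∈ I, (∑' k'', lam k'' * (⟪uh j, b k''⟫ * ⟪gh (b k), b k''⟫)) • uh j, b k'⟫) • b k' := by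
        funext k'
        simp only [smul_smul, ← Finset.sum_smul]
        congr 1
        rw [hY k, sum_inner, Finset.mul_sum]
        refine Finset.sum_congr rfl fun i hi => ?_
        rw [real_inner_smul_left]
        simp only [hg_def]
        field_simp
      rw [e] at hs
      exact hs
    rw [h1.tsum_eq, h2.tsum_eq, ← Finset.sum_sub_distrib]
    refine Finset.sum_congr rfl fun i hi => ?_
    rw [← smul_sub, hpq i hi]
  -- Hilbert-Schmidt norm computation
  have hnorm : ∀ k, ‖Res (b k)‖ ^ 2
      = ∑ i ∈ I, ∑ j ∈ I, (⟪b k, uh i⟫ * ⟪b k, uh j⟫) * ⟪w i, w j⟫ := by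
    intro k
    rw [← real_inner_self_eq_norm_sq, hResEq k, sum_inner]
    refine Finset.sum_congr rfl fun i hi => ?_
    rw [real_inner_smul_left, inner_sum, Finset.mul_sum]
    refine Finset.sum_congr rfl fun j hj => ?_
    rw [real_inner_smul_right]
    ring
  have hsum_prod : ∀ i j : ℕ, Summable fun k => (⟪b k, uh i⟫ * ⟪b k, uh j⟫) * ⟪w i, w j⟫ := by
    intro i j
    apply Summable.mul_right
    refine (hParseval (uh i) (uh j)).summable.congr fun k => ?_
    rw [real_inner_comm (b k) (uh i), real_inner_comm (b k) (uh j)]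
  have hLHS : ∑' k, ‖Res (b k)‖ ^ 2 = ∑ i ∈ I, ⟪w i, w i⟫ := by
    rw [tsum_congr hnorm]
    rw [Summable.tsum_finsetSum fun i _ => summable_sum fun j _ => hsum_prod i j]
    refine Finset.sum_congr rfl fun i hi => ?_
    rw [Summable.tsum_finsetSum fun j _ => hsum_prod i j]
    have e : ∀ j ∈ I, ∑' k, (⟪b k, uh i⟫ * ⟪b k, uh j⟫) * ⟪w i, w j⟫
        = (if i = j then (1:ℝ) else 0) * ⟪w i, w j⟫ := by
      intro j hj
      rw [tsum_mul_right, ← huh_orth i hi j hj]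
      congr 1
      refine Eq.trans (tsum_congr fun k => ?_) (hParseval (uh i) (uh j)).tsum_eq
      rw [real_inner_comm (b k) (uh i), real_inner_comm (b k) (uh j)]
    rw [Finset.sum_congr rfl e, Finset.sum_eq_single i]
    · rw [if_pos rfl, one_mul]
    · intro j hj hne; rw [if_neg (fun h => hne h.symm), zero_mul]
    · intro h; exact absurd hi h
  rw [hLHS]
  -- now the right-hand side
  refine Finset.sum_congr rfl fun i hi => ?_
  have hSup : IsGreatest {r : ℝ | ∃ v : H, (Summable fun k => lam k * ⟪v, b k⟫ ^ 2) ∧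
      Real.sqrt (∑' k, lam k * ⟪v, b k⟫ ^ 2) = 1 ∧
      r = lamh i * ⟪uh i, v⟫
            - ∑' k, lam k * (⟪uh i, b k⟫ * ⟪v, b k⟫)} (‖w i‖) := by
    constructor
    · -- membership
      by_cases hwi : w i = 0
      · -- use v0 = (sqrt (lam 0))⁻¹ • b 0
        have hczero : ∀ k, c i k = 0 := by
          intro k
          rw [← (hw i hi).2 k, hwi, inner_zero_left]
        have hbcoef : ∀ k, ⟪(Real.sqrt (lam 0))⁻¹ • b 0, b k⟫
            = if k = 0 then (Real.sqrt (lam 0))⁻¹ else 0 := by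
          intro k
          rw [real_inner_smul_left, orthonormal_iff_ite.mp b.orthonormal 0 k]
          rcases eq_or_ne k 0 with h | h
          · subst h; simp
          · rw [if_neg (fun hh => h hh.symm), if_neg h, mul_zero]
        have hv0fun : (fun k => lam k * ⟪(Real.sqrt (lam 0))⁻¹ • b 0, b k⟫ ^ 2)
            = fun k => if k = 0 then (1:ℝ) else 0 := by
          funext k
          rw [hbcoef k]
          rcases eq_or_ne k 0 with h | h
          · subst h
            rw [if_pos rfl, if_pos rfl, inv_pow, Real.sq_sqrt (hlam_pos 0).le,
              mul_inv_cancel₀ (hlam_pos 0).ne']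
          · rw [if_neg h, if_neg h, zero_pow two_ne_zero, mul_zero]
        have hsummable : Summable fun k => lam k * ⟪(Real.sqrt (lam 0))⁻¹ • b 0, b k⟫ ^ 2 := by
          rw [hv0fun]; exact (hasSum_ite_eq 0 (1:ℝ)).summable
        refine ⟨(Real.sqrt (lam 0))⁻¹ • b 0, hsummable, ?_, ?_⟩
        · rw [hv0fun, (hasSum_ite_eq 0 (1:ℝ)).tsum_eq, Real.sqrt_one]
        · have hid := hident i hi _ hsummable
          have hzero : HasSum (fun k => c i k
              * (Real.sqrt (lam k) * ⟪(Real.sqrt (lam 0))⁻¹ • b 0, b k⟫)) 0 := by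
            have e0 : (fun k => c i k
                * (Real.sqrt (lam k) * ⟪(Real.sqrt (lam 0))⁻¹ • b 0, b k⟫)) = fun _ => (0:ℝ) :=
              funext fun k => by rw [hczero k, zero_mul]
            rw [e0]; exact hasSum_zero
          have huniq := hid.unique hzero
          rw [hwi, norm_zero]
          linarith
      · -- w i ≠ 0 : sup is attained
        have hwn : ‖w i‖ ≠ 0 := norm_ne_zero_iff.mpr hwi
        have hfv2 : Summable fun k => (-(c i k) / (Real.sqrt (lam k) * ‖w i‖)) ^ 2 := by
          apply Summable.of_nonneg_of_le (fun k => sq_nonneg _) (fun k => ?_)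
            ((hc2 i hi).mul_right ((lam 0 * ‖w i‖ ^ 2)⁻¹))
          simp only [div_pow, neg_sq, mul_pow, hsq_sqrt]
          rw [← div_eq_mul_inv]
          apply div_le_div_of_nonneg_left (sq_nonneg _)
            (mul_pos (hlam_pos 0) (pow_pos (norm_pos_iff.mpr hwi) 2))
            (mul_le_mul_of_nonneg_right (hlam0 k) (sq_nonneg _))
        obtain ⟨v, hvhs, hvcoef⟩ := exists_vec b hfv2
        have hlamcoef : ∀ k, lam k * ⟪v, b k⟫ ^ 2 = c i k ^ 2 * (‖w i‖ ^ 2)⁻¹ := by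
          intro k
          rw [hvcoef k]
          simp only [div_pow, neg_sq, mul_pow, hsq_sqrt]
          rw [← div_eq_mul_inv]
          rw [mul_div_assoc']
          rw [mul_div_mul_left _ _ (hlam_pos k).ne']
        have hsummv : Summable fun k => lam k * ⟪v, b k⟫ ^ 2 :=
          ((hc2 i hi).mul_right _).congr fun k => (hlamcoef k).symm
        refine ⟨v, hsummv, ?_, ?_⟩
        · rw [tsum_congr hlamcoef, tsum_mul_right, hwnorm i hi,
            mul_inv_cancel₀ (pow_ne_zero 2 hwn), Real.sqrt_one]
        · have hid := hident i hi v hsummv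
          have hcs : HasSum (fun k => c i k ^ 2) (‖w i‖ ^ 2) := by
            have h6 := (hc2 i hi).hasSum
            rwa [hwnorm i hi] at h6
          have h5 := hcs.mul_right (-(‖w i‖)⁻¹)
          have e1 : (fun k => c i k ^ 2 * (-(‖w i‖)⁻¹))
              = fun k => c i k * (Real.sqrt (lam k) * ⟪v, b k⟫) := by
            funext k
            rw [hvcoef k]
            exact alg_e1 (hsqrt_ne k) hwn
          have e2 : ‖w i‖ ^ 2 * (-(‖w i‖)⁻¹) = -‖w i‖ := by
            rw [pow_two]; field_simp
          rw [e1, e2] at h5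
          have huniq := hid.unique h5
          linarith
    · -- upper bound
      rintro r ⟨v, hvsum, hvnorm, hr⟩
      have hd2 : Summable fun k => (Real.sqrt (lam k) * ⟪v, b k⟫) ^ 2 :=
        hvsum.congr fun k => by rw [mul_pow, hsq_sqrt k]
      obtain ⟨z, hz, hzcoef⟩ := exists_vec b hd2
      have hznorm : ‖z‖ = 1 := by
        have h1 : ∑' k, lam k * ⟪v, b k⟫ ^ 2 = 1 := Real.sqrt_eq_one.mp hvnorm
        have h2 := (hParseval z z).tsum_eq
        rw [real_inner_self_eq_norm_sq] at h2
        have h3 : ∑' k, ⟪z, b k⟫ * ⟪z, b k⟫ = ∑' k, lam k * ⟪v, b k⟫ ^ 2 := by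
          refine tsum_congr fun k => ?_
          rw [hzcoef k]
          exact alg_sq (Real.mul_self_sqrt (hlam_pos k).le)
        have h4 : ‖z‖ ^ 2 = 1 := by rw [← h2, h3, h1]
        nlinarith [norm_nonneg z]
      have hwz : ⟪w i, z⟫ = ∑' k, c i k * (Real.sqrt (lam k) * ⟪v, b k⟫) := by
        rw [← (hParseval (w i) z).tsum_eq]
        exact tsum_congr fun k => by rw [(hw i hi).2 k, hzcoef k]
      have hid := (hident i hi v hvsum).tsum_eq
      have hrval : r = ⟪w i, -z⟫ := by
        rw [inner_neg_right, hwz, hid, hr]; ring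
      calc r = ⟪w i, -z⟫ := hrval
        _ ≤ ‖w i‖ * ‖-z‖ := real_inner_le_norm _ _
        _ = ‖w i‖ := by rw [norm_neg, hznorm, mul_one]
  rw [hSup.csSup_eq, ← real_inner_self_eq_norm_sq]
end

section
/- Assume the continuous gap conditions: λ_{m−1} < λ_m if m > 1, and λ_M < λ_{M+1}. Then the error in the sum of the cluster eigenvalues is bounded by the density matrix errors: ‖A^{1/2}(γ⁰ − γ_h)‖_{S2}² − λ_M ‖γ⁰ − γ_h‖_{S2}² ≤ Σ_{i=m}^{M} (λ_{ih} − λ_i) ≤ ‖A^{1/2}(γ⁰ − γ_h)‖_{S2}². -/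
open scoped RealInnerProductSpace

/-- 0-based indexing; gap conditions `λ_{m−1} < λ_m` if `m > 0` and
`λ_M < λ_{M+1}`: eigenvalue bounds
`‖A^{1/2}(γ⁰−γ_h)‖_{S2}² − λ_M‖γ⁰−γ_h‖_{S2}² ≤ Σ_i (λ_{ih}−λ_i) ≤ ‖A^{1/2}(γ⁰−γ_h)‖_{S2}²`. -/
theorem stmt_12
    {H : Type*} [NormedAddCommGroup H] [InnerProductSpace ℝ H] [CompleteSpace H]
    (b : HilbertBasis ℕ ℝ H)
    (lam : ℕ → ℝ) (hlam_pos : ∀ k, 0 < lam k) (hlam_mono : Monotone lam)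
    (hlam_tendsto : Filter.Tendsto lam Filter.atTop Filter.atTop)
    (m M : ℕ) (hmM : m ≤ M)
    (hgap_low : 0 < m → lam (m - 1) < lam m)
    (hgap_up : lam M < lam (M + 1))
    (Vh : Submodule ℝ H) (hVh_fin : FiniteDimensional ℝ Vh)
    (hVh_dom : ∀ v ∈ Vh, Summable fun k => lam k * ⟪v, b k⟫ ^ 2)
    (uh : ℕ → H) (lamh : ℕ → ℝ)
    (huh_mem : ∀ i ∈ Finset.Icc m M, uh i ∈ Vh)
    (huh_orth : ∀ i ∈ Finset.Icc m M, ∀ j ∈ Finset.Icc m M,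
      ⟪uh i, uh j⟫ = if i = j then 1 else 0)
    (hlamh_mono : ∀ i ∈ Finset.Icc m M, ∀ j ∈ Finset.Icc m M, i ≤ j → lamh i ≤ lamh j)
    (heig_h : ∀ i ∈ Finset.Icc m M, ∀ v ∈ Vh,
      (∑' k, lam k * (⟪uh i, b k⟫ * ⟪v, b k⟫)) = lamh i * ⟪uh i, v⟫)
    (g0 gh : H → H)
    (hg0 : ∀ w, g0 w = ∑ i ∈ Finset.Icc m M, ⟪w, b i⟫ • b i)
    (hgh : ∀ w, gh w = ∑ i ∈ Finset.Icc m M, ⟪w, uh i⟫ • uh i)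
    (ESq : ℝ)
    (hESq : ESq = ∑' k, ∑' j, lam j * ⟪g0 (b k) - gh (b k), b j⟫ ^ 2)
    (L2sq : ℝ) (hL2sq : L2sq = ∑' k, ‖g0 (b k) - gh (b k)‖ ^ 2)
    :
    ESq - lam M * L2sq ≤ (∑ i ∈ Finset.Icc m M, (lamh i - lam i)) ∧
    (∑ i ∈ Finset.Icc m M, (lamh i - lam i)) ≤ ESq := by
  classical
  set I : Finset ℕ := Finset.Icc m M with hIdef
  have hbb : ∀ i j : ℕ, ⟪b i, b j⟫ = if i = j then (1:ℝ) else 0 :=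
    fun i j => orthonormal_iff_ite.mp b.orthonormal i j
  set q : ℕ → ℕ → ℝ := fun i k => ⟪uh i, b k⟫ with hqdef
  set P : ℕ → ℕ → ℝ := fun k j => ∑ i ∈ I, q i k * q i j with hPdef
  -- g0 on basis vectors
  have hg0b : ∀ k, g0 (b k) = if k ∈ I then b k else 0 := by
    intro k
    rw [hg0 (b k)]
    have h1 : ∀ i ∈ I, ⟪b k, b i⟫ • b i = if k = i then b i else 0 := by
      intro i _
      rw [hbb k i]
      by_cases h : k = i <;> simp [h]
    rw [Finset.sum_congr rfl h1, Finset.sum_ite_eq]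
  -- inner products with basis
  have hinner : ∀ k j, ⟪g0 (b k) - gh (b k), b j⟫
      = (if k ∈ I then (if j = k then (1:ℝ) else 0) else 0) - P k j := by
    intro k j
    rw [inner_sub_left, hg0b k, hgh (b k)]
    congr 1
    · by_cases h : k ∈ I
      · simp only [h, if_true]
        rw [hbb k j]
        simp [eq_comm]
      · simp [h]
    · rw [sum_inner]
      apply Finset.sum_congr rfl
      intro i _
      rw [real_inner_smul_left, real_inner_comm (uh i) (b k)]
  -- summability of eigen-coefficients
  have hsum1 : ∀ i ∈ I, Summable fun k => lam k * q i k ^ 2 := fun i hi =>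
    hVh_dom (uh i) (huh_mem i hi)
  have hsumq : ∀ i ∈ I, ∀ i' ∈ I, Summable fun k => q i k * q i' k := by
    intro i _ i' _
    have h := b.summable_inner_mul_inner (uh i) (uh i')
    have h2 : (fun k => q i k * q i' k) = fun k => ⟪uh i, b k⟫ * ⟪b k, uh i'⟫ := by
      funext k
      simp only [hqdef]
      rw [real_inner_comm (uh i') (b k)]
    rw [h2]; exact h
  have htsumq : ∀ i ∈ I, ∀ i' ∈ I,
      (∑' k, q i k * q i' k) = if i = i' then (1:ℝ) else 0 := by
    intro i hi i' hi'
    have h := b.tsum_inner_mul_inner (uh i) (uh i')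
    calc (∑' k, q i k * q i' k) = ⟪uh i, uh i'⟫ := by
          rw [← h]
          apply tsum_congr
          intro k
          simp only [hqdef]
          rw [real_inner_comm (uh i') (b k)]
      _ = if i = i' then 1 else 0 := huh_orth i hi i' hi'
  have hqsq_sum : ∀ i ∈ I, Summable fun k => q i k ^ 2 := by
    intro i hi
    have h := hsumq i hi i hi
    have h2 : (fun k => q i k ^ 2) = fun k => q i k * q i k := by
      funext k; rw [sq]
    rw [h2]; exact h
  have hqsq_tsum : ∀ i ∈ I, (∑' k, q i k ^ 2) = 1 := by
    intro i hi
    have h := htsumq i hi i hi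
    have h2 : (∑' k, q i k ^ 2) = ∑' k, q i k * q i k := tsum_congr fun k => by rw [sq]
    rw [h2, h]
    simp
  have hteig : ∀ i ∈ I, ∀ i' ∈ I,
      (∑' k, lam k * (q i k * q i' k)) = lamh i * (if i = i' then (1:ℝ) else 0) := by
    intro i hi i' hi'
    calc (∑' k, lam k * (q i k * q i' k)) = lamh i * ⟪uh i, uh i'⟫ :=
          heig_h i hi (uh i') (huh_mem i' hi')
      _ = lamh i * (if i = i' then 1 else 0) := by rw [huh_orth i hi i' hi']
  have hsum2 : ∀ i ∈ I, ∀ i' ∈ I, Summable fun k => lam k * (q i k * q i' k) := by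
    intro i hi i' hi'
    apply Summable.of_abs
    refine Summable.of_nonneg_of_le (fun k => abs_nonneg _) (fun k => ?_)
      (((hsum1 i hi).add (hsum1 i' hi')).div_const 2)
    have hl := hlam_pos k
    rw [abs_mul, abs_of_pos hl, abs_mul]
    nlinarith [sq_nonneg (|q i k| - |q i' k|), abs_nonneg (q i k), abs_nonneg (q i' k),
      sq_abs (q i k), sq_abs (q i' k)]
  have hP_diag : ∀ k, P k k = ∑ i ∈ I, q i k ^ 2 := by
    intro k
    apply Finset.sum_congr rfl
    intro i _
    rw [sq]
  -- norm of (g0 - gh) b k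
  have hnorm : ∀ k, ‖g0 (b k) - gh (b k)‖ ^ 2
      = (if k ∈ I then 1 - 2 * P k k else 0) + P k k := by
    intro k
    rw [norm_sub_sq_real]
    have h0 : ‖g0 (b k)‖ ^ 2 = if k ∈ I then (1:ℝ) else 0 := by
      rw [hg0b k]
      by_cases h : k ∈ I <;> simp [h, b.orthonormal.1 k]
    have h1 : ⟪g0 (b k), gh (b k)⟫ = if k ∈ I then P k k else 0 := by
      rw [hg0b k, hgh (b k)]
      by_cases h : k ∈ I
      · simp only [h, if_true]
        rw [inner_sum, hP_diag k]
        apply Finset.sum_congr rfl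
        intro i _
        rw [real_inner_smul_right, real_inner_comm (uh i) (b k), sq]
      · simp [h]
    have h2 : ‖gh (b k)‖ ^ 2 = P k k := by
      rw [← real_inner_self_eq_norm_sq, hgh (b k), sum_inner, hP_diag k]
      apply Finset.sum_congr rfl
      intro i hi
      rw [real_inner_smul_left]
      have h3 : ⟪uh i, ∑ j ∈ I, ⟪b k, uh j⟫ • uh j⟫ = ⟪b k, uh i⟫ := by
        rw [inner_sum]
        rw [Finset.sum_congr rfl fun j hj => by rw [real_inner_smul_right, huh_orth i hi j hj]]
        simp [mul_ite, Finset.sum_ite_eq, hi]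
      rw [h3, real_inner_comm (uh i) (b k), sq]
    rw [h0, h1, h2]
    by_cases h : k ∈ I <;> simp [h] <;> ring
  have hPsum : Summable fun k => P k k := by
    have h : (fun k => P k k) = fun k => ∑ i ∈ I, q i k ^ 2 := funext hP_diag
    rw [h]
    exact summable_sum fun i hi => hqsq_sum i hi
  -- L2sq formula
  have hL2 : L2sq = (∑ k ∈ I, (1 - 2 * P k k)) + (I.card : ℝ) := by
    rw [hL2sq, tsum_congr hnorm]
    rw [Summable.tsum_add (summable_of_ne_finset_zero (s := I) fun k hk => by simp [hk]) hPsum]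
    congr 1
    · rw [tsum_eq_sum (s := I) fun k hk => by simp [hk]]
      exact Finset.sum_congr rfl fun k hk => by simp [hk]
    · rw [tsum_congr hP_diag, Summable.tsum_finsetSum fun i hi => hqsq_sum i hi,
        Finset.sum_congr rfl fun i hi => hqsq_tsum i hi]
      simp
  -- inner tsum for ESq
  have hinner_tsum : ∀ k, (∑' j, lam j * ⟪g0 (b k) - gh (b k), b j⟫ ^ 2)
      = (if k ∈ I then lam k * (1 - 2 * P k k) else 0) + ∑ i ∈ I, lamh i * q i k ^ 2 := by
    intro k
    set X : ℕ → ℝ := fun j => if k ∈ I then (if j = k then (1:ℝ) else 0) else 0 with hX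
    have hF2sum : ∀ p ∈ I ×ˢ I,
        Summable fun j => (q p.1 k * q p.2 k) * (lam j * (q p.1 j * q p.2 j)) := by
      intro p hp
      rcases Finset.mem_product.mp hp with ⟨h1', h2'⟩
      exact (hsum2 p.1 h1' p.2 h2').mul_left _
    have hsplit : ∀ j, lam j * ⟪g0 (b k) - gh (b k), b j⟫ ^ 2
        = (lam j * X j ^ 2 - 2 * lam j * X j * P k j)
          + ∑ p ∈ I ×ˢ I, (q p.1 k * q p.2 k) * (lam j * (q p.1 j * q p.2 j)) := by
      intro j
      rw [hinner k j]
      have hPsq : P k j * P k j = ∑ p ∈ I ×ˢ I, q p.1 k * q p.1 j * (q p.2 k * q p.2 j) := by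
        rw [hPdef]
        rw [Finset.sum_mul_sum]
        rw [Finset.sum_product]
      have h4 : lam j * (P k j * P k j)
          = ∑ p ∈ I ×ˢ I, (q p.1 k * q p.2 k) * (lam j * (q p.1 j * q p.2 j)) := by
        rw [hPsq, Finset.mul_sum]
        exact Finset.sum_congr rfl fun p _ => by ring
      have h5 : lam j * (X j - P k j) ^ 2
          = (lam j * X j ^ 2 - 2 * lam j * X j * P k j) + lam j * (P k j * P k j) := by
        ring
      rw [h5, h4]
    rw [tsum_congr hsplit]
    have hS1 : Summable fun j => lam j * X j ^ 2 - 2 * lam j * X j * P k j := by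
      apply summable_of_ne_finset_zero (s := {k})
      intro j hj
      have : X j = 0 := by
        simp only [hX]
        simp only [Finset.mem_singleton] at hj
        simp [hj]
      simp [this]
    have hS2 : Summable fun j => ∑ p ∈ I ×ˢ I, (q p.1 k * q p.2 k) * (lam j * (q p.1 j * q p.2 j)) :=
      summable_sum hF2sum
    rw [Summable.tsum_add hS1 hS2]
    congr 1
    · rw [tsum_eq_sum (s := {k}) fun j hj => by
        have : X j = 0 := by
          simp only [hX]
          simp only [Finset.mem_singleton] at hj
          simp [hj]
        simp [this]]
      rw [Finset.sum_singleton]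
      by_cases h : k ∈ I
      · simp only [hX, h, if_true, if_pos rfl]
        ring
      · simp only [hX, h, if_false]
        ring
    · rw [Summable.tsum_finsetSum hF2sum]
      have hval : ∀ p ∈ I ×ˢ I,
          (∑' j, (q p.1 k * q p.2 k) * (lam j * (q p.1 j * q p.2 j)))
            = (q p.1 k * q p.2 k) * (lamh p.1 * (if p.1 = p.2 then (1:ℝ) else 0)) := by
        intro p hp
        rcases Finset.mem_product.mp hp with ⟨h1', h2'⟩
        rw [tsum_mul_left, hteig p.1 h1' p.2 h2']
      rw [Finset.sum_congr rfl hval]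
      rw [Finset.sum_product]
      apply Finset.sum_congr rfl
      intro i hi
      rw [Finset.sum_congr rfl (g := fun i' => if i = i' then q i k * q i' k * lamh i else 0)
          (fun i' _ => by by_cases h : i = i' <;> simp [h])]
      rw [Finset.sum_ite_eq I i fun i' => q i k * q i' k * lamh i]
      simp only [hi, if_true]
      ring
  -- ESq formula
  have hE : ESq = (∑ k ∈ I, lam k * (1 - 2 * P k k)) + ∑ i ∈ I, lamh i := by
    rw [hESq, tsum_congr hinner_tsum]
    rw [Summable.tsum_add (summable_of_ne_finset_zero (s := I) fun k hk => by simp [hk])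
        (summable_sum fun i hi => (hqsq_sum i hi).mul_left (lamh i))]
    congr 1
    · rw [tsum_eq_sum (s := I) fun k hk => by simp [hk]]
      exact Finset.sum_congr rfl fun k hk => by simp [hk]
    · rw [Summable.tsum_finsetSum fun i hi => (hqsq_sum i hi).mul_left (lamh i)]
      apply Finset.sum_congr rfl
      intro i hi
      rw [tsum_mul_left, hqsq_tsum i hi, mul_one]
  -- Bessel
  have hbessel : ∀ k ∈ I, P k k ≤ 1 := by
    intro k hk
    have h := sq_nonneg ‖g0 (b k) - gh (b k)‖
    rw [hnorm k] at h
    simp only [hk, if_true] at h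
    linarith
  -- final algebra
  set S := ∑ i ∈ I, (lamh i - lam i) with hS
  have hsplitS : S = (∑ i ∈ I, lamh i) - ∑ i ∈ I, lam i := Finset.sum_sub_distrib _ _
  have key1 : ESq - S = ∑ k ∈ I, 2 * (lam k * (1 - P k k)) := by
    rw [hE, hsplitS]
    have h : ∑ k ∈ I, 2 * (lam k * (1 - P k k))
        = ∑ k ∈ I, lam k * (1 - 2 * P k k) + ∑ k ∈ I, lam k := by
      rw [← Finset.sum_add_distrib]
      exact Finset.sum_congr rfl fun k _ => by ring
    rw [h]; ring
  have hL2' : L2sq = ∑ k ∈ I, 2 * (1 - P k k) := by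
    rw [hL2]
    have hc : (I.card : ℝ) = ∑ k ∈ I, (1:ℝ) := by simp
    rw [hc, ← Finset.sum_add_distrib]
    exact Finset.sum_congr rfl fun k _ => by ring
  have key2 : ESq - lam M * L2sq - S = ∑ k ∈ I, 2 * ((lam k - lam M) * (1 - P k k)) := by
    have h1 : ∑ k ∈ I, 2 * ((lam k - lam M) * (1 - P k k))
        = ∑ k ∈ I, (2 * (lam k * (1 - P k k)) - lam M * (2 * (1 - P k k))) :=
      Finset.sum_congr rfl fun k _ => by ring
    have h2 : ∑ k ∈ I, lam M * (2 * (1 - P k k)) = lam M * L2sq := by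
      rw [hL2', Finset.mul_sum]
    rw [h1, Finset.sum_sub_distrib, h2, ← key1]
    ring
  have hnn : ∀ k ∈ I, 0 ≤ 1 - P k k := fun k hk => by linarith [hbessel k hk]
  have h1 : 0 ≤ ∑ k ∈ I, 2 * (lam k * (1 - P k k)) :=
    Finset.sum_nonneg fun k hk => by nlinarith [hlam_pos k, hnn k hk]
  have h2 : ∑ k ∈ I, 2 * ((lam k - lam M) * (1 - P k k)) ≤ 0 :=
    Finset.sum_nonpos fun k hk => by
      have hkM : lam k ≤ lam M := hlam_mono (Finset.mem_Icc.mp hk).2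
      nlinarith [hnn k hk]
  exact ⟨by linarith, by linarith⟩
end

section
/- Assume the continuous gap conditions: λ_{m−1} < λ_m if m > 1, and λ_M < λ_{M+1}. Then the energy norm of the density matrix error is bounded by the cluster residual norm as ‖A^{1/2}(γ⁰ − γ_h)‖_{S2}² ≤ N_0² + (λ_M + λ_{Mh}) ‖γ⁰ − γ_h‖_{S2}². -/
open scoped RealInnerProductSpace
set_option maxHeartbeats 1000000

lemma aux_inner_expand (I : Finset ℕ) (w W : ℕ → ℝ) (c : ℕ → ℕ → ℝ)
    (hsum : ∀ i ∈ I, ∀ j ∈ I, Summable (fun k => w k * (c i k * c j k)))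
    (hval : ∀ i ∈ I, ∀ j ∈ I, (∑' k, w k * (c i k * c j k)) = if i = j then W i else 0)
    (k : ℕ) :
    ∑' j, w j * ((if k ∈ I ∧ j = k then (1:ℝ) else 0) - ∑ i ∈ I, c i k * c i j) ^ 2
      = (if k ∈ I then w k * (1 - 2 * ∑ i ∈ I, c i k ^ 2) else 0)
        + ∑ i ∈ I, W i * c i k ^ 2 := by
  classical
  set v : ℝ := if k ∈ I then w k * (1 - 2 * ∑ i ∈ I, c i k ^ 2) else 0 with hv
  set g : ℕ → ℝ := fun j => ∑ i ∈ I, ∑ i' ∈ I, (c i k * c i' k) * (w j * (c i j * c i' j))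
    with hgdef
  have hgS : ∀ j, g j = w j * (∑ i ∈ I, c i k * c i j) ^ 2 := by
    intro j
    rw [hgdef, sq, Finset.sum_mul_sum, Finset.mul_sum]
    exact Finset.sum_congr rfl fun i _ => by
      rw [Finset.mul_sum]; exact Finset.sum_congr rfl fun i' _ => by ring
  have hgsum : Summable g := by
    refine summable_sum fun i hi => summable_sum fun i' hi' => ?_
    exact (hsum i hi i' hi').mul_left _
  have hδsum : Summable (fun j => if j = k then v else 0) := (hasSum_ite_eq k v).summable
  have hpt : ∀ j, w j * ((if k ∈ I ∧ j = k then (1:ℝ) else 0) - ∑ i ∈ I, c i k * c i j) ^ 2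
      = g j + (if j = k then v else 0) := by
    intro j
    by_cases hj : j = k
    · subst hj
      by_cases hk : j ∈ I
      · have h2 : (∑ i ∈ I, c i j * c i j) = ∑ i ∈ I, c i j ^ 2 :=
          Finset.sum_congr rfl fun i _ => (sq (c i j)).symm
        rw [if_pos ⟨hk, rfl⟩, if_pos rfl, hgS, hv, if_pos hk, h2]
        ring
      · rw [if_neg (fun h => hk h.1), if_pos rfl, hgS, hv, if_neg hk]
        ring
    · rw [if_neg (fun h => hj h.2), if_neg hj, hgS]
      ring
  calc ∑' j, w j * ((if k ∈ I ∧ j = k then (1:ℝ) else 0) - ∑ i ∈ I, c i k * c i j) ^ 2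
      = ∑' j, (g j + (if j = k then v else 0)) := tsum_congr hpt
    _ = (∑' j, g j) + v := by rw [Summable.tsum_add hgsum hδsum, tsum_ite_eq]
    _ = (∑ i ∈ I, W i * c i k ^ 2) + v := by
        congr 1
        rw [hgdef, Summable.tsum_finsetSum (fun i hi => summable_sum fun i' hi' => (hsum i hi i' hi').mul_left _)]
        refine Finset.sum_congr rfl fun i hi => ?_
        rw [Summable.tsum_finsetSum (fun i' hi' => (hsum i hi i' hi').mul_left _)]
        calc ∑ i' ∈ I, ∑' j, (c i k * c i' k) * (w j * (c i j * c i' j))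
            = ∑ i' ∈ I, (if i = i' then (c i k * c i' k) * W i else 0) := by
              refine Finset.sum_congr rfl fun i' hi' => ?_
              rw [tsum_mul_left, hval i hi i' hi']
              split_ifs <;> ring
          _ = (c i k * c i k) * W i := by rw [Finset.sum_ite_eq, if_pos hi]
          _ = W i * c i k ^ 2 := by ring
    _ = v + ∑ i ∈ I, W i * c i k ^ 2 := add_comm _ _


/-- 0-based indexing: first upper bound for the density matrix error,
`‖A^{1/2}(γ⁰ − γ_h)‖_{S2}² ≤ N₀² + (λ_M + λ_{Mh})‖γ⁰ − γ_h‖_{S2}²`. -/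
theorem stmt_13
    {H : Type*} [NormedAddCommGroup H] [InnerProductSpace ℝ H] [CompleteSpace H]
    (b : HilbertBasis ℕ ℝ H)
    (lam : ℕ → ℝ) (hlam_pos : ∀ k, 0 < lam k) (hlam_mono : Monotone lam)
    (hlam_tendsto : Filter.Tendsto lam Filter.atTop Filter.atTop)
    (m M : ℕ) (hmM : m ≤ M)
    (hgap_low : 0 < m → lam (m - 1) < lam m)
    (hgap_up : lam M < lam (M + 1))
    (Vh : Submodule ℝ H) (hVh_fin : FiniteDimensional ℝ Vh)
    (hVh_dom : ∀ v ∈ Vh, Summable fun k => lam k * ⟪v, b k⟫ ^ 2)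
    (uh : ℕ → H) (lamh : ℕ → ℝ)
    (huh_mem : ∀ i ∈ Finset.Icc m M, uh i ∈ Vh)
    (huh_orth : ∀ i ∈ Finset.Icc m M, ∀ j ∈ Finset.Icc m M,
      ⟪uh i, uh j⟫ = if i = j then 1 else 0)
    (hlamh_mono : ∀ i ∈ Finset.Icc m M, ∀ j ∈ Finset.Icc m M, i ≤ j → lamh i ≤ lamh j)
    (heig_h : ∀ i ∈ Finset.Icc m M, ∀ v ∈ Vh,
      (∑' k, lam k * (⟪uh i, b k⟫ * ⟪v, b k⟫)) = lamh i * ⟪uh i, v⟫)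
    (g0 gh : H → H)
    (hg0 : ∀ w, g0 w = ∑ i ∈ Finset.Icc m M, ⟪w, b i⟫ • b i)
    (hgh : ∀ w, gh w = ∑ i ∈ Finset.Icc m M, ⟪w, uh i⟫ • uh i)
    (ESq : ℝ)
    (hESq : ESq = ∑' k, ∑' j, lam j * ⟪g0 (b k) - gh (b k), b j⟫ ^ 2)
    (L2sq : ℝ) (hL2sq : L2sq = ∑' k, ‖g0 (b k) - gh (b k)‖ ^ 2)
    (N0sq : ℝ)
    (hN0sq : N0sq = ∑' k, ∑ i ∈ Finset.Icc m M,
      (lam k)⁻¹ * ((lam k - lamh i) ^ 2 * ⟪uh i, b k⟫ ^ 2))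
    :
    ESq ≤ N0sq + (lam M + lamh M) * L2sq := by
  classical
  set I := Finset.Icc m M with hI
  have hMI : M ∈ I := by simp [hI, hmM]
  have hbo := orthonormal_iff_ite.mp b.orthonormal
  -- basic summability and values
  have hp_summ : ∀ i ∈ I, Summable (fun k => ⟪uh i, b k⟫ ^ 2) := by
    intro i hi
    exact (b.summable_inner_mul_inner (uh i) (uh i)).congr fun k => by
      rw [real_inner_comm (b k) (uh i), sq]
  have hp_sum : ∀ i ∈ I, (∑' k, ⟪uh i, b k⟫ ^ 2) = 1 := by
    intro i hi
    have h := b.tsum_inner_mul_inner (uh i) (uh i)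
    rw [huh_orth i hi i hi, if_pos rfl] at h
    exact (tsum_congr fun k => by rw [real_inner_comm (b k) (uh i), sq]).trans h
  have hone_summ : ∀ i ∈ I, ∀ j ∈ I,
      Summable (fun k => (1:ℝ) * (⟪uh i, b k⟫ * ⟪uh j, b k⟫)) := by
    intro i hi j hj
    exact (b.summable_inner_mul_inner (uh i) (uh j)).congr fun k => by
      rw [real_inner_comm (b k) (uh j)]; ring
  have hone_val : ∀ i ∈ I, ∀ j ∈ I,
      (∑' k, (1:ℝ) * (⟪uh i, b k⟫ * ⟪uh j, b k⟫)) = if i = j then (1:ℝ) else 0 := by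
    intro i hi j hj
    have h := b.tsum_inner_mul_inner (uh i) (uh j)
    rw [huh_orth i hi j hj] at h
    exact (tsum_congr fun k => by rw [real_inner_comm (b k) (uh j)]; ring).trans h
  have hlam_summ : ∀ i ∈ I, Summable (fun k => lam k * ⟪uh i, b k⟫ ^ 2) :=
    fun i hi => hVh_dom _ (huh_mem i hi)
  have hlamcross_summ : ∀ i ∈ I, ∀ j ∈ I,
      Summable (fun k => lam k * (⟪uh i, b k⟫ * ⟪uh j, b k⟫)) := by
    intro i hi j hj
    refine Summable.of_abs (Summable.of_nonneg_of_le (fun k => abs_nonneg _)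
      (fun k => ?_) ((hlam_summ i hi).add (hlam_summ j hj)))
    have h0 := (hlam_pos k).le
    rw [abs_mul, abs_of_nonneg h0]
    have habs : |⟪uh i, b k⟫ * ⟪uh j, b k⟫| ≤ ⟪uh i, b k⟫ ^ 2 + ⟪uh j, b k⟫ ^ 2 := by
      apply abs_le.mpr
      constructor
      · nlinarith [sq_nonneg (⟪uh i, b k⟫ + ⟪uh j, b k⟫)]
      · nlinarith [sq_nonneg (⟪uh i, b k⟫ - ⟪uh j, b k⟫)]
    calc lam k * |⟪uh i, b k⟫ * ⟪uh j, b k⟫|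
        ≤ lam k * (⟪uh i, b k⟫ ^ 2 + ⟪uh j, b k⟫ ^ 2) := by
          exact mul_le_mul_of_nonneg_left habs h0
      _ = lam k * ⟪uh i, b k⟫ ^ 2 + lam k * ⟪uh j, b k⟫ ^ 2 := by ring
  have hlamcross_val : ∀ i ∈ I, ∀ j ∈ I,
      (∑' k, lam k * (⟪uh i, b k⟫ * ⟪uh j, b k⟫)) = if i = j then lamh i else 0 := by
    intro i hi j hj
    rw [heig_h i hi (uh j) (huh_mem j hj), huh_orth i hi j hj]
    split_ifs <;> simp
  have hlamp_sum : ∀ i ∈ I, (∑' k, lam k * ⟪uh i, b k⟫ ^ 2) = lamh i := by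
    intro i hi
    have h := hlamcross_val i hi i hi
    rw [if_pos rfl] at h
    exact (tsum_congr fun k => by rw [sq]).trans h
  have hlaminv_summ : ∀ i ∈ I, Summable (fun k => (lam k)⁻¹ * ⟪uh i, b k⟫ ^ 2) := by
    intro i hi
    refine Summable.of_nonneg_of_le (fun k => mul_nonneg (inv_nonneg.mpr (hlam_pos k).le) (sq_nonneg _)) (fun k => ?_)
      ((hp_summ i hi).mul_left ((lam 0)⁻¹))
    apply mul_le_mul_of_nonneg_right _ (sq_nonneg _)
    exact inv_anti₀ (hlam_pos 0) (hlam_mono (Nat.zero_le k))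
  -- the matrix element of the density-matrix difference
  have hd : ∀ k j, ⟪g0 (b k) - gh (b k), b j⟫
      = (if k ∈ I ∧ j = k then (1:ℝ) else 0) - ∑ i ∈ I, ⟪uh i, b k⟫ * ⟪uh i, b j⟫ := by
    intro k j
    rw [inner_sub_left, hg0, hgh, sum_inner, sum_inner]
    congr 1
    · calc ∑ i ∈ I, ⟪⟪b k, b i⟫ • b i, b j⟫
          = ∑ i ∈ I, (if i = k then ⟪b k, b j⟫ else 0) := by
            refine Finset.sum_congr rfl fun i _ => ?_
            rw [real_inner_smul_left, hbo k i]
            rcases eq_or_ne i k with h | h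
            · rw [if_pos h.symm, if_pos h, one_mul, h]
            · rw [if_neg (fun hh => h hh.symm), if_neg h, zero_mul]
        _ = if k ∈ I then ⟪b k, b j⟫ else 0 := Finset.sum_ite_eq' I k _
        _ = if k ∈ I ∧ j = k then 1 else 0 := by
            by_cases hk : k ∈ I
            · rw [if_pos hk, hbo k j]
              by_cases hj : j = k
              · rw [if_pos (hj.symm), if_pos ⟨hk, hj⟩]
              · rw [if_neg (fun hh => hj hh.symm), if_neg (fun hh => hj hh.2)]
            · rw [if_neg hk, if_neg (fun hh => hk hh.1)]
    · refine Finset.sum_congr rfl fun i _ => ?_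
      rw [real_inner_smul_left, real_inner_comm (b k) (uh i)]
  -- the N₀ summand and its expansion
  have ha_eq : ∀ i k, (lam k)⁻¹ * ((lam k - lamh i) ^ 2 * ⟪uh i, b k⟫ ^ 2)
      = lam k * ⟪uh i, b k⟫ ^ 2 - (2 * lamh i) * ⟪uh i, b k⟫ ^ 2
        + lamh i ^ 2 * ((lam k)⁻¹ * ⟪uh i, b k⟫ ^ 2) := by
    intro i k
    have h := (hlam_pos k).ne'
    field_simp
    ring
  have ha_summ : ∀ i ∈ I,
      Summable (fun k => (lam k)⁻¹ * ((lam k - lamh i) ^ 2 * ⟪uh i, b k⟫ ^ 2)) := by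
    intro i hi
    refine (((hlam_summ i hi).sub ((hp_summ i hi).mul_left (2 * lamh i))).add
      ((hlaminv_summ i hi).mul_left (lamh i ^ 2))).congr fun k => (ha_eq i k).symm
  -- closed form for ESq
  have hES : ESq = (∑ k ∈ I, lam k * (1 - 2 * ∑ i ∈ I, ⟪uh i, b k⟫ ^ 2)) + ∑ i ∈ I, lamh i := by
    rw [hESq]
    have h1 : ∀ k, (∑' j, lam j * ⟪g0 (b k) - gh (b k), b j⟫ ^ 2)
        = (if k ∈ I then lam k * (1 - 2 * ∑ i ∈ I, ⟪uh i, b k⟫ ^ 2) else 0)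
          + ∑ i ∈ I, lamh i * ⟪uh i, b k⟫ ^ 2 := by
      intro k
      rw [← aux_inner_expand I lam lamh (fun i k => ⟪uh i, b k⟫) hlamcross_summ hlamcross_val k]
      exact tsum_congr fun j => by rw [hd k j]
    have hF1 : Summable (fun k => if k ∈ I then lam k * (1 - 2 * ∑ i ∈ I, ⟪uh i, b k⟫ ^ 2) else 0) :=
      summable_of_ne_finset_zero (s := I) fun k hk => if_neg hk
    have hF2 : Summable (fun k => ∑ i ∈ I, lamh i * ⟪uh i, b k⟫ ^ 2) :=
      summable_sum fun i hi => (hp_summ i hi).mul_left (lamh i)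
    rw [tsum_congr h1, Summable.tsum_add hF1 hF2, tsum_eq_sum (s := I) (fun k hk => if_neg hk),
      Summable.tsum_finsetSum (fun i hi => (hp_summ i hi).mul_left (lamh i))]
    congr 1
    · exact Finset.sum_congr rfl fun k hk => if_pos hk
    · exact Finset.sum_congr rfl fun i hi => by rw [tsum_mul_left, hp_sum i hi, mul_one]
  -- closed form for L2sq
  have hL2 : L2sq = (∑ k ∈ I, (1 - 2 * ∑ i ∈ I, ⟪uh i, b k⟫ ^ 2)) + (I.card : ℝ) := by
    rw [hL2sq]
    have h1 : ∀ k, ‖g0 (b k) - gh (b k)‖ ^ 2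
        = (if k ∈ I then (1:ℝ) * (1 - 2 * ∑ i ∈ I, ⟪uh i, b k⟫ ^ 2) else 0)
          + ∑ i ∈ I, (1:ℝ) * ⟪uh i, b k⟫ ^ 2 := by
      intro k
      rw [← aux_inner_expand I (fun _ => (1:ℝ)) (fun _ => (1:ℝ)) (fun i k => ⟪uh i, b k⟫)
        hone_summ hone_val k]
      rw [← real_inner_self_eq_norm_sq, ← b.tsum_inner_mul_inner (g0 (b k) - gh (b k)) (g0 (b k) - gh (b k))]
      refine tsum_congr fun j => ?_
      rw [real_inner_comm (g0 (b k) - gh (b k)) (b j), hd k j]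
      ring
    have hF1 : Summable (fun k => if k ∈ I then (1:ℝ) * (1 - 2 * ∑ i ∈ I, ⟪uh i, b k⟫ ^ 2) else 0) :=
      summable_of_ne_finset_zero (s := I) fun k hk => if_neg hk
    have hF2 : Summable (fun k => ∑ i ∈ I, (1:ℝ) * ⟪uh i, b k⟫ ^ 2) :=
      summable_sum fun i hi => (hp_summ i hi).mul_left 1
    rw [tsum_congr h1, Summable.tsum_add hF1 hF2, tsum_eq_sum (s := I) (fun k hk => if_neg hk),
      Summable.tsum_finsetSum (fun i hi => (hp_summ i hi).mul_left 1)]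
    congr 1
    · exact Finset.sum_congr rfl fun k hk => by rw [if_pos hk, one_mul]
    · rw [Finset.card_eq_sum_ones, Nat.cast_sum]
      exact Finset.sum_congr rfl fun i hi => by
        rw [tsum_mul_left, hp_sum i hi, mul_one, Nat.cast_one]
  -- closed form for N0sq
  have hN0 : N0sq = ∑ i ∈ I, ∑' k, (lam k)⁻¹ * ((lam k - lamh i) ^ 2 * ⟪uh i, b k⟫ ^ 2) := by
    rw [hN0sq]
    exact Summable.tsum_finsetSum fun i hi => ha_summ i hi
  -- Bessel inequality for the discrete eigenvectors
  have hS_le : ∀ k, (∑ i ∈ I, ⟪uh i, b k⟫ ^ 2) ≤ 1 := by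
    intro k
    have hv : Orthonormal ℝ (fun i : {x // x ∈ I} => uh i) := by
      rw [orthonormal_iff_ite]
      intro i j
      rw [huh_orth i i.2 j j.2]
      exact if_congr Subtype.ext_iff.symm rfl rfl
    have hb := hv.sum_inner_products_le (s := Finset.univ) (b k)
    rw [Finset.sum_coe_sort I (fun i => ‖⟪uh i, b k⟫‖ ^ 2)] at hb
    have hbk : ‖b k‖ = 1 := b.orthonormal.1 k
    calc ∑ i ∈ I, ⟪uh i, b k⟫ ^ 2
        = ∑ i ∈ I, ‖⟪uh i, b k⟫‖ ^ 2 :=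
          Finset.sum_congr rfl fun i _ => by rw [Real.norm_eq_abs, sq_abs]
      _ ≤ ‖b k‖ ^ 2 := hb
      _ = 1 := by rw [hbk]; norm_num
  -- the key per-eigenvector inequality
  have hkey : ∀ i ∈ I,
      lamh i + ∑ k ∈ I, (lam M + 2 * lamh M - lam k) * ⟪uh i, b k⟫ ^ 2
        ≤ (∑' k, (lam k)⁻¹ * ((lam k - lamh i) ^ 2 * ⟪uh i, b k⟫ ^ 2))
          + (lam M + 2 * lamh M) := by
    intro i hi
    have hiM : i ≤ M := (Finset.mem_Icc.mp hi).2
    have hlamhM : lamh i ≤ lamh M := hlamh_mono i hi M hMI hiM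
    set f : ℕ → ℝ := fun k => (lam k)⁻¹ * ((lam k - lamh i) ^ 2 * ⟪uh i, b k⟫ ^ 2)
      + (lam M + 2 * lamh M) * ⟪uh i, b k⟫ ^ 2 - lam k * ⟪uh i, b k⟫ ^ 2
      - (if k ∈ I then (lam M + 2 * lamh M - lam k) * ⟪uh i, b k⟫ ^ 2 else 0) with hf
    have hsum_ite : Summable (fun k =>
        if k ∈ I then (lam M + 2 * lamh M - lam k) * ⟪uh i, b k⟫ ^ 2 else 0) :=
      summable_of_ne_finset_zero (s := I) fun k hk => if_neg hk
    have hf_summ : Summable f :=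
      (((ha_summ i hi).add ((hp_summ i hi).mul_left _)).sub (hlam_summ i hi)).sub hsum_ite
    have hf_tsum : ∑' k, f k
        = (∑' k, (lam k)⁻¹ * ((lam k - lamh i) ^ 2 * ⟪uh i, b k⟫ ^ 2))
          + (lam M + 2 * lamh M) - lamh i
          - ∑ k ∈ I, (lam M + 2 * lamh M - lam k) * ⟪uh i, b k⟫ ^ 2 := by
      rw [hf, Summable.tsum_sub (((ha_summ i hi).add ((hp_summ i hi).mul_left _)).sub (hlam_summ i hi))
          hsum_ite,
        Summable.tsum_sub ((ha_summ i hi).add ((hp_summ i hi).mul_left _)) (hlam_summ i hi),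
        Summable.tsum_add (ha_summ i hi) ((hp_summ i hi).mul_left _),
        tsum_mul_left, hp_sum i hi, hlamp_sum i hi,
        tsum_eq_sum (s := I) (fun k hk => if_neg hk)]
      have hss : (∑ k ∈ I, if k ∈ I then (lam M + 2 * lamh M - lam k) * ⟪uh i, b k⟫ ^ 2 else 0)
          = ∑ k ∈ I, (lam M + 2 * lamh M - lam k) * ⟪uh i, b k⟫ ^ 2 :=
        Finset.sum_congr rfl fun k hk => if_pos hk
      rw [hss, mul_one]
    have hf_nonneg : ∀ k, 0 ≤ f k := by
      intro k
      by_cases hk : k ∈ I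
      · have hform : f k = (lam k)⁻¹ * ((lam k - lamh i) ^ 2 * ⟪uh i, b k⟫ ^ 2) := by
          rw [hf]; simp only [if_pos hk]; ring
        rw [hform]
        exact mul_nonneg (inv_nonneg.mpr (hlam_pos k).le)
          (mul_nonneg (sq_nonneg _) (sq_nonneg _))
      · have hform : f k = (lamh i ^ 2 * (lam k)⁻¹ + (lam M + 2 * lamh M - 2 * lamh i))
            * ⟪uh i, b k⟫ ^ 2 := by
          rw [hf]; simp only [if_neg hk]; rw [ha_eq i k]; ring
        rw [hform]
        refine mul_nonneg (add_nonneg (mul_nonneg (sq_nonneg _)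
          (inv_nonneg.mpr (hlam_pos k).le)) ?_) (sq_nonneg _)
        have h2 := hlam_pos M
        linarith
    have h0 := tsum_nonneg (L := SummationFilter.unconditional ℕ) hf_nonneg
    rw [hf_tsum] at h0
    linarith
  -- assemble everything
  have hsumkey := Finset.sum_le_sum hkey
  rw [Finset.sum_add_distrib, Finset.sum_add_distrib, Finset.sum_const, nsmul_eq_mul] at hsumkey
  have hswap : (∑ i ∈ I, ∑ k ∈ I, (lam M + 2 * lamh M - lam k) * ⟪uh i, b k⟫ ^ 2)
      = ∑ k ∈ I, (lam M + 2 * lamh M - lam k) * ∑ i ∈ I, ⟪uh i, b k⟫ ^ 2 := by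
    rw [Finset.sum_comm]
    exact Finset.sum_congr rfl fun k _ => (Finset.mul_sum _ _ _).symm
  rw [hswap] at hsumkey
  have hfin : (∑ k ∈ I, (lam k - lam M) * (1 - ∑ i ∈ I, ⟪uh i, b k⟫ ^ 2)) ≤ 0 := by
    refine Finset.sum_nonpos fun k hk => ?_
    have h1 : lam k ≤ lam M := hlam_mono (Finset.mem_Icc.mp hk).2
    have h2 := hS_le k
    nlinarith
  have hiden : (∑ k ∈ I, lam k * (1 - 2 * ∑ i ∈ I, ⟪uh i, b k⟫ ^ 2))
      - (∑ k ∈ I, (lam M + 2 * lamh M - lam k) * ∑ i ∈ I, ⟪uh i, b k⟫ ^ 2)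
      + lamh M * (I.card : ℝ)
      - (lam M + lamh M) * (∑ k ∈ I, (1 - 2 * ∑ i ∈ I, ⟪uh i, b k⟫ ^ 2))
      = ∑ k ∈ I, (lam k - lam M) * (1 - ∑ i ∈ I, ⟪uh i, b k⟫ ^ 2) := by
    rw [Finset.card_eq_sum_ones I, Nat.cast_sum, Finset.mul_sum, Finset.mul_sum,
      ← Finset.sum_sub_distrib, ← Finset.sum_add_distrib, ← Finset.sum_sub_distrib]
    exact Finset.sum_congr rfl fun k _ => by push_cast; ring
  rw [hES, hL2, hN0]
  nlinarith [hsumkey, hfin, hiden]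
end
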